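/- arXiv:math/0407049 — 4 statements merged into one kernel-verified Lean document; each statement's English description precedes it below -/
import Mathlib

section
/- Suppose κ > 0 is Diophantine with exponent K₀, i.e. |κ - p/q| ≫ q^{-K₀} for all rationals p/q. Let Λ* = ⟨1, iβ⟩ with β = √κ. If k, k' ∈ Λ* satisfy |k|, |k'| ≤ √M and |k| ≠ |k'|, then ||k| - |k'|| ≫ M^{-(K₀ + 1/2)}. -/
set_option maxHeartbeats 1000000 in
/-- If κ = β² is Diophantine with exponent K₀, then distinct norms of vectors in
Λ* = ⟨1, iβ⟩ of length at most √M are at least ≫ M^{-(K₀+1/2)} apart. -/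
theorem offdiag_lower_bound (κ : ℝ) (hκ : 0 < κ) (K₀ : ℝ) (c : ℝ) (hc : 0 < c)
    (hdioph : ∀ p : ℤ, ∀ q : ℕ, 0 < q → |κ - (p : ℝ) / (q : ℝ)| ≥ c / (q : ℝ) ^ K₀) :
    ∃ c' > 0, ∀ M : ℝ, 1 ≤ M → ∀ a b a' b' : ℤ,
      Real.sqrt ((a : ℝ) ^ 2 + κ * (b : ℝ) ^ 2) ≤ Real.sqrt M →
      Real.sqrt ((a' : ℝ) ^ 2 + κ * (b' : ℝ) ^ 2) ≤ Real.sqrt M →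
      Real.sqrt ((a : ℝ) ^ 2 + κ * (b : ℝ) ^ 2) ≠ Real.sqrt ((a' : ℝ) ^ 2 + κ * (b' : ℝ) ^ 2) →
      |Real.sqrt ((a : ℝ) ^ 2 + κ * (b : ℝ) ^ 2) - Real.sqrt ((a' : ℝ) ^ 2 + κ * (b' : ℝ) ^ 2)|
        ≥ c' * M ^ (-(K₀ + 1 / 2)) := by
  rcases lt_or_ge K₀ 1 with hK | hK
  · -- K₀ < 1 contradicts the Diophantine hypothesis
    exfalso
    set x : ℝ := (1 / c) ^ (1 / (1 - K₀)) with hxdef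
    have hx0 : 0 ≤ x := Real.rpow_nonneg (by positivity) _
    set q : ℕ := ⌈x⌉₊ + 1 with hqdef
    have hq0 : 0 < q := Nat.succ_pos _
    have hqx : x ≤ (q : ℝ) := by
      calc x ≤ (⌈x⌉₊ : ℝ) := Nat.le_ceil x
        _ ≤ (q : ℝ) := by rw [hqdef]; push_cast; linarith
    have h1 := hdioph ⌊κ * q⌋ q hq0
    have hqR : (0 : ℝ) < (q : ℝ) := by exact_mod_cast hq0
    have hfloor : |κ - (⌊κ * q⌋ : ℝ) / q| < 1 / q := by
      have h2 : (⌊κ * q⌋ : ℝ) ≤ κ * q := Int.floor_le _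
      have h3 : κ * q < (⌊κ * q⌋ : ℝ) + 1 := Int.lt_floor_add_one _
      have e : κ - (⌊κ * q⌋ : ℝ) / q = (κ * q - ⌊κ * q⌋) / q := by field_simp
      rw [abs_lt]
      constructor
      · have hd : (⌊κ * q⌋ : ℝ) / q ≤ κ := by rw [div_le_iff₀ hqR]; linarith
        have : (0:ℝ) < 1 / q := by positivity
        linarith
      · rw [e, div_lt_div_iff₀ hqR hqR]
        nlinarith
    have h4 : c / (q : ℝ) ^ K₀ < 1 / q := lt_of_le_of_lt h1 hfloor
    have hqK : (0 : ℝ) < (q : ℝ) ^ K₀ := Real.rpow_pos_of_pos hqR _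
    have h5 : c < (q : ℝ) ^ (K₀ - 1) := by
      rw [Real.rpow_sub hqR, Real.rpow_one]
      rw [div_lt_div_iff₀ hqK hqR] at h4
      rw [lt_div_iff₀ hqR]; linarith
    have h6 : 1 / c ≤ (q : ℝ) ^ (1 - K₀) := by
      calc (1 / c : ℝ) = x ^ (1 - K₀) := by
            rw [hxdef, ← Real.rpow_mul (by positivity),
              one_div_mul_cancel (by linarith : (1 : ℝ) - K₀ ≠ 0), Real.rpow_one]
        _ ≤ (q : ℝ) ^ (1 - K₀) := Real.rpow_le_rpow hx0 hqx (by linarith)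
    have h7 : (q : ℝ) ^ (K₀ - 1) ≤ c := by
      rw [show K₀ - 1 = -(1 - K₀) by ring, Real.rpow_neg hqR.le]
      have hy : (0:ℝ) < (q : ℝ) ^ (1 - K₀) := Real.rpow_pos_of_pos hqR _
      have h8 : ((q : ℝ) ^ (1 - K₀))⁻¹ * ((q : ℝ) ^ (1 - K₀)) = 1 := inv_mul_cancel₀ hy.ne'
      have h9 : 1 ≤ c * ((q : ℝ) ^ (1 - K₀)) := by
        have := mul_le_mul_of_nonneg_left h6 hc.le
        rw [mul_one_div, div_self hc.ne'] at this
        exact this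
      nlinarith [inv_nonneg.mpr hy.le]
    linarith
  · -- main case K₀ ≥ 1
    have h2κ : (0 : ℝ) < (2 / κ) ^ (1 - K₀) := Real.rpow_pos_of_pos (by positivity) _
    refine ⟨min 1 (c * (2 / κ) ^ (1 - K₀)) / 2, by positivity, ?_⟩
    intro M hM a b a' b' ha hb hne
    set c' := min 1 (c * (2 / κ) ^ (1 - K₀)) / 2 with hc'def
    have hc'0 : 0 < c' := by rw [hc'def]; positivity
    have hM0 : (0 : ℝ) < M := lt_of_lt_of_le one_pos hM
    set A : ℝ := (a : ℝ) ^ 2 + κ * (b : ℝ) ^ 2 with hAdef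
    set A' : ℝ := (a' : ℝ) ^ 2 + κ * (b' : ℝ) ^ 2 with hA'def
    have hA0 : 0 ≤ A := by positivity
    have hA'0 : 0 ≤ A' := by positivity
    set S := Real.sqrt A with hS
    set S' := Real.sqrt A' with hS'
    have hSA : S ^ 2 = A := Real.sq_sqrt hA0
    have hSA' : S' ^ 2 = A' := Real.sq_sqrt hA'0
    have hSM : Real.sqrt M ^ 2 = M := Real.sq_sqrt hM0.le
    have hAM : A ≤ M := by
      rw [← hSA, ← hSM]; exact pow_le_pow_left₀ (Real.sqrt_nonneg _) ha 2
    have hA'M : A' ≤ M := by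
      rw [← hSA', ← hSM]; exact pow_le_pow_left₀ (Real.sqrt_nonneg _) hb 2
    have hAne : A ≠ A' := fun h => hne (by rw [hS, hS', h])
    have hMK0 : (0 : ℝ) < M ^ (-K₀) := Real.rpow_pos_of_pos hM0 _
    -- key lower bound on |A - A'|
    have hkey : (2 * c') * M ^ (-K₀) ≤ |A - A'| := by
      have hMK : M ^ (-K₀) ≤ 1 :=
        Real.rpow_le_one_of_one_le_of_nonpos hM (by linarith)
      set Δa : ℤ := a ^ 2 - a' ^ 2 with hΔa
      set Δb : ℤ := b ^ 2 - b' ^ 2 with hΔb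
      have hAA : A - A' = (Δa : ℝ) + κ * (Δb : ℝ) := by
        rw [hAdef, hA'def, hΔa, hΔb]; push_cast; ring
      rcases eq_or_ne Δb 0 with hb0 | hb0
      · have hAa : A - A' = (Δa : ℝ) := by rw [hAA, hb0]; push_cast; ring
        have hΔa0 : Δa ≠ 0 := by
          intro h; apply hAne; rw [h] at hAa; push_cast at hAa; linarith
        have h1 : (1 : ℝ) ≤ |A - A'| := by
          rw [hAa, ← Int.cast_abs]; exact_mod_cast Int.one_le_abs hΔa0
        have h2c' : 2 * c' ≤ 1 := by
          rw [hc'def]; linarith [min_le_left (1:ℝ) (c * (2 / κ) ^ (1 - K₀))]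
        nlinarith [mul_le_mul_of_nonneg_left hMK (by linarith : (0:ℝ) ≤ 2 * c')]
      · -- Δb ≠ 0, use Diophantine
        set q : ℕ := Δb.natAbs with hq
        have hq0 : 0 < q := Int.natAbs_pos.mpr hb0
        have hqR : (0 : ℝ) < (q : ℝ) := by exact_mod_cast hq0
        set p : ℤ := if 0 < Δb then -Δa else Δa with hp
        have hdio := hdioph p q hq0
        have hqabs : (q : ℝ) = |(Δb : ℝ)| := by
          rw [hq, Nat.cast_natAbs]; push_cast; ring
        have habs : (q : ℝ) * |κ - (p : ℝ) / (q : ℝ)| = |(q : ℝ) * κ - (p : ℝ)| := by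
          rw [← abs_of_pos hqR, ← abs_mul]
          congr 1
          field_simp
          rw [abs_of_pos hqR]
        have hform : |A - A'| = (q : ℝ) * |κ - (p : ℝ) / (q : ℝ)| := by
          rw [hAA, habs]
          rcases lt_or_ge 0 Δb with hpos | hneg
          · have hqd : (q : ℝ) = (Δb : ℝ) := by
              rw [hqabs, abs_of_pos (by exact_mod_cast hpos)]
            rw [hp, if_pos hpos, hqd]
            push_cast
            congr 1; ring
          · have hneg' : Δb < 0 := lt_of_le_of_ne hneg hb0
            have hqd : (q : ℝ) = -(Δb : ℝ) := by
              rw [hqabs, abs_of_neg (by exact_mod_cast hneg')]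
            rw [hp, if_neg (not_lt.mpr hneg), hqd]
            rw [show -(Δb:ℝ) * κ - (Δa:ℝ) = -((Δa:ℝ) + κ * (Δb:ℝ)) by ring, abs_neg]
        have hlow : c * (q : ℝ) ^ (1 - K₀) ≤ |A - A'| := by
          rw [hform]
          calc c * (q : ℝ) ^ (1 - K₀) = (q : ℝ) * (c / (q : ℝ) ^ K₀) := by
                rw [Real.rpow_sub hqR, Real.rpow_one]; ring
            _ ≤ (q : ℝ) * |κ - (p : ℝ) / (q : ℝ)| :=
                mul_le_mul_of_nonneg_left hdio hqR.le
        -- bound q ≤ 2M/κ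
        have hbM : (b : ℝ) ^ 2 ≤ M / κ := by
          have h := hAM; rw [hAdef] at h
          rw [le_div_iff₀ hκ]; nlinarith [sq_nonneg ((a : ℝ))]
        have hb'M : (b' : ℝ) ^ 2 ≤ M / κ := by
          have h := hA'M; rw [hA'def] at h
          rw [le_div_iff₀ hκ]; nlinarith [sq_nonneg ((a' : ℝ))]
        have hqbound : (q : ℝ) ≤ 2 * M / κ := by
          have h2 : |(Δb : ℝ)| ≤ (b : ℝ) ^ 2 + (b' : ℝ) ^ 2 := by
            rw [hΔb]; push_cast; rw [abs_le]
            constructor <;> nlinarith [sq_nonneg ((b:ℝ)), sq_nonneg ((b':ℝ))]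
          rw [hqabs]
          calc |(Δb : ℝ)| ≤ (b : ℝ) ^ 2 + (b' : ℝ) ^ 2 := h2
            _ ≤ M / κ + M / κ := add_le_add hbM hb'M
            _ = 2 * M / κ := by ring
        have hexp : (2 * M / κ) ^ (1 - K₀) ≤ (q : ℝ) ^ (1 - K₀) :=
          Real.rpow_le_rpow_of_nonpos hqR hqbound (by linarith)
        have hsplit : (2 * M / κ) ^ (1 - K₀) = (2 / κ) ^ (1 - K₀) * M ^ (1 - K₀) := by
          rw [show (2 * M / κ) = (2 / κ) * M by ring,
            Real.mul_rpow (by positivity) hM0.le]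
        have hMexp : M ^ (-K₀) ≤ M ^ (1 - K₀) :=
          Real.rpow_le_rpow_of_exponent_le hM (by linarith)
        have h2c' : 2 * c' ≤ c * (2 / κ) ^ (1 - K₀) := by
          rw [hc'def]; linarith [min_le_right (1:ℝ) (c * (2 / κ) ^ (1 - K₀))]
        calc (2 * c') * M ^ (-K₀) ≤ (c * (2 / κ) ^ (1 - K₀)) * M ^ (-K₀) :=
              mul_le_mul_of_nonneg_right h2c' hMK0.le
          _ = c * ((2 / κ) ^ (1 - K₀) * M ^ (-K₀)) := by ring
          _ ≤ c * ((2 / κ) ^ (1 - K₀) * M ^ (1 - K₀)) :=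
              mul_le_mul_of_nonneg_left (mul_le_mul_of_nonneg_left hMexp h2κ.le) hc.le
          _ = c * (2 * M / κ) ^ (1 - K₀) := by rw [hsplit]
          _ ≤ c * (q : ℝ) ^ (1 - K₀) := mul_le_mul_of_nonneg_left hexp hc.le
          _ ≤ |A - A'| := hlow
    -- conclude
    have hS0 : 0 ≤ S := Real.sqrt_nonneg _
    have hS'0 : 0 ≤ S' := Real.sqrt_nonneg _
    have hsum0 : 0 < S + S' := by
      rcases (add_nonneg hS0 hS'0).lt_or_eq with h | h
      · exact h
      · exfalso
        have h2 := (add_eq_zero_iff_of_nonneg hS0 hS'0).mp h.symm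
        exact hne (by rw [hS, hS'] at h2 ⊢; rw [h2.1, h2.2])
    have hsumM : S + S' ≤ 2 * Real.sqrt M := by linarith
    have hprod : |S - S'| * (S + S') = |A - A'| := by
      rw [← abs_of_pos hsum0, ← abs_mul]
      congr 1
      rw [← hSA, ← hSA']; ring
    have hsqrtM0 : 0 < Real.sqrt M := Real.sqrt_pos.mpr hM0
    have hfinal : c' * M ^ (-(K₀ + 1/2)) * (2 * Real.sqrt M) ≤ |S - S'| * (2 * Real.sqrt M) := by
      calc c' * M ^ (-(K₀ + 1/2)) * (2 * Real.sqrt M)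
          = 2 * c' * (M ^ (-(K₀ + 1/2)) * M ^ ((1:ℝ)/2)) := by
            rw [Real.sqrt_eq_rpow]; ring
        _ = (2 * c') * M ^ (-K₀) := by
            rw [← Real.rpow_add hM0, show (-(K₀ + 1/2) + 1/2 : ℝ) = -K₀ by ring]
        _ ≤ |A - A'| := hkey
        _ = |S - S'| * (S + S') := hprod.symm
        _ ≤ |S - S'| * (2 * Real.sqrt M) :=
            mul_le_mul_of_nonneg_left hsumM (abs_nonneg _)
    exact le_of_mul_le_mul_right hfinal (by positivity)
end

section
/- Let η > 0 be strongly Diophantine and m ∈ ℕ fixed. Then there exists K ∈ ℕ such that for all M ≥ 2: if z_j = a_j² + η·b_j² with integers a_j, b_j and z_j ≤ M for j = 1, ..., m, and ε_j ∈ {±1}, and Σ_{j=1}^m ε_j √(z_j) ≠ 0, then |Σ_{j=1}^m ε_j √(z_j)| ≫_{η,m} M^{-K}. -/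
/-- A real number η is strongly Diophantine: for every degree bound n there are
K ∈ ℕ and c > 0 such that every nonvanishing integral linear combination
Σ aᵢ ηⁱ (0 ≤ i ≤ n) satisfies |Σ aᵢ ηⁱ| ≥ c / h^K, h = max |aᵢ|. -/
def StronglyDiophantine (η : ℝ) : Prop :=
  ∀ n : ℕ, ∃ K : ℕ, ∃ c : ℝ, 0 < c ∧
    ∀ a : Fin (n + 1) → ℤ,
      (∑ i, (a i : ℝ) * η ^ (i : ℕ)) ≠ 0 →
      |∑ i, (a i : ℝ) * η ^ (i : ℕ)| ≥
        c / ((Finset.univ.sup fun i => (a i).natAbs : ℕ) : ℝ) ^ K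


open Polynomial in
lemma coeff_bound_of_values (N : ℕ) :
    ∃ C : ℝ, 0 < C ∧ ∀ c : Fin (N + 1) → ℝ, ∀ B : ℝ,
      (∀ k : Fin (N + 1), |∑ i, c i * (k : ℝ) ^ (i : ℕ)| ≤ B) →
      ∀ i, |c i| ≤ C * B := by
  classical
  let E : (Fin (N + 1) → ℝ) →ₗ[ℝ] (Fin (N + 1) → ℝ) :=
    { toFun := fun c k => ∑ i, c i * (k : ℝ) ^ (i : ℕ)
      map_add' := by
        intro x y; funext k; simp [add_mul, Finset.sum_add_distrib]
      map_smul' := by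
        intro r x; funext k; simp [Finset.mul_sum, mul_assoc] }
  have hinj : Function.Injective E := by
    rw [← LinearMap.ker_eq_bot, LinearMap.ker_eq_bot']
    intro c hc
    have hc' : ∀ k : Fin (N + 1), ∑ i, c i * (k : ℝ) ^ (i : ℕ) = 0 := by
      intro k; exact congrFun hc k
    set q : ℝ[X] := ∑ i : Fin (N + 1), C (c i) * X ^ (i : ℕ) with hq
    have hdeg : q.natDegree ≤ N := by
      apply Polynomial.natDegree_sum_le_of_forall_le
      intro i _
      exact (Polynomial.natDegree_C_mul_X_pow_le (c i) (i : ℕ)).trans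
        (Nat.le_of_lt_succ i.2)
    have hcoeff : ∀ i : Fin (N + 1), q.coeff (i : ℕ) = c i := by
      intro i
      rw [hq, Polynomial.finset_sum_coeff]
      simp only [Polynomial.coeff_C_mul, Polynomial.coeff_X_pow]
      rw [Finset.sum_eq_single i]
      · simp
      · intro j _ hji
        simp only [mul_ite, mul_one, mul_zero, ite_eq_right_iff]
        intro h
        exact absurd (Fin.ext h.symm) hji
      · intro h; exact absurd (Finset.mem_univ i) h
    have hq0 : q = 0 := by
      apply Polynomial.eq_zero_of_natDegree_lt_card_of_eval_eq_zero q
        (f := fun k : Fin (N + 1) => (k : ℝ))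
      · intro x y hxy
        exact Fin.ext (Nat.cast_injective hxy)
      · intro k
        rw [hq]
        simp only [Polynomial.eval_finset_sum, Polynomial.eval_mul, Polynomial.eval_C,
          Polynomial.eval_pow, Polynomial.eval_X]
        exact hc' k
      · simpa using Nat.lt_succ_of_le hdeg
    funext i
    rw [← hcoeff i, hq0]
    simp
  have hbij : Function.Bijective E :=
    ⟨hinj, LinearMap.surjective_of_injective hinj⟩
  let e := LinearEquiv.ofBijective E hbij
  let T := LinearMap.toContinuousLinearMap (e.symm : (Fin (N+1) → ℝ) →ₗ[ℝ] (Fin (N+1) → ℝ))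
  refine ⟨‖T‖ + 1, by positivity, ?_⟩
  intro c B hB i
  have hB0 : 0 ≤ B := le_trans (abs_nonneg _) (hB 0)
  have h1 : c = e.symm (E c) := by
    simp [e]
  have h2 : ‖E c‖ ≤ B := by
    rw [pi_norm_le_iff_of_nonneg hB0]
    intro k
    exact hB k
  calc |c i| ≤ ‖c‖ := by
        simpa using norm_le_pi_norm c i
    _ = ‖T (E c)‖ := by
        have : T (E c) = e.symm (E c) := rfl
        rw [this, ← h1]
    _ ≤ ‖T‖ * ‖E c‖ := T.le_opNorm _
    _ ≤ ‖T‖ * B := by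
        exact mul_le_mul_of_nonneg_left h2 (norm_nonneg _)
    _ ≤ (‖T‖ + 1) * B := by nlinarith [norm_nonneg T]
set_option maxRecDepth 4000

open MvPolynomial

variable {m : ℕ}

/-- negate one variable -/
noncomputable def flipX (k : Fin m) : MvPolynomial (Fin m) ℤ →ₐ[ℤ] MvPolynomial (Fin m) ℤ :=
  aeval (fun j => if j = k then -(X j) else X j)

lemma coeff_flipX (k : Fin m) (Q : MvPolynomial (Fin m) ℤ) (d : Fin m →₀ ℕ) :
    MvPolynomial.coeff d (flipX k Q) = (-1) ^ (d k) * Q.coeff d := by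
  classical
  have hmon : ∀ (d' : Fin m →₀ ℕ) (c : ℤ),
      flipX k (monomial d' c) = monomial d' ((-1) ^ (d' k) * c) := by
    intro d' c
    rw [flipX, aeval_monomial]
    have hpt : ∀ j ∈ d'.support,
        ((if j = k then -(X j) else X j : MvPolynomial (Fin m) ℤ)) ^ (d' j)
          = (if j = k then ((-1 : MvPolynomial (Fin m) ℤ)) ^ (d' j) else 1) * (X j) ^ (d' j) := by
      have negpow : ∀ (e : ℕ) (x : MvPolynomial (Fin m) ℤ), (-x) ^ e = (-1) ^ e * x ^ e := by
        intro e x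
        rw [neg_pow]
      intro j _
      split
      · rw [negpow]
      · rw [one_mul]
    rw [Finsupp.prod, Finset.prod_congr rfl hpt, Finset.prod_mul_distrib,
      Finset.prod_ite_eq' d'.support k (fun j => ((-1 : MvPolynomial (Fin m) ℤ)) ^ (d' j))]
    have h2 : (if k ∈ d'.support then ((-1 : MvPolynomial (Fin m) ℤ)) ^ (d' k) else 1)
        = ((-1 : MvPolynomial (Fin m) ℤ)) ^ (d' k) := by
      split
      · rfl
      · rename_i h
        rw [Finsupp.notMem_support_iff.mp h]
        simp
    rw [h2, monomial_eq, Finsupp.prod]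
    simp only [map_mul, map_pow, map_neg, map_one, algebraMap_eq]
    ring
  conv_lhs => rw [Q.as_sum]
  rw [map_sum]
  rw [Finset.sum_congr rfl (fun d' _ => hmon d' (Q.coeff d'))]
  rw [MvPolynomial.coeff_sum]
  simp only [coeff_monomial]
  rw [Finset.sum_ite_eq' Q.support d (fun d' => (-1 : ℤ) ^ (d' k) * Q.coeff d')]
  split
  · rfl
  · rename_i h
    rw [MvPolynomial.notMem_support_iff.mp h]
    ring

/-- the sign-product polynomial -/
noncomputable def signProd (m : ℕ) : MvPolynomial (Fin m) ℤ :=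
  ∏ s : Fin m → Bool, ∑ j, MvPolynomial.C (if s j then (1 : ℤ) else -1) * X j

lemma flipX_signProd (k : Fin m) : flipX k (signProd m) = signProd m := by
  classical
  rw [signProd, map_prod]
  have key : ∀ s : Fin m → Bool,
      flipX k (∑ j, MvPolynomial.C (if s j then (1:ℤ) else -1) * X j)
        = ∑ j, MvPolynomial.C (if (Function.update s k (!s k)) j then (1:ℤ) else -1) * X j := by
    intro s
    rw [flipX, map_sum]
    apply Finset.sum_congr rfl
    intro j _
    rw [map_mul, aeval_C, aeval_X]
    by_cases hj : j = k
    · subst hj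
      simp only [if_pos rfl, Function.update_self]
      cases hsk : s j <;> simp [algebraMap_eq, hsk]
    · simp [hj, Function.update_of_ne hj, algebraMap_eq]
  rw [Finset.prod_congr rfl (fun s _ => key s)]

  apply Fintype.prod_bijective (fun s : Fin m → Bool => Function.update s k (!s k))
  · have hinv : Function.Involutive (fun s : Fin m → Bool => Function.update s k (!s k)) := by
      intro s
      funext j
      by_cases hj : j = k
      · subst hj; simp
      · simp [Function.update_of_ne hj]
    exact hinv.bijective
  · intro s
    rfl

lemma even_of_mem_support (d : Fin m →₀ ℕ) (hd : d ∈ (signProd m).support) (k : Fin m) :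
    Even (d k) := by
  by_contra hodd
  rw [Nat.not_even_iff_odd] at hodd
  have h1 := coeff_flipX k (signProd m) d
  rw [flipX_signProd, hodd.neg_one_pow] at h1
  have h2 : (signProd m).coeff d = 0 := by linarith
  exact MvPolynomial.notMem_support_iff.mpr h2 hd

lemma aeval_signProd_eq_prod (u : Fin m → ℝ) :
    (aeval u) (signProd m) = ∏ s : Fin m → Bool, ∑ j, (if s j then (1:ℝ) else -1) * u j := by
  rw [signProd, map_prod]
  apply Finset.prod_congr rfl
  intro s _
  rw [map_sum]
  apply Finset.sum_congr rfl
  intro j _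
  rw [map_mul, aeval_C, aeval_X]
  split <;> simp

lemma aeval_signProd_sum (u : Fin m → ℝ) :
    (aeval u) (signProd m)
      = ∑ d ∈ (signProd m).support, (((signProd m).coeff d : ℤ) : ℝ) * ∏ j, u j ^ d j := by
  conv_lhs => rw [(signProd m).as_sum]
  rw [map_sum]
  apply Finset.sum_congr rfl
  intro d _
  rw [aeval_monomial, Finsupp.prod_pow]
  rfl

lemma totalDegree_signProd : (signProd m).totalDegree ≤ 2 ^ m := by
  rw [signProd]
  refine (totalDegree_finset_prod _ _).trans ?_
  have h1 : ∀ s : Fin m → Bool,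
      (∑ j, MvPolynomial.C (if s j then (1:ℤ) else -1) * X j).totalDegree ≤ 1 := by
    intro s
    apply totalDegree_finsetSum_le
    intro j _
    refine (totalDegree_mul _ _).trans ?_
    rw [totalDegree_C, totalDegree_X]
  refine le_trans (Finset.sum_le_sum (fun s _ => h1 s)) ?_
  simp [Fintype.card_fun]
set_option maxHeartbeats 1000000 in
open MvPolynomial in
lemma core_nondegenerate (η : ℝ) (hη : 0 < η)
    (hSD : ∀ n : ℕ, ∃ K : ℕ, ∃ c : ℝ, 0 < c ∧
      ∀ a : Fin (n + 1) → ℤ,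
        (∑ i, (a i : ℝ) * η ^ (i : ℕ)) ≠ 0 →
        |∑ i, (a i : ℝ) * η ^ (i : ℕ)| ≥
          c / ((Finset.univ.sup fun i => (a i).natAbs : ℕ) : ℝ) ^ K) (m : ℕ) :
    ∃ K : ℕ, ∃ c : ℝ, 0 < c ∧ ∀ M : ℝ, 2 ≤ M → ∀ a b : Fin m → ℤ,
      (∀ j, (a j : ℝ) ^ 2 + η * (b j : ℝ) ^ 2 ≤ M) →
      (∀ s : Fin m → Bool,
        (∑ j, (if s j then (1:ℝ) else -1) * Real.sqrt ((a j : ℝ) ^ 2 + η * (b j : ℝ) ^ 2)) ≠ 0) →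
      ∀ s₀ : Fin m → Bool,
        |∑ j, (if s₀ j then (1:ℝ) else -1) * Real.sqrt ((a j : ℝ) ^ 2 + η * (b j : ℝ) ^ 2)|
          ≥ c / M ^ K := by
  classical
  set N : ℕ := 2 ^ m with hN
  obtain ⟨K₁, c₁, hc₁, hSD'⟩ := hSD N
  obtain ⟨Cv, hCv, hV⟩ := coeff_bound_of_values N
  set D : ℝ := (m + 1) * (1 + N / η) with hD
  have hND : 0 ≤ (N : ℝ) / η := by positivity
  have hD1 : 1 ≤ D := by
    rw [hD]
    nlinarith [Nat.cast_nonneg (α := ℝ) m]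
  have hD0 : 0 < D := lt_of_lt_of_le one_pos hD1
  set C₂ : ℝ := max 1 (Cv * D ^ N) with hC₂
  have hC₂0 : 0 < C₂ := lt_of_lt_of_le one_pos (le_max_left _ _)
  refine ⟨N * K₁ + N, c₁ / (C₂ ^ K₁ * D ^ N), by positivity, ?_⟩
  intro M hM a b hzM hnz s₀
  have hM0 : (0:ℝ) < M := by linarith
  have hM1 : (1:ℝ) ≤ M := by linarith
  -- basic facts about z
  set z : Fin m → ℝ := fun j => (a j : ℝ) ^ 2 + η * (b j : ℝ) ^ 2 with hz
  have hz0 : ∀ j, 0 ≤ z j := fun j => by positivity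
  have ha2 : ∀ j, (a j : ℝ) ^ 2 ≤ M := fun j => by nlinarith [hzM j, sq_nonneg (b j : ℝ)]
  have hb2 : ∀ j, (b j : ℝ) ^ 2 ≤ M / η := fun j => by
    rw [le_div_iff₀ hη]
    nlinarith [hzM j, sq_nonneg (a j : ℝ)]
  -- the one-variable integer polynomial
  set p : Polynomial ℤ := ∑ d ∈ (signProd m).support,
      Polynomial.C ((signProd m).coeff d) *
        ∏ j, (Polynomial.C ((a j) ^ 2) + Polynomial.C ((b j) ^ 2) * Polynomial.X) ^ (d j / 2)
    with hp
  -- evaluation identity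
  have heval : ∀ x : ℝ, 0 ≤ x →
      (Polynomial.aeval x) p
        = ∏ s : Fin m → Bool,
            ∑ j, (if s j then (1:ℝ) else -1) *
              Real.sqrt ((a j : ℝ) ^ 2 + x * (b j : ℝ) ^ 2) := by
    intro x hx
    have hw0 : ∀ j, 0 ≤ (a j : ℝ) ^ 2 + x * (b j : ℝ) ^ 2 := fun j => by positivity
    rw [← aeval_signProd_eq_prod (fun j => Real.sqrt ((a j : ℝ) ^ 2 + x * (b j : ℝ) ^ 2)),
      aeval_signProd_sum, hp, map_sum]
    apply Finset.sum_congr rfl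
    intro d hd
    rw [map_mul, map_prod, Polynomial.aeval_C]
    have hfac : ∀ j : Fin m,
        (Polynomial.aeval x)
            ((Polynomial.C ((a j) ^ 2) + Polynomial.C ((b j) ^ 2) * Polynomial.X) ^ (d j / 2))
          = Real.sqrt ((a j : ℝ) ^ 2 + x * (b j : ℝ) ^ 2) ^ (d j) := by
      intro j
      rw [map_pow, map_add, map_mul, Polynomial.aeval_C, Polynomial.aeval_C, Polynomial.aeval_X]
      obtain ⟨t, ht⟩ := even_of_mem_support d hd j
      have hbase : (algebraMap ℤ ℝ) ((a j) ^ 2) + (algebraMap ℤ ℝ) ((b j) ^ 2) * x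
          = (a j : ℝ) ^ 2 + x * (b j : ℝ) ^ 2 := by
        simp only [algebraMap_int_eq, eq_intCast]
        push_cast
        ring
      have h2 : d j / 2 = t := by omega
      have h3 : d j = 2 * t := by omega
      rw [hbase, h2, h3, pow_mul, Real.sq_sqrt (hw0 j)]
    rw [Finset.prod_congr rfl (fun j _ => hfac j)]
    rfl
  -- degree bound
  have hdeg : p.natDegree ≤ N := by
    rw [hp]
    apply Polynomial.natDegree_sum_le_of_forall_le
    intro d hd
    refine (Polynomial.natDegree_C_mul_le _ _).trans ?_
    refine (Polynomial.natDegree_prod_le _ _).trans ?_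
    have hterm : ∀ j : Fin m,
        ((Polynomial.C ((a j) ^ 2) + Polynomial.C ((b j) ^ 2) * Polynomial.X) ^ (d j / 2)).natDegree
          ≤ d j := by
      intro j
      refine Polynomial.natDegree_pow_le.trans ?_
      have h1 : (Polynomial.C ((a j) ^ 2) + Polynomial.C ((b j) ^ 2) * Polynomial.X).natDegree ≤ 1 := by
        refine (Polynomial.natDegree_add_le _ _).trans ?_
        simp only [Polynomial.natDegree_C, max_le_iff]
        exact ⟨Nat.zero_le _, (Polynomial.natDegree_C_mul_le _ _).trans (by simp)⟩
      calc (d j / 2) * (Polynomial.C ((a j) ^ 2) + Polynomial.C ((b j) ^ 2) * Polynomial.X).natDegree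
          ≤ (d j / 2) * 1 := Nat.mul_le_mul_left _ h1
        _ ≤ d j := by omega
    refine (Finset.sum_le_sum (fun j _ => hterm j)).trans ?_
    have : ∑ j, d j = d.sum fun _ e => e := (Finsupp.sum_fintype d (fun _ e => e) (fun _ => rfl)).symm
    rw [this]
    exact (MvPolynomial.le_totalDegree hd).trans totalDegree_signProd
  -- factor bound
  have hfactor : ∀ (u : Fin m → ℝ), (∀ j, 0 ≤ u j) → ∀ (T : ℝ), (∀ j, u j ≤ T) →
      ∀ s : Fin m → Bool, |∑ j, (if s j then (1:ℝ) else -1) * Real.sqrt (u j)| ≤ m * Real.sqrt T := by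
    intro u hu T hT s
    refine (Finset.abs_sum_le_sum_abs _ _).trans ?_
    have : ∀ j : Fin m, |(if s j then (1:ℝ) else -1) * Real.sqrt (u j)| ≤ Real.sqrt T := by
      intro j
      rw [abs_mul]
      have h1 : |(if s j then (1:ℝ) else -1)| = 1 := by split <;> simp
      rw [h1, one_mul, abs_of_nonneg (Real.sqrt_nonneg _)]
      exact Real.sqrt_le_sqrt (hT j)
    refine (Finset.sum_le_sum (fun j _ => this j)).trans ?_
    simp
  have sqrt_le_of_one_le : ∀ t : ℝ, 1 ≤ t → Real.sqrt t ≤ t := by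
    intro t ht
    nlinarith [Real.sq_sqrt (by linarith : (0:ℝ) ≤ t), Real.sqrt_nonneg t]
  -- bound at sample points 0..N
  have hsample : ∀ x : ℝ, 0 ≤ x → x ≤ N → |(Polynomial.aeval x) p| ≤ (D * M) ^ N := by
    intro x hx hxN
    rw [heval x hx, Finset.abs_prod]
    have hone : (1:ℝ) ≤ D * M := le_trans hD1 (by nlinarith)
    have hfac : ∀ s : Fin m → Bool,
        |∑ j, (if s j then (1:ℝ) else -1) * Real.sqrt ((a j : ℝ) ^ 2 + x * (b j : ℝ) ^ 2)|
          ≤ D * M := by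
      intro s
      have hub : ∀ j, (a j : ℝ) ^ 2 + x * (b j : ℝ) ^ 2 ≤ M * (1 + N / η) := by
        intro j
        have : x * (b j : ℝ) ^ 2 ≤ N * (M / η) := by
          have := hb2 j
          have hbnn : (0:ℝ) ≤ (b j : ℝ) ^ 2 := sq_nonneg _
          nlinarith
        have := ha2 j
        have : (a j:ℝ)^2 + x * (b j:ℝ)^2 ≤ M + N * (M/η) := by linarith
        calc (a j:ℝ)^2 + x * (b j:ℝ)^2 ≤ M + N * (M/η) := this
          _ = M * (1 + N / η) := by ring
      refine (hfactor _ (fun j => by positivity) _ hub s).trans ?_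
      have h1 : Real.sqrt (M * (1 + N / η)) ≤ M * (1 + N / η) :=
        sqrt_le_of_one_le _ (by nlinarith)
      calc (m:ℝ) * Real.sqrt (M * (1 + N/η)) ≤ m * (M * (1 + N/η)) := by
            exact mul_le_mul_of_nonneg_left h1 (Nat.cast_nonneg m)
        _ ≤ D * M := by rw [hD]; nlinarith [Nat.cast_nonneg (α := ℝ) m]
    refine (Finset.prod_le_prod (fun s _ => abs_nonneg _) (fun s _ => hfac s)).trans ?_
    rw [Finset.prod_const]
    have hcard : (Finset.univ : Finset (Fin m → Bool)).card = N := by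
      simp [hN, Fintype.card_fun]
    rw [hcard]
  -- the coefficient vector
  set cf : Fin (N + 1) → ℝ := fun i => ((p.coeff (i : ℕ) : ℤ) : ℝ) with hcf
  have hevalsum : ∀ x : ℝ, (∑ i, cf i * x ^ (i : ℕ)) = (Polynomial.aeval x) p := by
    intro x
    rw [Polynomial.aeval_eq_sum_range' (Nat.lt_succ_of_le hdeg)]
    rw [← Fin.sum_univ_eq_sum_range (fun i => p.coeff i • x ^ i) (N + 1)]
    apply Finset.sum_congr rfl
    intro i _
    rw [zsmul_eq_mul]
  have hcoeffb : ∀ i, |cf i| ≤ Cv * (D * M) ^ N := by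
    intro i
    apply hV cf ((D * M) ^ N) _ i
    intro k
    rw [hevalsum]
    exact hsample _ (Nat.cast_nonneg _) (by exact_mod_cast Nat.le_of_lt_succ k.2)
  -- nonvanishing of the product
  have hprodne : (Polynomial.aeval η) p ≠ 0 := by
    rw [heval η hη.le]
    exact Finset.prod_ne_zero_iff.mpr (fun s _ => hnz s)
  -- apply strong Diophantine property
  have hsumne : (∑ i : Fin (N+1), ((fun i : Fin (N+1) => p.coeff (i:ℕ)) i : ℝ) * η ^ (i:ℕ)) ≠ 0 := by
    have := hevalsum η
    rw [← this] at hprodne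
    exact hprodne
  have hlow := hSD' (fun i : Fin (N+1) => p.coeff (i : ℕ)) hsumne
  set h : ℕ := Finset.univ.sup (fun i : Fin (N+1) => (p.coeff (i:ℕ)).natAbs) with hh
  have hh1 : 1 ≤ h := by
    rcases Nat.eq_zero_or_pos h with h0 | h1
    swap
    · exact h1
    · exfalso
      have hall : ∀ i : Fin (N+1), (p.coeff (i:ℕ)).natAbs = 0 := by
        intro i
        have h2 := Finset.le_sup (f := fun i : Fin (N+1) => (p.coeff (i:ℕ)).natAbs)
          (Finset.mem_univ i)
        rw [← hh, h0] at h2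
        simpa using h2
      have hp0 : p = 0 := by
        ext n
        rcases le_or_gt n N with hn | hn
        · have := hall ⟨n, Nat.lt_succ_of_le hn⟩
          simpa [Int.natAbs_eq_zero] using this
        · simp [Polynomial.coeff_eq_zero_of_natDegree_lt (lt_of_le_of_lt hdeg hn)]
      rw [hp0] at hprodne
      simp at hprodne
  have hhle : (h : ℝ) ≤ C₂ * M ^ N := by
    obtain ⟨i₀, _, hi₀⟩ := Finset.exists_mem_eq_sup Finset.univ
      ⟨0, Finset.mem_univ 0⟩ (fun i : Fin (N+1) => (p.coeff (i:ℕ)).natAbs)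
    rw [hh, hi₀]
    have : (((p.coeff (i₀:ℕ)).natAbs : ℕ) : ℝ) = |cf i₀| := by
      rw [hcf]
      simp [Nat.cast_natAbs]
    rw [this]
    calc |cf i₀| ≤ Cv * (D * M) ^ N := hcoeffb i₀
      _ = Cv * D ^ N * M ^ N := by rw [mul_pow]; ring
      _ ≤ C₂ * M ^ N := by
          apply mul_le_mul_of_nonneg_right (le_max_right _ _) (by positivity)
  have hprodlow : |(Polynomial.aeval η) p| ≥ c₁ / (C₂ ^ K₁ * M ^ (N * K₁)) := by
    have h2 : |(Polynomial.aeval η) p| ≥ c₁ / (h:ℝ) ^ K₁ := by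
      rw [← hevalsum η, hh]
      exact hlow
    refine le_trans ?_ h2
    have hhpos : (0:ℝ) < (h:ℝ) ^ K₁ := by
      have : (1:ℝ) ≤ (h:ℝ) := by exact_mod_cast hh1
      positivity
    have : ((h:ℝ)) ^ K₁ ≤ (C₂ * M ^ N) ^ K₁ :=
      pow_le_pow_left₀ (Nat.cast_nonneg h) hhle K₁
    have h3 : (C₂ * M ^ N) ^ K₁ = C₂ ^ K₁ * M ^ (N * K₁) := by
      rw [mul_pow, ← pow_mul]
    rw [← h3]
    exact div_le_div_of_nonneg_left hc₁.le hhpos this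
  -- extract the single factor
  set F : (Fin m → Bool) → ℝ := fun s =>
    ∑ j, (if s j then (1:ℝ) else -1) * Real.sqrt ((a j : ℝ) ^ 2 + η * (b j : ℝ) ^ 2) with hF
  have hsplit : |F s₀| * ∏ s ∈ Finset.univ.erase s₀, |F s| = |(Polynomial.aeval η) p| := by
    rw [heval η hη.le]
    rw [Finset.abs_prod]
    exact Finset.mul_prod_erase Finset.univ (fun s => |F s|) (Finset.mem_univ s₀)
  have hPpos : 0 < ∏ s ∈ Finset.univ.erase s₀, |F s| := by
    apply Finset.prod_pos
    intro s _
    exact abs_pos.mpr (hnz s)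
  have hPle : ∏ s ∈ Finset.univ.erase s₀, |F s| ≤ D ^ N * M ^ N := by
    have hone : (1:ℝ) ≤ D * M := le_trans hD1 (by nlinarith)
    have hfs : ∀ s : Fin m → Bool, |F s| ≤ D * M := by
      intro s
      refine (hfactor z hz0 M hzM s).trans ?_
      have h1 : Real.sqrt M ≤ M := sqrt_le_of_one_le M hM1
      calc (m:ℝ) * Real.sqrt M ≤ m * M := mul_le_mul_of_nonneg_left h1 (Nat.cast_nonneg m)
        _ ≤ D * M := by nlinarith [Nat.cast_nonneg (α := ℝ) m]
    calc ∏ s ∈ Finset.univ.erase s₀, |F s| ≤ ∏ _s ∈ Finset.univ.erase s₀, (D * M) :=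
          Finset.prod_le_prod (fun s _ => abs_nonneg _) (fun s _ => hfs s)
      _ = (D * M) ^ (Finset.univ.erase s₀).card := by rw [Finset.prod_const]
      _ ≤ (D * M) ^ N := by
          apply pow_le_pow_right₀ hone
          calc (Finset.univ.erase s₀).card ≤ Finset.univ.card := Finset.card_erase_le.trans le_rfl
            _ = 2 ^ m := by simp [Fintype.card_fun]
      _ = D ^ N * M ^ N := mul_pow D M N
  -- finish
  have hkey : |F s₀| ≥ (c₁ / (C₂ ^ K₁ * M ^ (N * K₁))) / (D ^ N * M ^ N) := by
    have h1 : |F s₀| ≥ (c₁ / (C₂ ^ K₁ * M ^ (N * K₁))) / (∏ s ∈ Finset.univ.erase s₀, |F s|) := by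
      rw [ge_iff_le, div_le_iff₀ hPpos]
      rw [hsplit]
      exact hprodlow
    refine le_trans ?_ h1
    apply div_le_div_of_nonneg_left (by positivity) hPpos hPle
  refine le_trans (le_of_eq ?_) hkey
  rw [div_div, div_div]
  congr 1
  rw [pow_add, pow_mul]
  ring

lemma aux_induction (η : ℝ) (hη : 0 < η)
    (hSD : ∀ n : ℕ, ∃ K : ℕ, ∃ c : ℝ, 0 < c ∧
      ∀ a : Fin (n + 1) → ℤ,
        (∑ i, (a i : ℝ) * η ^ (i : ℕ)) ≠ 0 →
        |∑ i, (a i : ℝ) * η ^ (i : ℕ)| ≥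
          c / ((Finset.univ.sup fun i => (a i).natAbs : ℕ) : ℝ) ^ K) (m : ℕ) :
    ∀ k : ℕ, ∃ K : ℕ, ∃ c : ℝ, 0 < c ∧ ∀ M : ℝ, 2 ≤ M →
      ∀ a b : Fin m → ℤ, ∀ ε : Fin m → ℝ,
        (∀ j, ε j = 1 ∨ ε j = -1 ∨ ε j = 0) →
        ({j | ε j ≠ 0} : Set (Fin m)).ncard ≤ k →
        (∀ j, (a j : ℝ) ^ 2 + η * (b j : ℝ) ^ 2 ≤ M) →
        (∑ j, ε j * Real.sqrt ((a j : ℝ) ^ 2 + η * (b j : ℝ) ^ 2)) ≠ 0 →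
        |∑ j, ε j * Real.sqrt ((a j : ℝ) ^ 2 + η * (b j : ℝ) ^ 2)| ≥ c / M ^ K := by
  intro k
  induction k with
  | zero =>
    refine ⟨0, 1, one_pos, ?_⟩
    intro M hM a b ε hεv hcard hzM hne
    exfalso
    apply hne
    have hempty : ({j | ε j ≠ 0} : Set (Fin m)) = ∅ :=
      (Set.ncard_eq_zero (Set.toFinite _)).mp (Nat.le_zero.mp hcard)
    have hall : ∀ j, ε j = 0 := by
      intro j
      by_contra hj
      have : j ∈ ({j | ε j ≠ 0} : Set (Fin m)) := hj
      rw [hempty] at this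
      exact this
    apply Finset.sum_eq_zero
    intro j _
    rw [hall j, zero_mul]
  | succ k ih =>
    classical
    obtain ⟨K₀, c₀, hc₀, H₀⟩ := ih
    obtain ⟨Kc, cc, hcc, Hc⟩ := core_nondegenerate η hη hSD m
    refine ⟨max K₀ Kc, min c₀ cc, lt_min hc₀ hcc, ?_⟩
    intro M hM a b ε hεv hcard hzM hne
    have hM0 : (0:ℝ) < M := by linarith
    have hM1 : (1:ℝ) ≤ M := by linarith
    -- reduce target to the two specific bounds
    have hred : ∀ (c' : ℝ) (K' : ℕ), 0 < c' → min c₀ cc ≤ c' → K' ≤ max K₀ Kc →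
        |∑ j, ε j * Real.sqrt ((a j : ℝ) ^ 2 + η * (b j : ℝ) ^ 2)| ≥ c' / M ^ K' →
        |∑ j, ε j * Real.sqrt ((a j : ℝ) ^ 2 + η * (b j : ℝ) ^ 2)| ≥ min c₀ cc / M ^ max K₀ Kc := by
      intro c' K' hc' hle hKle hbound
      refine le_trans ?_ hbound
      apply div_le_div₀ hc'.le hle (by positivity) (pow_le_pow_right₀ hM1 hKle)
    -- modified integer data
    set a' : Fin m → ℤ := fun j => if ε j = 0 then 0 else a j with ha'
    set b' : Fin m → ℤ := fun j => if ε j = 0 then 0 else b j with hb'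
    set z' : Fin m → ℝ := fun j => (a' j : ℝ) ^ 2 + η * (b' j : ℝ) ^ 2 with hz'
    have hz'M : ∀ j, z' j ≤ M := by
      intro j
      rw [hz']
      by_cases hj : ε j = 0 <;> simp [ha', hb', hj]
      · linarith
      · exact hzM j
    have hz'0 : ∀ j, ε j = 0 → z' j = 0 := by
      intro j hj
      simp [hz', ha', hb', hj]
    have hz'z : ∀ j, ε j * Real.sqrt (z' j) = ε j * Real.sqrt ((a j : ℝ) ^ 2 + η * (b j : ℝ) ^ 2) := by
      intro j
      by_cases hj : ε j = 0
      · rw [hj, zero_mul, zero_mul]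
      · simp [hz', ha', hb', hj]
    have hSeq : (∑ j, ε j * Real.sqrt (z' j))
        = ∑ j, ε j * Real.sqrt ((a j : ℝ) ^ 2 + η * (b j : ℝ) ^ 2) :=
      Finset.sum_congr rfl (fun j _ => hz'z j)
    set s₀ : Fin m → Bool := fun j => if ε j = 1 then true else false with hs₀def
    have hs₀ : ∀ j, (if s₀ j then (1:ℝ) else -1) * Real.sqrt (z' j) = ε j * Real.sqrt (z' j) := by
      intro j
      rcases hεv j with h1 | h1 | h1
      · simp [hs₀def, h1]
      · have h2 : ¬ (ε j = 1) := by rw [h1]; norm_num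
        simp only [hs₀def, h2, if_false, Bool.false_eq_true]
        rw [h1]
      · rw [hz'0 j h1, Real.sqrt_zero, mul_zero, mul_zero]
    have hFs₀ : (∑ j, (if s₀ j then (1:ℝ) else -1) * Real.sqrt (z' j))
        = ∑ j, ε j * Real.sqrt ((a j : ℝ) ^ 2 + η * (b j : ℝ) ^ 2) := by
      rw [← hSeq]
      exact Finset.sum_congr rfl (fun j _ => hs₀ j)
    by_cases hcase : ∀ s : Fin m → Bool,
        (∑ j, (if s j then (1:ℝ) else -1) * Real.sqrt ((a' j : ℝ) ^ 2 + η * (b' j : ℝ) ^ 2)) ≠ 0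
    · -- nondegenerate case
      apply hred cc Kc hcc (min_le_right _ _) (le_max_right _ _)
      have := Hc M hM a' b' (fun j => hz'M j) hcase s₀
      rw [show (∑ j, (if s₀ j then (1:ℝ) else -1) *
          Real.sqrt ((a' j : ℝ) ^ 2 + η * (b' j : ℝ) ^ 2)) = _ from hFs₀] at this
      exact this
    · -- degenerate case : reduce the number of terms
      push_neg at hcase
      obtain ⟨s₁, hs₁⟩ := hcase
      set σ₁ : Fin m → ℝ := fun j => if s₁ j then (1:ℝ) else -1 with hσ₁
      have hs₁' : (∑ j, σ₁ j * Real.sqrt (z' j)) = 0 := hs₁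
      set ε'' : Fin m → ℝ := fun j => if ε j = 0 then 0 else (ε j - σ₁ j) / 2 with hε''
      have hε''v : ∀ j, ε'' j = 1 ∨ ε'' j = -1 ∨ ε'' j = 0 := by
        intro j
        rcases hεv j with h1 | h1 | h1 <;> rw [hε''] <;>
          by_cases h2 : s₁ j <;> simp [hσ₁, h1, h2] <;> norm_num
      -- the new sum is S / 2
      have hhalf : (∑ j, ε'' j * Real.sqrt (z' j))
          = (∑ j, ε j * Real.sqrt ((a j : ℝ) ^ 2 + η * (b j : ℝ) ^ 2)) / 2 := by
        have h1 : ∀ j, ε'' j * Real.sqrt (z' j)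
            = (ε j * Real.sqrt (z' j) - σ₁ j * Real.sqrt (z' j)) / 2 := by
          intro j
          by_cases hj : ε j = 0
          · simp only [hε'', if_pos hj]
            rw [hz'0 j hj]
            simp
          · simp only [hε'', if_neg hj]
            ring
        rw [Finset.sum_congr rfl (fun j _ => h1 j), ← Finset.sum_div, Finset.sum_sub_distrib,
          hs₁', sub_zero, hSeq]
      -- there is an index where ε'' vanishes but ε does not
      have hj₀ : ∃ j₀, ε j₀ ≠ 0 ∧ ε j₀ = σ₁ j₀ := by
        by_contra hcon
        push_neg at hcon
        apply hne
        have : ∀ j, σ₁ j * Real.sqrt (z' j) = -(ε j * Real.sqrt (z' j)) := by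
          intro j
          by_cases hj : ε j = 0
          · rw [hz'0 j hj, Real.sqrt_zero, mul_zero, mul_zero, neg_zero]
          · have hne' := hcon j hj
            rcases hεv j with h1 | h1 | h1
            · have : σ₁ j = -1 := by
                rcases (by rw [hσ₁]; by_cases h2 : s₁ j <;> simp [h2] :
                  σ₁ j = 1 ∨ σ₁ j = -1) with h2 | h2
                · exact absurd (h1.trans h2.symm) hne'
                · exact h2
              rw [this, h1]; ring
            · have : σ₁ j = 1 := by
                rcases (by rw [hσ₁]; by_cases h2 : s₁ j <;> simp [h2] :
                  σ₁ j = 1 ∨ σ₁ j = -1) with h2 | h2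
                · exact h2
                · exact absurd (h1.trans h2.symm) hne'
              rw [this, h1]; ring
            · exact absurd h1 hj
        have h2 : (∑ j, σ₁ j * Real.sqrt (z' j)) = -(∑ j, ε j * Real.sqrt (z' j)) := by
          rw [Finset.sum_congr rfl (fun j _ => this j), Finset.sum_neg_distrib]
        rw [h2, hSeq] at hs₁'
        linarith [hs₁']
      obtain ⟨j₀, hj₀ne, hj₀eq⟩ := hj₀
      have hε''j₀ : ε'' j₀ = 0 := by
        simp only [hε'', if_neg hj₀ne]
        rw [hj₀eq]
        ring
      -- cardinality decreases
      have hcard'' : ({j | ε'' j ≠ 0} : Set (Fin m)).ncard ≤ k := by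
        have hsub : ({j | ε'' j ≠ 0} : Set (Fin m)) ⊆ {j | ε j ≠ 0} \ {j₀} := by
          intro j hj
          constructor
          · intro hj'
            apply hj
            simp [hε'', hj']
          · intro hj'
            rw [Set.mem_singleton_iff] at hj'
            subst hj'
            exact hj hε''j₀
        refine (Set.ncard_le_ncard hsub (Set.toFinite _)).trans ?_
        have hmem : j₀ ∈ ({j | ε j ≠ 0} : Set (Fin m)) := hj₀ne
        have := Set.ncard_diff_singleton_lt_of_mem hmem (Set.toFinite _)
        omega
      -- apply induction hypothesis
      have hne'' : (∑ j, ε'' j * Real.sqrt ((a' j : ℝ) ^ 2 + η * (b' j : ℝ) ^ 2)) ≠ 0 := by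
        show (∑ j, ε'' j * Real.sqrt (z' j)) ≠ 0
        rw [hhalf]
        intro h
        apply hne
        field_simp at h
        simpa using h
      have hIH := H₀ M hM a' b' ε'' hε''v hcard'' (fun j => hz'M j) hne''
      apply hred c₀ K₀ hc₀ (min_le_left _ _) (le_max_left _ _)
      have heq2 : (∑ j, ε'' j * Real.sqrt ((a' j : ℝ) ^ 2 + η * (b' j : ℝ) ^ 2))
          = (∑ j, ε j * Real.sqrt ((a j : ℝ) ^ 2 + η * (b j : ℝ) ^ 2)) / 2 := hhalf
      rw [heq2] at hIH
      rw [abs_div] at hIH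
      have : |(2:ℝ)| = 2 := by norm_num
      rw [this] at hIH
      have h3 : |∑ j, ε j * Real.sqrt ((a j : ℝ) ^ 2 + η * (b j : ℝ) ^ 2)| ≥ c₀ / M ^ K₀ := by
        have := hIH
        nlinarith [pow_pos hM0 K₀, div_nonneg hc₀.le (pow_pos hM0 K₀).le]
      exact h3

/-- For strongly Diophantine η > 0 and fixed m, nonvanishing signed sums of
square roots √(aⱼ² + η bⱼ²) with aⱼ² + η bⱼ² ≤ M are at least ≫ M^{-K}. -/
theorem signed_sqrt_sums_lower_bound (η : ℝ) (hη : 0 < η)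
    (hSD : StronglyDiophantine η) (m : ℕ) :
    ∃ K : ℕ, ∃ c : ℝ, 0 < c ∧ ∀ M : ℝ, 2 ≤ M →
      ∀ a b : Fin m → ℤ, ∀ ε : Fin m → ℝ,
        (∀ j, ε j = 1 ∨ ε j = -1) →
        (∀ j, (a j : ℝ) ^ 2 + η * (b j : ℝ) ^ 2 ≤ M) →
        (∑ j, ε j * Real.sqrt ((a j : ℝ) ^ 2 + η * (b j : ℝ) ^ 2)) ≠ 0 →
        |∑ j, ε j * Real.sqrt ((a j : ℝ) ^ 2 + η * (b j : ℝ) ^ 2)| ≥ c / M ^ K := by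
  obtain ⟨K, c, hc, H⟩ := aux_induction η hη hSD m m
  refine ⟨K, c, hc, ?_⟩
  intro M hM a b ε hεv hzM hne
  apply H M hM a b ε (fun j => (hεv j).imp id Or.inl) ?_ hzM hne
  refine (Set.ncard_le_ncard (Set.subset_univ _) (Set.toFinite _)).trans ?_
  simp [Set.ncard_univ]
end

section
/- Let η > 0 and Λ = ⟨1, iη⟩ a rectangular lattice. For R ≥ 2 and δ > 1, define A(R, δ) = {(k, l) ∈ Λ² : R ≤ |k|² ≤ 2R, |k|² ≤ |l|² ≤ |k|² + δ}. Then for every ε > 0, #A(R, δ) ≪_ε R^{1+ε} · δ. -/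
open Finset Real

lemma aux_pow_bound (ε : ℝ) (hε : 0 < ε) (a : ℕ) :
    (a + 1 : ℝ) ≤ max 1 (2 / (ε * Real.log 2)) * (2:ℝ) ^ (ε * a) := by
  set K := max 1 (2 / (ε * Real.log 2)) with hK
  have hlog : 0 < Real.log 2 := Real.log_pos (by norm_num)
  have hK0 : 0 < K := lt_of_lt_of_le one_pos (le_max_left _ _)
  rcases Nat.eq_zero_or_pos a with rfl | ha
  · simp only [Nat.cast_zero, mul_zero, Real.rpow_zero, mul_one]
    have := le_max_left 1 (2 / (ε * Real.log 2))
    linarith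
  · have ha1 : (1:ℝ) ≤ a := by exact_mod_cast ha
    have h1 : (ε * a * Real.log 2) ≤ (2:ℝ) ^ (ε * (a:ℝ)) := by
      rw [Real.rpow_def_of_pos (by norm_num : (0:ℝ) < 2),
        show Real.log 2 * (ε * (a:ℝ)) = ε * a * Real.log 2 from by ring]
      nlinarith [Real.add_one_le_exp (ε * ↑a * Real.log 2)]
    have h2 : 2 / (ε * Real.log 2) ≤ K := le_max_right _ _
    have hpos : 0 ≤ ε * a * Real.log 2 := by positivity
    have h3 : (2 / (ε * Real.log 2)) * (ε * a * Real.log 2) ≤ K * (2:ℝ) ^ (ε * (a:ℝ)) :=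
      mul_le_mul h2 h1 hpos (le_of_lt hK0)
    have h4 : (2 / (ε * Real.log 2)) * (ε * a * Real.log 2) = 2 * a := by
      field_simp
    nlinarith

lemma divisor_bound (ε : ℝ) (hε : 0 < ε) :
    ∃ C : ℝ, 1 ≤ C ∧ ∀ n : ℕ, n ≠ 0 → (n.divisors.card : ℝ) ≤ C * (n:ℝ) ^ ε := by
  classical
  set K := max 1 (2 / (ε * Real.log 2)) with hKdef
  have hK1 : (1:ℝ) ≤ K := le_max_left _ _
  have hK0 : (0:ℝ) < K := lt_of_lt_of_le one_pos hK1
  set B : ℕ := ⌈(2:ℝ) ^ (1/ε)⌉₊ with hBdef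
  refine ⟨K ^ (B + 1), one_le_pow₀ hK1, ?_⟩
  intro n hn
  -- the termwise quantities
  have hterm : ∀ p ∈ n.primeFactors,
      ((n.factorization p + 1 : ℕ) : ℝ) ≤
        (if p ≤ B then K else 1) * (((p:ℝ) ^ (n.factorization p)) ^ ε) := by
    intro p hp
    have hpp : p.Prime := Nat.prime_of_mem_primeFactors hp
    have hp2 : (2:ℝ) ≤ p := by exact_mod_cast hpp.two_le
    set a := n.factorization p with ha
    have hpow : ((p:ℝ) ^ a) ^ ε = (p:ℝ) ^ (ε * a) := by
      rw [← Real.rpow_natCast (p:ℝ) a, ← Real.rpow_mul (by linarith : (0:ℝ) ≤ p)]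
      ring_nf
    by_cases hpB : p ≤ B
    · simp only [hpB, if_true]
      have h1 : ((a + 1 : ℕ) : ℝ) ≤ K * (2:ℝ) ^ (ε * a) := by
        push_cast; exact aux_pow_bound ε hε a
      have h2 : (2:ℝ) ^ (ε * (a:ℝ)) ≤ (p:ℝ) ^ (ε * (a:ℝ)) :=
        Real.rpow_le_rpow (by norm_num) hp2 (by positivity)
      rw [hpow]
      calc ((a + 1 : ℕ) : ℝ) ≤ K * (2:ℝ) ^ (ε * a) := h1
        _ ≤ K * (p:ℝ) ^ (ε * (a:ℝ)) := by nlinarith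
    · simp only [hpB, if_false, one_mul]
      have hBp : (2:ℝ) ^ (1/ε) ≤ p := by
        calc (2:ℝ) ^ (1/ε) ≤ B := Nat.le_ceil _
          _ ≤ p := by exact_mod_cast Nat.le_of_not_lt (fun h => hpB (Nat.le_of_lt_succ (Nat.lt_succ_of_lt h))) |>.trans (le_refl _)
      have h2p : (2:ℝ) ≤ (p:ℝ) ^ ε := by
        have := Real.rpow_le_rpow (by positivity : (0:ℝ) ≤ (2:ℝ)^(1/ε)) hBp (le_of_lt hε)
        rwa [← Real.rpow_mul (by norm_num : (0:ℝ) ≤ 2), one_div_mul_cancel hε.ne',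
          Real.rpow_one] at this
      have h3 : ((a + 1 : ℕ) : ℝ) ≤ (2:ℝ) ^ a := by
        exact_mod_cast Nat.lt_two_pow_self
      have h4 : (2:ℝ) ^ a ≤ ((p:ℝ) ^ ε) ^ a :=
        pow_le_pow_left₀ (by norm_num) h2p a
      have h5 : ((p:ℝ) ^ ε) ^ a = (p:ℝ) ^ (ε * a) := by
        rw [← Real.rpow_natCast ((p:ℝ)^ε) a, ← Real.rpow_mul (by linarith : (0:ℝ) ≤ p)]
      rw [hpow, ← h5]
      exact h3.trans h4
  -- d(n) as a product
  have hd : (n.divisors.card : ℝ) = ∏ p ∈ n.primeFactors, ((n.factorization p + 1 : ℕ) : ℝ) := by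
    rw [Nat.card_divisors hn]; push_cast; ring
  -- n^ε as a product
  have hnprod : (n:ℝ) = ∏ p ∈ n.primeFactors, (p:ℝ) ^ (n.factorization p) := by
    conv_lhs => rw [← Nat.factorization_prod_pow_eq_self hn]
    rw [Nat.prod_factorization_eq_prod_primeFactors]
    push_cast; rfl
  have hne : (n:ℝ) ^ ε = ∏ p ∈ n.primeFactors, ((p:ℝ) ^ (n.factorization p)) ^ ε := by
    rw [hnprod, ← Real.finset_prod_rpow _ _ (fun p _ => by positivity)]
  -- combine
  have hstep : (n.divisors.card : ℝ) ≤
      ∏ p ∈ n.primeFactors, ((if p ≤ B then K else 1) * (((p:ℝ) ^ (n.factorization p)) ^ ε)) := by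
    rw [hd]
    exact Finset.prod_le_prod (fun p _ => by positivity) hterm
  have hsplit : ∏ p ∈ n.primeFactors, ((if p ≤ B then K else 1) * (((p:ℝ) ^ (n.factorization p)) ^ ε))
      = (∏ p ∈ n.primeFactors, (if p ≤ B then K else 1)) * (n:ℝ) ^ ε := by
    rw [Finset.prod_mul_distrib, hne]
  have hKprod : (∏ p ∈ n.primeFactors, (if p ≤ B then K else 1)) ≤ K ^ (B + 1) := by
    rw [← Finset.prod_filter]
    rw [Finset.prod_const]
    apply pow_le_pow_right₀ hK1
    calc (Finset.filter (fun p => p ≤ B) n.primeFactors).card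
        ≤ (Finset.range (B+1)).card := by
          apply Finset.card_le_card
          intro p hp
          simp only [Finset.mem_filter] at hp
          exact Finset.mem_range.mpr (Nat.lt_succ_of_le hp.2)
      _ = B + 1 := Finset.card_range _
  calc (n.divisors.card : ℝ) ≤ _ := hstep
    _ = (∏ p ∈ n.primeFactors, (if p ≤ B then K else 1)) * (n:ℝ) ^ ε := hsplit
    _ ≤ K ^ (B + 1) * (n:ℝ) ^ ε := by
        apply mul_le_mul_of_nonneg_right hKprod (by positivity)

lemma hyperbola_count (n : ℤ) (hn : n ≠ 0) (s : Finset (ℤ × ℤ))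
    (hs : ∀ p ∈ s, p.2 ^ 2 - p.1 ^ 2 = n) :
    s.card ≤ 2 * n.natAbs.divisors.card := by
  classical
  set D : Finset ℤ := Finset.image (fun d : ℕ => (d:ℤ)) n.natAbs.divisors ∪
      Finset.image (fun d : ℕ => -(d:ℤ)) n.natAbs.divisors with hD
  have hcard : D.card ≤ 2 * n.natAbs.divisors.card := by
    calc D.card ≤ (Finset.image (fun d : ℕ => (d:ℤ)) n.natAbs.divisors).card +
        (Finset.image (fun d : ℕ => -(d:ℤ)) n.natAbs.divisors).card := Finset.card_union_le _ _
      _ ≤ n.natAbs.divisors.card + n.natAbs.divisors.card :=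
          add_le_add (Finset.card_image_le) (Finset.card_image_le)
      _ = 2 * n.natAbs.divisors.card := by ring
  have key : ∀ p ∈ s, p.2 - p.1 ≠ 0 ∧ (p.2 - p.1) * (p.2 + p.1) = n := by
    intro p hp
    have h := hs p hp
    constructor
    · intro h0
      apply hn
      have : p.2 = p.1 := by linarith [sub_eq_zero.mp h0]
      rw [← h, this]; ring
    · rw [← h]; ring
  refine le_trans ?_ hcard
  apply Finset.card_le_card_of_injOn (fun p => p.2 - p.1)
  · intro p hp
    obtain ⟨hu0, hun⟩ := key p hp
    have hdvd : (p.2 - p.1).natAbs ∣ n.natAbs := by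
      apply Int.natAbs_dvd_natAbs.mpr
      exact ⟨p.2 + p.1, hun.symm⟩
    have hmem : (p.2 - p.1).natAbs ∈ n.natAbs.divisors :=
      Nat.mem_divisors.mpr ⟨hdvd, Int.natAbs_ne_zero.mpr hn⟩
    rcases Int.natAbs_eq (p.2 - p.1) with he | he
    · exact Finset.mem_union_left _ (Finset.mem_image.mpr ⟨_, hmem, he.symm⟩)
    · exact Finset.mem_union_right _ (Finset.mem_image.mpr ⟨_, hmem, he.symm⟩)
  · intro p hp q hq hpq
    simp only at hpq
    obtain ⟨hu0, hun⟩ := key p hp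
    obtain ⟨hv0, hvn⟩ := key q hq
    rw [hpq] at hun
    have hsum : p.2 + p.1 = q.2 + q.1 := by
      apply mul_left_cancel₀ hv0
      rw [hun, hvn]
    have hdiff : p.2 - p.1 = q.2 - q.1 := hpq
    have h1 : p.1 = q.1 := by omega
    have h2 : p.2 = q.2 := by omega
    exact Prod.ext h1 h2

lemma diagonal_count (M : ℤ) (hM : 0 ≤ M) (s : Finset (ℤ × ℤ))
    (hs : ∀ p ∈ s, p.2 ^ 2 = p.1 ^ 2 ∧ p.1 ∈ Finset.Icc (-M) M) :
    (s.card : ℝ) ≤ 2 * (2 * M + 1) := by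
  classical
  have h : s.card ≤ ((Finset.Icc (-M) M) ×ˢ (Finset.univ : Finset Bool)).card := by
    apply Finset.card_le_card_of_injOn (fun p => (p.1, decide (p.2 = p.1)))
    · intro p hp
      exact Finset.mem_product.mpr ⟨(hs p hp).2, Finset.mem_univ _⟩
    · intro p hp q hq hpq
      simp only [Prod.mk.injEq, decide_eq_decide] at hpq
      obtain ⟨h1, h2⟩ := hpq
      have hp2 : p.2 = p.1 ∨ p.2 = -p.1 := sq_eq_sq_iff_eq_or_eq_neg.mp (hs p hp).1
      have hq2 : q.2 = q.1 ∨ q.2 = -q.1 := sq_eq_sq_iff_eq_or_eq_neg.mp (hs q hq).1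
      apply Prod.ext h1
      by_cases hc : p.2 = p.1
      · have hq : q.2 = q.1 := h2.mp hc
        omega
      · have hp3 : p.2 = -p.1 := hp2.resolve_left hc
        have hqc : ¬ q.2 = q.1 := fun h => hc (h2.mpr h)
        have hq3 : q.2 = -q.1 := hq2.resolve_left hqc
        omega
  have h2 : (((Finset.Icc (-M) M) ×ˢ (Finset.univ : Finset Bool)).card : ℝ)
      ≤ (2 * M + 1) * 2 := by
    rw [Finset.card_product]
    rw [Int.card_Icc]
    simp only [Finset.card_univ, Fintype.card_bool]
    have h3 : (M + 1 - -M).toNat = (2*M+1).toNat := by omega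
    rw [h3, Nat.cast_mul]
    have h4 : (((2*M+1).toNat : ℕ) : ℝ) = 2*(M:ℝ)+1 := by
      rw [show (((2*M+1).toNat : ℕ) : ℝ) = (((2*M+1).toNat : ℤ) : ℝ) from by push_cast; ring,
        Int.toNat_of_nonneg (by omega)]
      push_cast; ring
    rw [h4]
    norm_num
  calc (s.card : ℝ) ≤ _ := by exact_mod_cast h
    _ ≤ (2 * M + 1) * 2 := h2
    _ = 2 * (2 * M + 1) := by ring

lemma int_window_card (L d : ℝ) (hd : 0 ≤ d) :
    ((Finset.Icc ⌈L⌉ ⌊L + d⌋).card : ℝ) ≤ d + 1 := by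
  rcases le_or_gt ⌈L⌉ ⌊L + d⌋ with h | h
  · rw [Int.card_Icc]
    have h1 : (⌊L + d⌋ + 1 - ⌈L⌉).toNat = (⌊L + d⌋ + 1 - ⌈L⌉) := Int.toNat_of_nonneg (by omega)
    have h2 : ((⌊L + d⌋ + 1 - ⌈L⌉).toNat : ℝ) = ((⌊L + d⌋:ℝ) + 1 - ⌈L⌉) := by
      rw [show (((⌊L + d⌋ + 1 - ⌈L⌉).toNat : ℕ) : ℝ) = (((⌊L + d⌋ + 1 - ⌈L⌉).toNat : ℤ) : ℝ)
        from by push_cast; ring, h1]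
      push_cast; ring
    rw [h2]
    have := Int.floor_le (L + d)
    have := Int.le_ceil L
    linarith
  · rw [Finset.Icc_eq_empty (not_le.mpr h)]
    simp
    linarith

lemma strip_offdiag (C ε : ℝ) (hε : 0 < ε)
    (hC : ∀ n : ℕ, n ≠ 0 → (n.divisors.card : ℝ) ≤ C * (n:ℝ)^ε) (hC1 : 1 ≤ C)
    (X L d : ℝ) (hd : 0 ≤ d) (hX : 1 ≤ X)
    (s : Finset (ℤ × ℤ))
    (hs : ∀ p ∈ s, (L ≤ ((p.2:ℝ)^2 - (p.1:ℝ)^2) ∧ ((p.2:ℝ)^2 - (p.1:ℝ)^2) ≤ L + d)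
      ∧ p.2^2 ≠ p.1^2 ∧ ((p.1:ℝ)^2 ≤ X ∧ (p.2:ℝ)^2 ≤ X)) :
    (s.card : ℝ) ≤ (d + 1) * (2 * C * X^ε) := by
  classical
  set N : Finset ℤ := (Finset.Icc ⌈L⌉ ⌊L + d⌋).erase 0 with hN
  have hmap : ∀ p ∈ s, p.2^2 - p.1^2 ∈ N := by
    intro p hp
    obtain ⟨⟨h1, h2⟩, h3, _⟩ := hs p hp
    refine Finset.mem_erase.mpr ⟨sub_ne_zero.mpr h3, Finset.mem_Icc.mpr ⟨?_, ?_⟩⟩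
    · apply Int.ceil_le.mpr; push_cast; linarith
    · apply Int.le_floor.mpr; push_cast; linarith
  have hfib : ∀ n ∈ N, ((s.filter (fun p => p.2^2 - p.1^2 = n)).card : ℝ) ≤ 2 * C * X^ε := by
    intro n hn
    obtain ⟨hn0, hmemIcc⟩ := Finset.mem_erase.mp hn
    rcases Finset.eq_empty_or_nonempty (s.filter (fun p => p.2^2 - p.1^2 = n)) with he | ⟨p, hp⟩
    · rw [he]; simp; positivity
    · obtain ⟨hpmem, hpn⟩ := Finset.mem_filter.mp hp
      obtain ⟨-, -, hp1, hp2⟩ := hs p hpmem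
      have hnr : (n:ℝ) = (p.2:ℝ)^2 - (p.1:ℝ)^2 := by rw [← hpn]; push_cast; ring
      have habs : |(n:ℝ)| ≤ X := by
        rw [abs_le]
        constructor
        · nlinarith [sq_nonneg ((p.2:ℝ))]
        · nlinarith [sq_nonneg ((p.1:ℝ))]
      have hnX : ((n.natAbs : ℕ) : ℝ) ≤ X := by
        rw [show ((n.natAbs : ℕ) : ℝ) = |(n:ℝ)| from by rw [Nat.cast_natAbs, Int.cast_abs]]
        exact habs
      have hd1 : (n.natAbs.divisors.card : ℝ) ≤ C * X^ε := by
        refine (hC n.natAbs (Int.natAbs_ne_zero.mpr hn0)).trans ?_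
        have := Real.rpow_le_rpow (by positivity : (0:ℝ) ≤ ((n.natAbs:ℕ):ℝ)) hnX hε.le
        nlinarith [Real.rpow_nonneg (show (0:ℝ) ≤ ((n.natAbs:ℕ):ℝ) by positivity) ε]
      have hcard := hyperbola_count n hn0 (s.filter (fun p => p.2^2 - p.1^2 = n))
        (fun p hp => (Finset.mem_filter.mp hp).2)
      have : ((s.filter (fun p => p.2^2 - p.1^2 = n)).card : ℝ)
          ≤ 2 * (n.natAbs.divisors.card : ℝ) := by exact_mod_cast hcard
      linarith
  calc (s.card : ℝ) = ∑ n ∈ N, ((s.filter (fun p => p.2^2 - p.1^2 = n)).card : ℝ) := by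
        rw [Finset.card_eq_sum_card_fiberwise hmap]; push_cast; rfl
    _ ≤ ∑ n ∈ N, (2 * C * X^ε) := Finset.sum_le_sum hfib
    _ = (N.card : ℝ) * (2 * C * X^ε) := by rw [Finset.sum_const, nsmul_eq_mul]
    _ ≤ (d + 1) * (2 * C * X^ε) := by
        apply mul_le_mul_of_nonneg_right _ (by positivity)
        calc (N.card : ℝ) ≤ ((Finset.Icc ⌈L⌉ ⌊L + d⌋).card : ℝ) := by
              exact_mod_cast Finset.card_le_card (Finset.erase_subset _ _)
          _ ≤ d + 1 := int_window_card L d hd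

lemma strip_full (C ε : ℝ) (hε : 0 < ε)
    (hC : ∀ n : ℕ, n ≠ 0 → (n.divisors.card : ℝ) ≤ C * (n:ℝ)^ε) (hC1 : 1 ≤ C)
    (X L d : ℝ) (hd : 0 ≤ d) (hX : 1 ≤ X) (M : ℤ) (hM : 0 ≤ M)
    (s : Finset (ℤ × ℤ))
    (hs : ∀ p ∈ s, (L ≤ ((p.2:ℝ)^2 - (p.1:ℝ)^2) ∧ ((p.2:ℝ)^2 - (p.1:ℝ)^2) ≤ L + d)
      ∧ p.1 ∈ Finset.Icc (-M) M ∧ ((p.1:ℝ)^2 ≤ X ∧ (p.2:ℝ)^2 ≤ X)) :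
    (s.card : ℝ) ≤ (d + 1) * (2 * C * X^ε) + 2 * (2 * M + 1) := by
  classical
  have hsplit := Finset.card_filter_add_card_filter_not
    (s := s) (p := fun p => p.2^2 = p.1^2)
  have h1 : ((s.filter (fun p => p.2^2 = p.1^2)).card : ℝ) ≤ 2 * (2 * M + 1) := by
    apply diagonal_count M hM
    intro p hp
    obtain ⟨hpm, hpd⟩ := Finset.mem_filter.mp hp
    exact ⟨hpd, (hs p hpm).2.1⟩
  have h2 : ((s.filter (fun p => ¬ p.2^2 = p.1^2)).card : ℝ) ≤ (d + 1) * (2 * C * X^ε) := by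
    apply strip_offdiag C ε hε hC hC1 X L d hd hX
    intro p hp
    obtain ⟨hpm, hpd⟩ := Finset.mem_filter.mp hp
    exact ⟨(hs p hpm).1, hpd, (hs p hpm).2.2⟩
  have : (s.card : ℝ) = ((s.filter (fun p => p.2^2 = p.1^2)).card : ℝ)
      + ((s.filter (fun p => ¬ p.2^2 = p.1^2)).card : ℝ) := by exact_mod_cast hsplit.symm
  linarith

noncomputable def boxI (Y : ℝ) : Finset ℤ := Finset.Icc (-⌊Real.sqrt Y⌋) ⌊Real.sqrt Y⌋

lemma mem_boxI {a : ℤ} {Y : ℝ} (h : (a:ℝ)^2 ≤ Y) : a ∈ boxI Y := by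
  have h1 : |(a:ℝ)| ≤ Real.sqrt Y := by
    rw [← Real.sqrt_sq_eq_abs]; exact Real.sqrt_le_sqrt h
  refine Finset.mem_Icc.mpr ⟨?_, ?_⟩
  · rw [neg_le]
    apply Int.le_floor.mpr
    push_cast
    exact le_trans (neg_le_abs _) h1
  · exact Int.le_floor.mpr (le_trans (le_abs_self _) h1)

lemma boxI_floor_nonneg (Y : ℝ) : 0 ≤ ⌊Real.sqrt Y⌋ :=
  Int.floor_nonneg.mpr (Real.sqrt_nonneg Y)

lemma boxI_floor_le (Y : ℝ) : (⌊Real.sqrt Y⌋ : ℝ) ≤ Real.sqrt Y := Int.floor_le _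

lemma boxI_card (Y : ℝ) : ((boxI Y).card : ℝ) ≤ 2 * Real.sqrt Y + 1 := by
  have h0 := boxI_floor_nonneg Y
  have h1 := boxI_floor_le Y
  rw [boxI, Int.card_Icc]
  have h2 : (⌊Real.sqrt Y⌋ + 1 - -⌊Real.sqrt Y⌋).toNat = (2*⌊Real.sqrt Y⌋+1).toNat := by omega
  rw [h2]
  rw [show (((2*⌊Real.sqrt Y⌋+1).toNat : ℕ) : ℝ) = (((2*⌊Real.sqrt Y⌋+1).toNat : ℤ) : ℝ)
    from by push_cast; ring, Int.toNat_of_nonneg (by omega)]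
  push_cast
  linarith

lemma nat_card_le_finset {α : Type*} (P : α → Prop) (T : Finset α)
    (h : ∀ x, P x → x ∈ T) : (Nat.card {x // P x} : ℝ) ≤ T.card := by
  have h1 : {x | P x} ⊆ (T : Set α) := fun x hx => h x hx
  have h2 : Nat.card {x // P x} = Set.ncard {x | P x} := Nat.card_coe_set_eq _
  rw [h2]
  exact_mod_cast le_trans (Set.ncard_le_ncard h1 T.finite_toSet)
    (le_of_eq (Set.ncard_coe_finset T))

lemma sqrt_le_of_sq {Y z : ℝ} (hz : 0 ≤ z) (h : Y ≤ z^2) : Real.sqrt Y ≤ z := by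
  calc Real.sqrt Y ≤ Real.sqrt (z^2) := Real.sqrt_le_sqrt h
    _ = z := Real.sqrt_sq hz

set_option maxHeartbeats 2000000 in
lemma count_case1 (η ε C₀ : ℝ) (hη : 0 < η) (hε : 0 < ε) (hC₀1 : 1 ≤ C₀)
    (hC₀ : ∀ n : ℕ, n ≠ 0 → (n.divisors.card : ℝ) ≤ C₀ * (n:ℝ)^ε)
    (R δ : ℝ) (hR : 2 ≤ R) (hδ : 1 < δ) (hδR : δ ≤ R)
    (S : Finset ((ℤ×ℤ)×(ℤ×ℤ)))
    (hS : ∀ x ∈ S,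
      R ≤ (x.1.1:ℝ)^2 + η^2*(x.1.2:ℝ)^2 ∧
      (x.1.1:ℝ)^2 + η^2*(x.1.2:ℝ)^2 ≤ 2*R ∧
      (x.1.1:ℝ)^2 + η^2*(x.1.2:ℝ)^2 ≤ (x.2.1:ℝ)^2 + η^2*(x.2.2:ℝ)^2 ∧
      (x.2.1:ℝ)^2 + η^2*(x.2.2:ℝ)^2 ≤ (x.1.1:ℝ)^2 + η^2*(x.1.2:ℝ)^2 + δ) :
    (S.card : ℝ) ≤ ((4/η+1)^2*4*C₀*3^ε + 20*(1/η^2+1)*C₀*(3/η^2+1)^ε + 20*(4/η+1))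
      * (R * R^ε * δ) := by
  classical
  have hη2 : (0:ℝ) < η^2 := by positivity
  have hR0 : (0:ℝ) < R := by linarith
  have hC₀0 : (0:ℝ) ≤ C₀ := by linarith
  set sR := Real.sqrt R with hsRdef
  have hsq : sR^2 = R := Real.sq_sqrt hR0.le
  have h1sR : 1 ≤ sR := by
    rw [hsRdef, show (1:ℝ) = Real.sqrt 1 from (Real.sqrt_one).symm]
    exact Real.sqrt_le_sqrt (by linarith)
  have hsRR : sR ≤ R := by nlinarith
  set rε := R ^ ε with hrεdef
  have hrε1 : 1 ≤ rε := Real.one_le_rpow (by linarith) hε.le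
  have hrε0 : 0 < rε := by linarith
  have hcoord : ∀ x ∈ S, (x.1.1:ℝ)^2 ≤ 3*R ∧ (x.1.2:ℝ)^2 ≤ 3*R/η^2 ∧
      (x.2.1:ℝ)^2 ≤ 3*R ∧ (x.2.2:ℝ)^2 ≤ 3*R/η^2 := by
    intro x hx
    obtain ⟨h1, h2, h3, h4⟩ := hS x hx
    have hb2 := sq_nonneg ((x.1.2:ℝ))
    have ha2 := sq_nonneg ((x.1.1:ℝ))
    have hd2 := sq_nonneg ((x.2.2:ℝ))
    have hc2 := sq_nonneg ((x.2.1:ℝ))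
    refine ⟨by nlinarith, ?_, by nlinarith, ?_⟩
    · rw [le_div_iff₀ hη2]; nlinarith
    · rw [le_div_iff₀ hη2]; nlinarith
  -- bounds on box sizes
  have hbox3R : ((boxI (3*R)).card : ℝ) ≤ 5 * sR := by
    refine le_trans (boxI_card _) ?_
    have : Real.sqrt (3*R) ≤ 2*sR := by
      apply sqrt_le_of_sq (by positivity)
      nlinarith
    linarith
  have hbox3Rη : ((boxI (3*R/η^2)).card : ℝ) ≤ (4/η+1) * sR := by
    refine le_trans (boxI_card _) ?_
    have h5 : Real.sqrt (3*R/η^2) ≤ 2*sR/η := by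
      apply sqrt_le_of_sq (by positivity)
      rw [div_pow, div_le_div_iff₀ hη2 (by positivity)]
      nlinarith
    have : (4/η+1)*sR = 2*(2*sR/η) + sR := by field_simp; ring
    linarith
  have hMb : ((⌊Real.sqrt (3*R/η^2)⌋ : ℤ) : ℝ) ≤ 2*sR/η := by
    refine le_trans (boxI_floor_le _) ?_
    apply sqrt_le_of_sq (by positivity)
    rw [div_pow, div_le_div_iff₀ hη2 (by positivity)]
    nlinarith
  -- split into diagonal and off-diagonal parts
  have hsplit := Finset.card_filter_add_card_filter_not
    (s := S) (p := fun x => x.2.1^2 = x.1.1^2)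
  set S₀ := S.filter (fun x => x.2.1^2 = x.1.1^2) with hS₀def
  set S₁ := S.filter (fun x => ¬ x.2.1^2 = x.1.1^2) with hS₁def
  -- off-diagonal count
  set BD := boxI (3*R/η^2) ×ˢ boxI (3*R/η^2) with hBDdef
  have hmapBD : ∀ x ∈ S₁, (x.1.2, x.2.2) ∈ BD := by
    intro x hx
    obtain ⟨hxS, -⟩ := Finset.mem_filter.mp hx
    obtain ⟨-, hb, -, hd⟩ := hcoord x hxS
    exact Finset.mem_product.mpr ⟨mem_boxI hb, mem_boxI hd⟩
  have hS1card : (S₁.card : ℝ) ≤ (BD.card : ℝ) * ((δ+1)*(2*C₀*(3*R)^ε)) := by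
    rw [Finset.card_eq_sum_card_fiberwise hmapBD, Nat.cast_sum]
    have hfiber : ∀ bd ∈ BD,
        ((S₁.filter (fun x => (x.1.2, x.2.2) = bd)).card : ℝ) ≤ (δ+1)*(2*C₀*(3*R)^ε) := by
      intro bd hbd
      set F := S₁.filter (fun x => (x.1.2, x.2.2) = bd) with hFdef
      have hinj : Set.InjOn (fun x : (ℤ×ℤ)×(ℤ×ℤ) => (x.1.1, x.2.1)) F := by
        intro x hx y hy hxy
        obtain ⟨-, hx2⟩ := Finset.mem_filter.mp (Finset.mem_coe.mp hx)
        obtain ⟨-, hy2⟩ := Finset.mem_filter.mp (Finset.mem_coe.mp hy)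
        simp only [Prod.mk.injEq] at hxy
        rw [← hy2] at hx2
        simp only [Prod.mk.injEq] at hx2
        exact Prod.ext (Prod.ext hxy.1 hx2.1) (Prod.ext hxy.2 hx2.2)
      have hcardF : (F.card : ℝ) = ((F.image (fun x => (x.1.1, x.2.1))).card : ℝ) := by
        exact_mod_cast (Finset.card_image_of_injOn hinj).symm
      rw [hcardF]
      apply strip_offdiag C₀ ε hε hC₀ hC₀1 (3*R) (η^2*((bd.1:ℝ)^2 - (bd.2:ℝ)^2)) δ
        (by linarith) (by linarith)
      intro p hp
      obtain ⟨x, hxF, hgx⟩ := Finset.mem_image.mp hp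
      obtain ⟨hxS1, hxbd⟩ := Finset.mem_filter.mp hxF
      obtain ⟨hxS, hxne⟩ := Finset.mem_filter.mp hxS1
      obtain ⟨h1, h2, h3, h4⟩ := hS x hxS
      obtain ⟨ha, hb, hc, hd⟩ := hcoord x hxS
      subst hgx
      subst hxbd
      simp only
      refine ⟨⟨by nlinarith, by nlinarith⟩, hxne, ha, hc⟩
    calc ∑ bd ∈ BD, ((S₁.filter (fun x => (x.1.2, x.2.2) = bd)).card : ℝ)
        ≤ ∑ _bd ∈ BD, ((δ+1)*(2*C₀*(3*R)^ε)) := Finset.sum_le_sum hfiber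
      _ = (BD.card : ℝ) * ((δ+1)*(2*C₀*(3*R)^ε)) := by
          rw [Finset.sum_const, nsmul_eq_mul]
  -- diagonal count
  set AC := (boxI (3*R) ×ˢ boxI (3*R)).filter (fun p : ℤ×ℤ => p.2^2 = p.1^2) with hACdef
  have hmapAC : ∀ x ∈ S₀, (x.1.1, x.2.1) ∈ AC := by
    intro x hx
    obtain ⟨hxS, hxdiag⟩ := Finset.mem_filter.mp hx
    obtain ⟨ha, -, hc, -⟩ := hcoord x hxS
    exact Finset.mem_filter.mpr ⟨Finset.mem_product.mpr ⟨mem_boxI ha, mem_boxI hc⟩, hxdiag⟩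
  set Mb : ℤ := ⌊Real.sqrt (3*R/η^2)⌋ with hMbdef
  have hS0card : (S₀.card : ℝ) ≤ (AC.card : ℝ) *
      ((δ/η^2+1)*(2*C₀*(3*R/η^2+1)^ε) + 2*(2*(Mb:ℝ)+1)) := by
    rw [Finset.card_eq_sum_card_fiberwise hmapAC, Nat.cast_sum]
    have hfiber : ∀ ac ∈ AC,
        ((S₀.filter (fun x => (x.1.1, x.2.1) = ac)).card : ℝ) ≤
          (δ/η^2+1)*(2*C₀*(3*R/η^2+1)^ε) + 2*(2*(Mb:ℝ)+1) := by
      intro ac hac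
      set F := S₀.filter (fun x => (x.1.1, x.2.1) = ac) with hFdef
      have hinj : Set.InjOn (fun x : (ℤ×ℤ)×(ℤ×ℤ) => (x.1.2, x.2.2)) F := by
        intro x hx y hy hxy
        obtain ⟨-, hx2⟩ := Finset.mem_filter.mp (Finset.mem_coe.mp hx)
        obtain ⟨-, hy2⟩ := Finset.mem_filter.mp (Finset.mem_coe.mp hy)
        simp only [Prod.mk.injEq] at hxy
        rw [← hy2] at hx2
        simp only [Prod.mk.injEq] at hx2
        exact Prod.ext (Prod.ext hx2.1 hxy.1) (Prod.ext hx2.2 hxy.2)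
      have hcardF : (F.card : ℝ) = ((F.image (fun x => (x.1.2, x.2.2))).card : ℝ) := by
        exact_mod_cast (Finset.card_image_of_injOn hinj).symm
      rw [hcardF]
      apply strip_full C₀ ε hε hC₀ hC₀1 (3*R/η^2+1) 0 (δ/η^2) (by positivity)
        (by linarith [div_nonneg (show (0:ℝ) ≤ 3*R by linarith) hη2.le])
        Mb (boxI_floor_nonneg _)
      intro p hp
      obtain ⟨x, hxF, hgx⟩ := Finset.mem_image.mp hp
      obtain ⟨hxS0, hxac⟩ := Finset.mem_filter.mp hxF
      obtain ⟨hxS, hxdiag⟩ := Finset.mem_filter.mp hxS0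
      obtain ⟨h1, h2, h3, h4⟩ := hS x hxS
      obtain ⟨ha, hb, hc, hd⟩ := hcoord x hxS
      have hca : ((x.2.1:ℝ))^2 = ((x.1.1:ℝ))^2 := by exact_mod_cast congrArg (Int.cast : ℤ → ℝ) hxdiag
      subst hgx
      simp only
      refine ⟨⟨by nlinarith, ?_⟩, mem_boxI hb, by linarith, by linarith⟩
      rw [zero_add, le_div_iff₀ hη2]
      nlinarith
    calc ∑ ac ∈ AC, ((S₀.filter (fun x => (x.1.1, x.2.1) = ac)).card : ℝ)
        ≤ ∑ _ac ∈ AC, ((δ/η^2+1)*(2*C₀*(3*R/η^2+1)^ε) + 2*(2*(Mb:ℝ)+1)) :=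
          Finset.sum_le_sum hfiber
      _ = _ := by rw [Finset.sum_const, nsmul_eq_mul]
  -- cardinalities of BD and AC
  have hBD : (BD.card : ℝ) ≤ ((4/η+1)*sR)^2 := by
    rw [hBDdef, Finset.card_product, Nat.cast_mul, mul_pow]
    have h0 : (0:ℝ) ≤ ((boxI (3*R/η^2)).card : ℝ) := by positivity
    have h1 : (0:ℝ) ≤ (4/η+1)*sR := by positivity
    nlinarith [hbox3Rη]
  have hAC : (AC.card : ℝ) ≤ 10 * sR := by
    have := diagonal_count ⌊Real.sqrt (3*R)⌋ (boxI_floor_nonneg _) AC ?_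
    · refine le_trans this ?_
      have h2 : ((⌊Real.sqrt (3*R)⌋:ℤ):ℝ) ≤ 2*sR := by
        refine le_trans (boxI_floor_le _) ?_
        apply sqrt_le_of_sq (by positivity)
        nlinarith
      linarith
    · intro p hp
      obtain ⟨hpb, hpd⟩ := Finset.mem_filter.mp hp
      exact ⟨hpd, (Finset.mem_product.mp hpb).1⟩
  -- final assembly
  have e1 : (3*R)^ε = 3^ε * rε := Real.mul_rpow (by norm_num) hR0.le
  have e2 : (3*R/η^2+1)^ε ≤ (3/η^2+1)^ε * rε := by
    have h3 : 3*R/η^2+1 ≤ (3/η^2+1)*R := by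
      have h4 : (3/η^2+1)*R = 3*R/η^2 + R := by ring
      rw [h4]; linarith
    calc (3*R/η^2+1)^ε ≤ ((3/η^2+1)*R)^ε :=
          Real.rpow_le_rpow (by positivity) h3 hε.le
      _ = (3/η^2+1)^ε * rε := Real.mul_rpow (by positivity) hR0.le
  have h3e : (0:ℝ) < (3:ℝ)^ε := Real.rpow_pos_of_pos (by norm_num) _
  have h3η : (0:ℝ) < (3/η^2+1:ℝ)^ε := Real.rpow_pos_of_pos (by positivity) _
  have hterm1 : (S₁.card : ℝ) ≤ (4/η+1)^2*4*C₀*3^ε * (R * rε * δ) := by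
    calc (S₁.card : ℝ) ≤ (BD.card : ℝ) * ((δ+1)*(2*C₀*(3*R)^ε)) := hS1card
      _ ≤ ((4/η+1)*sR)^2 * ((2*δ)*(2*C₀*(3^ε * rε))) := by
          rw [← e1]
          apply mul_le_mul hBD ?_ (by positivity) (by positivity)
          apply mul_le_mul (by linarith) le_rfl (by positivity) (by linarith)
      _ = (4/η+1)^2*4*C₀*3^ε * (R * rε * δ) := by
          rw [mul_pow, hsq]; ring
  have hterm0 : (S₀.card : ℝ) ≤
      (20*(1/η^2+1)*C₀*(3/η^2+1)^ε + 20*(4/η+1)) * (R * rε * δ) := by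
    have hin1 : (δ/η^2+1)*(2*C₀*(3*R/η^2+1)^ε) ≤ ((1/η^2+1)*δ)*(2*C₀*((3/η^2+1)^ε * rε)) := by
      apply mul_le_mul ?_ ?_ (by positivity) (by positivity)
      · have h5 : (1/η^2+1)*δ = δ/η^2 + δ := by ring
        rw [h5]; linarith
      · apply mul_le_mul le_rfl e2 (by positivity) (by positivity)
    have hin2 : 2*(2*(Mb:ℝ)+1) ≤ 2*((4/η+1)*sR) := by
      have h6 : 2*(Mb:ℝ)+1 ≤ (4/η+1)*sR := by
        have h7 : (4/η+1)*sR = 2*(2*sR/η) + sR := by field_simp; ring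
        rw [h7]; linarith
      linarith
    calc (S₀.card : ℝ) ≤ (AC.card : ℝ) *
        ((δ/η^2+1)*(2*C₀*(3*R/η^2+1)^ε) + 2*(2*(Mb:ℝ)+1)) := hS0card
      _ ≤ (10*sR) * (((1/η^2+1)*δ)*(2*C₀*((3/η^2+1)^ε * rε)) + 2*((4/η+1)*sR)) := by
          apply mul_le_mul hAC (by linarith) ?_ (by positivity)
          have := mul_nonneg (mul_nonneg (by positivity : (0:ℝ) ≤ δ/η^2+1)
            (by positivity : (0:ℝ) ≤ 2*C₀)) (le_of_lt (Real.rpow_pos_of_pos (by positivity) ε))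
          positivity
      _ = 20*(1/η^2+1)*C₀*(3/η^2+1)^ε * (sR * rε * δ) + 20*(4/η+1)*sR^2 := by ring
      _ ≤ (20*(1/η^2+1)*C₀*(3/η^2+1)^ε + 20*(4/η+1)) * (R * rε * δ) := by
          rw [hsq]
          have hA : 20*(1/η^2+1)*C₀*(3/η^2+1)^ε * (sR * rε * δ) ≤
              20*(1/η^2+1)*C₀*(3/η^2+1)^ε * (R * rε * δ) := by
            apply mul_le_mul_of_nonneg_left ?_ (by positivity)
            apply mul_le_mul_of_nonneg_right ?_ (by linarith)
            exact mul_le_mul_of_nonneg_right hsRR (by linarith)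
          have hB : 20*(4/η+1)*R ≤ 20*(4/η+1) * (R * rε * δ) := by
            apply mul_le_mul_of_nonneg_left ?_ (by positivity)
            have hb1 : R * 1 ≤ R * rε := by nlinarith
            have hb2 : (R * rε) * 1 ≤ (R * rε) * δ := by
              apply mul_le_mul_of_nonneg_left (by linarith) (by positivity)
            nlinarith
          linarith [hA, hB]
  have hcards : (S.card : ℝ) = (S₀.card : ℝ) + (S₁.card : ℝ) := by
    exact_mod_cast hsplit.symm
  rw [hcards]
  linarith

set_option maxHeartbeats 2000000 in
lemma count_case2 (η ε : ℝ) (hη : 0 < η) (hε : 0 < ε)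
    (R δ : ℝ) (hR : 2 ≤ R) (hδ : 1 < δ) (hδR : R < δ)
    (S : Finset ((ℤ×ℤ)×(ℤ×ℤ)))
    (hS : ∀ x ∈ S,
      R ≤ (x.1.1:ℝ)^2 + η^2*(x.1.2:ℝ)^2 ∧
      (x.1.1:ℝ)^2 + η^2*(x.1.2:ℝ)^2 ≤ 2*R ∧
      (x.1.1:ℝ)^2 + η^2*(x.1.2:ℝ)^2 ≤ (x.2.1:ℝ)^2 + η^2*(x.2.2:ℝ)^2 ∧
      (x.2.1:ℝ)^2 + η^2*(x.2.2:ℝ)^2 ≤ (x.1.1:ℝ)^2 + η^2*(x.1.2:ℝ)^2 + δ) :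
    (S.card : ℝ) ≤ 25*(4/η+1)^2 * (R * R^ε * δ) := by
  classical
  have hη2 : (0:ℝ) < η^2 := by positivity
  have hR0 : (0:ℝ) < R := by linarith
  have hδ0 : (0:ℝ) < δ := by linarith
  set sR := Real.sqrt R with hsRdef
  have hsqR : sR^2 = R := Real.sq_sqrt hR0.le
  have h1sR : 1 ≤ sR := by
    rw [hsRdef, show (1:ℝ) = Real.sqrt 1 from (Real.sqrt_one).symm]
    exact Real.sqrt_le_sqrt (by linarith)
  set sδ := Real.sqrt δ with hsδdef
  have hsqδ : sδ^2 = δ := Real.sq_sqrt hδ0.le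
  have h1sδ : 1 ≤ sδ := by
    rw [hsδdef, show (1:ℝ) = Real.sqrt 1 from (Real.sqrt_one).symm]
    exact Real.sqrt_le_sqrt (by linarith)
  have hrε1 : 1 ≤ R ^ ε := Real.one_le_rpow (by linarith) hε.le
  set T := (boxI (2*R) ×ˢ boxI (2*R/η^2)) ×ˢ (boxI (2*R+δ) ×ˢ boxI ((2*R+δ)/η^2)) with hT
  have hsub : S ⊆ T := by
    intro x hx
    obtain ⟨h1, h2, h3, h4⟩ := hS x hx
    have hb2 := sq_nonneg ((x.1.2:ℝ))
    have ha2 := sq_nonneg ((x.1.1:ℝ))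
    have hd2 := sq_nonneg ((x.2.2:ℝ))
    have hc2 := sq_nonneg ((x.2.1:ℝ))
    refine Finset.mem_product.mpr ⟨Finset.mem_product.mpr ⟨mem_boxI (by nlinarith), mem_boxI ?_⟩,
      Finset.mem_product.mpr ⟨mem_boxI (by nlinarith), mem_boxI ?_⟩⟩
    · rw [le_div_iff₀ hη2]; nlinarith
    · rw [le_div_iff₀ hη2]; nlinarith
  have hb1 : ((boxI (2*R)).card : ℝ) ≤ 5 * sR := by
    refine le_trans (boxI_card _) ?_
    have : Real.sqrt (2*R) ≤ 2*sR := by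
      apply sqrt_le_of_sq (by positivity); nlinarith
    linarith
  have hb2 : ((boxI (2*R/η^2)).card : ℝ) ≤ (4/η+1) * sR := by
    refine le_trans (boxI_card _) ?_
    have h5 : Real.sqrt (2*R/η^2) ≤ 2*sR/η := by
      apply sqrt_le_of_sq (by positivity)
      rw [div_pow, div_le_div_iff₀ hη2 (by positivity)]
      nlinarith
    have h6 : (4/η+1)*sR = 2*(2*sR/η) + sR := by field_simp; ring
    linarith
  have hb3 : ((boxI (2*R+δ)).card : ℝ) ≤ 5 * sδ := by
    refine le_trans (boxI_card _) ?_
    have : Real.sqrt (2*R+δ) ≤ 2*sδ := by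
      apply sqrt_le_of_sq (by positivity); nlinarith
    linarith
  have hb4 : ((boxI ((2*R+δ)/η^2)).card : ℝ) ≤ (4/η+1) * sδ := by
    refine le_trans (boxI_card _) ?_
    have h5 : Real.sqrt ((2*R+δ)/η^2) ≤ 2*sδ/η := by
      apply sqrt_le_of_sq (by positivity)
      rw [div_pow, div_le_div_iff₀ hη2 (by positivity)]
      nlinarith
    have h6 : (4/η+1)*sδ = 2*(2*sδ/η) + sδ := by field_simp; ring
    linarith
  have hTcard : ((T.card) : ℝ) = ((boxI (2*R)).card : ℝ) * ((boxI (2*R/η^2)).card : ℝ)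
      * ((boxI (2*R+δ)).card : ℝ) * ((boxI ((2*R+δ)/η^2)).card : ℝ) := by
    rw [hT, Finset.card_product, Finset.card_product, Finset.card_product]
    push_cast; ring
  have hScard : (S.card : ℝ) ≤ (T.card : ℝ) := by exact_mod_cast Finset.card_le_card hsub
  have hfinal : (T.card : ℝ) ≤ 25*(4/η+1)^2 * (R * δ) := by
    rw [hTcard]
    have c1 : (0:ℝ) ≤ ((boxI (2*R)).card : ℝ) := by positivity
    have c2 : (0:ℝ) ≤ ((boxI (2*R/η^2)).card : ℝ) := by positivity
    have c3 : (0:ℝ) ≤ ((boxI (2*R+δ)).card : ℝ) := by positivity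
    have c4 : (0:ℝ) ≤ ((boxI ((2*R+δ)/η^2)).card : ℝ) := by positivity
    have e : 25*(4/η+1)^2 * (R * δ) = (5*sR) * ((4/η+1)*sR) * (5*sδ) * ((4/η+1)*sδ) := by
      rw [show (5*sR) * ((4/η+1)*sR) * (5*sδ) * ((4/η+1)*sδ)
        = 25*(4/η+1)^2 * (sR^2 * sδ^2) from by ring, hsqR, hsqδ]
    rw [e]
    have p1 : (0:ℝ) ≤ 5*sR := by positivity
    have p2 : (0:ℝ) ≤ (4/η+1)*sR := by positivity
    have p3 : (0:ℝ) ≤ 5*sδ := by positivity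
    apply mul_le_mul (mul_le_mul (mul_le_mul hb1 hb2 c2 p1) hb3 c3 (by positivity)) hb4 c4
      (by positivity)
  calc (S.card : ℝ) ≤ (T.card : ℝ) := hScard
    _ ≤ 25*(4/η+1)^2 * (R * δ) := hfinal
    _ ≤ 25*(4/η+1)^2 * (R * R^ε * δ) := by
        apply mul_le_mul_of_nonneg_left ?_ (by positivity)
        have : R * 1 * δ ≤ R * R^ε * δ := by
          apply mul_le_mul_of_nonneg_right ?_ hδ0.le
          apply mul_le_mul_of_nonneg_left hrε1 hR0.le
        linarith

set_option maxHeartbeats 2000000 in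
/-- Pair-correlation count for the rectangular lattice Λ = ⟨1, iη⟩:
#{(k,l) ∈ Λ² : R ≤ |k|² ≤ 2R, |k|² ≤ |l|² ≤ |k|² + δ} ≪_ε R^{1+ε} δ. -/
theorem pair_count_bound (η : ℝ) (hη : 0 < η) :
    ∀ ε : ℝ, 0 < ε → ∃ C : ℝ, 0 < C ∧ ∀ R δ : ℝ, 2 ≤ R → 1 < δ →
      (Nat.card {x : (ℤ × ℤ) × (ℤ × ℤ) //
          R ≤ (x.1.1 : ℝ) ^ 2 + η ^ 2 * (x.1.2 : ℝ) ^ 2 ∧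
          (x.1.1 : ℝ) ^ 2 + η ^ 2 * (x.1.2 : ℝ) ^ 2 ≤ 2 * R ∧
          (x.1.1 : ℝ) ^ 2 + η ^ 2 * (x.1.2 : ℝ) ^ 2
            ≤ (x.2.1 : ℝ) ^ 2 + η ^ 2 * (x.2.2 : ℝ) ^ 2 ∧
          (x.2.1 : ℝ) ^ 2 + η ^ 2 * (x.2.2 : ℝ) ^ 2
            ≤ (x.1.1 : ℝ) ^ 2 + η ^ 2 * (x.1.2 : ℝ) ^ 2 + δ} : ℝ)
        ≤ C * R ^ ((1 : ℝ) + ε) * δ := by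
  intro ε hε
  obtain ⟨C₀, hC₀1, hC₀⟩ := divisor_bound ε hε
  classical
  have hC₀p : (0:ℝ) < C₀ := lt_of_lt_of_le one_pos hC₀1
  have h3e : (0:ℝ) < (3:ℝ)^ε := Real.rpow_pos_of_pos (by norm_num) _
  have h3η : (0:ℝ) < ((3/η^2+1):ℝ)^ε := Real.rpow_pos_of_pos (by positivity) _
  have t1 : (0:ℝ) < (4/η+1)^2*4*C₀*3^ε :=
    mul_pos (mul_pos (mul_pos (by positivity) (by norm_num)) hC₀p) h3e
  have t2 : (0:ℝ) < 20*(1/η^2+1)*C₀*(3/η^2+1)^ε :=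
    mul_pos (mul_pos (mul_pos (by norm_num) (by positivity)) hC₀p) h3η
  have t3 : (0:ℝ) < 20*(4/η+1) := by positivity
  have t4 : (0:ℝ) < 25*(4/η+1)^2 := by positivity
  refine ⟨(4/η+1)^2*4*C₀*3^ε + 20*(1/η^2+1)*C₀*(3/η^2+1)^ε + 20*(4/η+1) + 25*(4/η+1)^2,
    by linarith, ?_⟩
  intro R δ hR hδ
  have hη2 : (0:ℝ) < η^2 := by positivity
  have hR0 : (0:ℝ) < R := by linarith
  have hδ0 : (0:ℝ) < δ := by linarith
  set P : (ℤ × ℤ) × (ℤ × ℤ) → Prop := fun x =>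
    R ≤ (x.1.1 : ℝ) ^ 2 + η ^ 2 * (x.1.2 : ℝ) ^ 2 ∧
    (x.1.1 : ℝ) ^ 2 + η ^ 2 * (x.1.2 : ℝ) ^ 2 ≤ 2 * R ∧
    (x.1.1 : ℝ) ^ 2 + η ^ 2 * (x.1.2 : ℝ) ^ 2
      ≤ (x.2.1 : ℝ) ^ 2 + η ^ 2 * (x.2.2 : ℝ) ^ 2 ∧
    (x.2.1 : ℝ) ^ 2 + η ^ 2 * (x.2.2 : ℝ) ^ 2
      ≤ (x.1.1 : ℝ) ^ 2 + η ^ 2 * (x.1.2 : ℝ) ^ 2 + δ with hPdef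
  set T := ((boxI (2*R) ×ˢ boxI (2*R/η^2)) ×ˢ
    (boxI (2*R+δ) ×ˢ boxI ((2*R+δ)/η^2))).filter P with hT
  have hmem : ∀ x, P x → x ∈ T := by
    intro x hx
    obtain ⟨h1, h2, h3, h4⟩ := hx
    have hb2 := sq_nonneg ((x.1.2:ℝ))
    have ha2 := sq_nonneg ((x.1.1:ℝ))
    have hd2 := sq_nonneg ((x.2.2:ℝ))
    have hc2 := sq_nonneg ((x.2.1:ℝ))
    refine Finset.mem_filter.mpr ⟨?_, h1, h2, h3, h4⟩
    refine Finset.mem_product.mpr ⟨Finset.mem_product.mpr ⟨mem_boxI (by nlinarith), mem_boxI ?_⟩,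
      Finset.mem_product.mpr ⟨mem_boxI (by nlinarith), mem_boxI ?_⟩⟩
    · rw [le_div_iff₀ hη2]; nlinarith
    · rw [le_div_iff₀ hη2]; nlinarith
  refine le_trans (nat_card_le_finset P T hmem) ?_
  have hTP : ∀ x ∈ T, P x := fun x hx => (Finset.mem_filter.mp hx).2
  have hrw : R ^ ((1:ℝ) + ε) * δ = R * R^ε * δ := by
    rw [Real.rpow_add hR0, Real.rpow_one]
  rcases le_or_gt δ R with hcase | hcase
  · have hc1 := count_case1 η ε C₀ hη hε hC₀1 hC₀ R δ hR hδ hcase T hTP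
    calc (T.card : ℝ) ≤ ((4/η+1)^2*4*C₀*3^ε + 20*(1/η^2+1)*C₀*(3/η^2+1)^ε + 20*(4/η+1))
          * (R * R^ε * δ) := hc1
      _ ≤ ((4/η+1)^2*4*C₀*3^ε + 20*(1/η^2+1)*C₀*(3/η^2+1)^ε + 20*(4/η+1) + 25*(4/η+1)^2)
          * (R * R^ε * δ) := by
          apply mul_le_mul_of_nonneg_right (by linarith) ?_
          have : (0:ℝ) < R^ε := Real.rpow_pos_of_pos hR0 _
          positivity
      _ = _ := by rw [mul_assoc, ← hrw, ← mul_assoc]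
  · have hc2 := count_case2 η ε hη hε R δ hR hδ hcase T hTP
    calc (T.card : ℝ) ≤ 25*(4/η+1)^2 * (R * R^ε * δ) := hc2
      _ ≤ ((4/η+1)^2*4*C₀*3^ε + 20*(1/η^2+1)*C₀*(3/η^2+1)^ε + 20*(4/η+1) + 25*(4/η+1)^2)
          * (R * R^ε * δ) := by
          apply mul_le_mul_of_nonneg_right (by linarith) ?_
          have : (0:ℝ) < R^ε := Real.rpow_pos_of_pos hR0 _
          positivity
      _ = _ := by rw [mul_assoc, ← hrw, ← mul_assoc]
end

section
/- Let k ≥ 3 and L ≥ 2. For real z with 1 ≤ z < L, define Q(z) = Σ_{ε ∈ {±1}^k} Σ_{f₁,…,f_k ≥ 1, Σ ε_j f_j = 0} ∏_{j=1}^k |sin(π f_j z / L)| / f_j^{3/2}. Then Q(z) ≪_k z^{k/2+1} / L^{k/2+1}, and for all z > 0, Q(z) ≪_k 1. -/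
open scoped Classical

/-- The sum Q(z) over sign patterns ε ∈ {±1}^k and positive integer tuples
(f₁,…,f_k) with Σ εⱼfⱼ = 0 of ∏ |sin(π fⱼ z / L)| / fⱼ^{3/2}. -/
noncomputable def Qsum (k : ℕ) (L z : ℝ) : ℝ :=
  ∑' f : Fin k → ℕ, ∑ ε : Fin k → Bool,
    if (∀ j, 1 ≤ f j) ∧ (∑ j, (if ε j then (1 : ℤ) else -1) * (f j : ℤ)) = 0 then
      ∏ j, |Real.sin (Real.pi * (f j : ℝ) * z / L)| / (f j : ℝ) ^ ((3 : ℝ) / 2)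
    else 0

open Real

noncomputable def qr (n : ℕ) : ℝ := Real.sqrt (Real.sqrt n)

lemma qr_nonneg (n : ℕ) : 0 ≤ qr n := Real.sqrt_nonneg _

lemma qr_pow4 (n : ℕ) : (qr n) ^ 4 = n := by
  have h1 : (0:ℝ) ≤ Real.sqrt n := Real.sqrt_nonneg _
  have h : (qr n) ^ 4 = ((qr n) ^ 2) ^ 2 := by ring
  rw [h, qr, Real.sq_sqrt h1, Real.sq_sqrt (by positivity)]

lemma qr_zero : qr 0 = 0 := by simp [qr]

lemma qr_one : qr 1 = 1 := by simp [qr]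

lemma qr_sq (n : ℕ) : (qr n) ^ 2 = Real.sqrt n := Real.sq_sqrt (Real.sqrt_nonneg _)

lemma qr_mono {a b : ℕ} (h : a ≤ b) : qr a ≤ qr b := by
  apply Real.sqrt_le_sqrt; apply Real.sqrt_le_sqrt; exact_mod_cast h

lemma one_le_qr {n : ℕ} (h : 1 ≤ n) : 1 ≤ qr n := by
  have := qr_mono h; rwa [qr_one] at this

lemma qr_pos {n : ℕ} (h : 1 ≤ n) : 0 < qr n := lt_of_lt_of_le one_pos (one_le_qr h)

lemma qr_mul (a b : ℕ) : qr (a * b) = qr a * qr b := by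
  simp [qr, Nat.cast_mul, Real.sqrt_mul (Nat.cast_nonneg a), Real.sqrt_mul (Real.sqrt_nonneg _)]

lemma rpow_32_eq (n : ℕ) : (n:ℝ) ^ ((3:ℝ)/2) = (qr n) ^ 6 := by
  rcases Nat.eq_zero_or_pos n with h | h
  · subst h
    simp [Real.zero_rpow (by norm_num : ((3:ℝ)/2) ≠ 0), qr_zero]
  · have hn : (0:ℝ) < n := by exact_mod_cast h
    have h6 : (qr n)^6 = ((qr n)^2)^3 := by ring
    rw [h6, qr_sq, Real.sqrt_eq_rpow, ← Real.rpow_natCast ((n:ℝ) ^ ((1:ℝ)/2)) 3,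
      ← Real.rpow_mul hn.le]
    norm_num

lemma qr_succ_pow4 {n : ℕ} (hn : 1 ≤ n) : (qr n)^4 = (qr (n-1))^4 + 1 := by
  rw [qr_pow4, qr_pow4, Nat.cast_sub hn]; push_cast; ring

-- geometric bound: v^(p-1) * (v - u) ≤ v^p - u^p
lemma pow_sub_pow_ge {u v : ℝ} (hu : 0 ≤ u) (hv : 0 < v) (huv : u ≤ v) {p : ℕ} (hp : 1 ≤ p) :
    v^(p-1) * (v - u) ≤ v^p - u^p := by
  have id := geom_sum₂_mul (R := ℝ) (x := v) (y := u) (n := p)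
  rw [← id]
  have hterm : v^(p-1) ≤ ∑ i ∈ Finset.range p, v^i * u^(p-1-i) := by
    have h0 : v^(p-1) = v^(p-1) * u^(p-1-(p-1)) := by simp
    rw [h0]
    exact Finset.single_le_sum (f := fun i => v^i * u^(p-1-i))
      (fun i _ => by positivity) (Finset.mem_range.mpr (by omega))
  exact mul_le_mul_of_nonneg_right hterm (by linarith)

lemma vsub_ge {u v : ℝ} (hu : 0 ≤ u) (hv : 1 ≤ v) (huv : u ≤ v) (h4 : v^4 = u^4 + 1) :
    (4*v^3)⁻¹ ≤ v - u := by
  have hv0 : (0:ℝ) < v := by linarith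
  have key : (v - u) * (v^3 + v^2*u + v*u^2 + u^3) = 1 := by linear_combination h4
  have hS : (0:ℝ) < v^3 + v^2*u + v*u^2 + u^3 := by positivity
  have hS4 : v^3 + v^2*u + v*u^2 + u^3 ≤ 4*v^3 := by nlinarith [pow_le_pow_left₀ hu huv 2, pow_le_pow_left₀ hu huv 3]
  have he : v - u = (v^3 + v^2*u + v*u^2 + u^3)⁻¹ := by
    field_simp
    linarith [key]
  rw [he]
  exact inv_anti₀ hS hS4

lemma tel_a {u v : ℝ} (hu : 0 ≤ u) (hv : 1 ≤ v) (huv : u ≤ v) (h4 : v^4 = u^4 + 1)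
    {p : ℕ} (hp1 : 1 ≤ p) (hp3 : p ≤ 3) : (v^(4-p))⁻¹ ≤ 4*(v^p - u^p) := by
  have hv0 : (0:ℝ) < v := by linarith
  have h3 := vsub_ge hu hv huv h4
  have hg := pow_sub_pow_ge hu hv0 huv hp1
  have step : v^(p-1) * (4*v^3)⁻¹ ≤ v^p - u^p := by
    calc v^(p-1) * (4*v^3)⁻¹ ≤ v^(p-1) * (v - u) :=
          mul_le_mul_of_nonneg_left h3 (by positivity)
      _ ≤ v^p - u^p := hg
  have hkey : (v^(4-p))⁻¹ = 4 * (v^(p-1) * (4*v^3)⁻¹) := by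
    rw [mul_inv]
    have h34 : v^(p-1) * (v^(4-p)) = v^3 := by
      rw [← pow_add]; congr 1; omega
    field_simp
    nlinarith [h34]
  rw [hkey]
  linarith [step]

lemma tel_b {u v : ℝ} (hu1 : 1 ≤ u) (hv : 1 ≤ v) (huv : u ≤ v) (h4 : v^4 = u^4 + 1)
    {p : ℕ} (hp : 1 ≤ p) : (v^(p+4))⁻¹ ≤ 4*((u^p)⁻¹ - (v^p)⁻¹) := by
  have hu0 : (0:ℝ) < u := by linarith
  have hv0 : (0:ℝ) < v := by linarith
  have h3 := vsub_ge (by linarith) hv huv h4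
  have hg := pow_sub_pow_ge (by linarith) hv0 huv hp
  have hup : (0:ℝ) < u^p := pow_pos hu0 p
  have hvp : (0:ℝ) < v^p := pow_pos hv0 p
  have hmono : u^p ≤ v^p := pow_le_pow_left₀ hu0.le huv p
  have e : (u^p)⁻¹ - (v^p)⁻¹ = (v^p - u^p) / (u^p * v^p) := by field_simp
  rw [e]
  have step1 : v^(p-1) * (4*v^3)⁻¹ ≤ v^p - u^p := by
    calc v^(p-1) * (4*v^3)⁻¹ ≤ v^(p-1) * (v - u) :=
          mul_le_mul_of_nonneg_left h3 (by positivity)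
      _ ≤ v^p - u^p := hg
  rw [show 4 * ((v^p - u^p) / (u^p * v^p)) = (4*(v^p - u^p)) / (u^p * v^p) by ring]
  rw [le_div_iff₀ (by positivity)]
  calc (v^(p+4))⁻¹ * (u^p * v^p) ≤ (v^(p+4))⁻¹ * (v^p * v^p) := by
        apply mul_le_mul_of_nonneg_left _ (by positivity)
        exact mul_le_mul_of_nonneg_right hmono hvp.le
    _ = v^(p-1) * (v^3)⁻¹ := by
        have hne : (v:ℝ) ≠ 0 := by positivity
        field_simp
        rw [← pow_mul, ← pow_add, ← pow_add]
        congr 1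
        omega
    _ = 4 * (v^(p-1) * (4*v^3)⁻¹) := by
        rw [mul_inv]; ring
    _ ≤ 4 * (v^p - u^p) := by linarith [step1]

lemma qtel_a {p : ℕ} (hp1 : 1 ≤ p) (hp3 : p ≤ 3) {n : ℕ} (hn : 1 ≤ n) :
    ((qr n)^(4-p))⁻¹ ≤ 4*((qr n)^p - (qr (n-1))^p) :=
  tel_a (qr_nonneg _) (one_le_qr hn) (qr_mono (by omega)) (qr_succ_pow4 hn) hp1 hp3

lemma qtel_b {p : ℕ} (hp : 1 ≤ p) {n : ℕ} (hn : 2 ≤ n) :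
    ((qr n)^(p+4))⁻¹ ≤ 4*(((qr (n-1))^p)⁻¹ - ((qr n)^p)⁻¹) :=
  tel_b (one_le_qr (by omega)) (one_le_qr (by omega)) (qr_mono (by omega)) (qr_succ_pow4 (by omega)) hp

-- telescoping sums
lemma Psum_le {a φ : ℕ → ℝ} {c : ℝ} (ha0 : a 0 = 0) (hφ0 : φ 0 = 0)
    (h : ∀ n : ℕ, 1 ≤ n → a n ≤ c * (φ n - φ (n - 1))) (N : ℕ) :
    ∑ n ∈ Finset.range (N + 1), a n ≤ c * φ N := by
  induction N with
  | zero => simp [ha0, hφ0]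
  | succ N ih =>
      rw [Finset.sum_range_succ]
      have h2 := h (N + 1) (by omega)
      simp only [Nat.add_sub_cancel] at h2
      have e : c * (φ (N+1) - φ N) = c * φ (N+1) - c * φ N := by ring
      linarith

lemma Tsum_le {a φ : ℕ → ℝ} {c : ℝ} (ha : ∀ n, 0 ≤ a n) (hφ : ∀ n, 0 ≤ φ n) (hc : 0 ≤ c)
    (h : ∀ n : ℕ, 2 ≤ n → a n ≤ c * (φ (n - 1) - φ n)) {N : ℕ} (hN : 1 ≤ N)
    (s : Finset ℕ) (hs : ∀ n ∈ s, N < n) :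
    ∑ n ∈ s, a n ≤ c * φ N := by
  have key : ∀ d : ℕ, ∑ n ∈ Finset.Icc (N+1) (N+d), a n ≤ c * (φ N - φ (N+d)) := by
    intro d; induction d with
    | zero => simp
    | succ d ih =>
        rw [show N + (d+1) = (N+d) + 1 by omega]
        rw [Finset.sum_Icc_succ_top (by omega)]
        have h2 := h (N+d+1) (by omega)
        simp only [Nat.add_sub_cancel] at h2
        have e : c * (φ N - φ (N+d)) + c * (φ (N+d) - φ (N+d+1))
            = c * (φ N - φ (N+d+1)) := by ring
        linarith
  set B := s.sup id with hB
  have hsub : s ⊆ Finset.Icc (N+1) B := by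
    intro n hn
    simp only [Finset.mem_Icc]
    exact ⟨hs n hn, Finset.le_sup (f := id) hn⟩
  have h1 : ∑ n ∈ s, a n ≤ ∑ n ∈ Finset.Icc (N+1) B, a n :=
    Finset.sum_le_sum_of_subset_of_nonneg hsub (fun i _ _ => ha i)
  rcases le_or_gt B N with hBN | hBN
  · have : Finset.Icc (N+1) B = ∅ := Finset.Icc_eq_empty (by omega)
    rw [this, Finset.sum_empty] at h1
    have := mul_nonneg hc (hφ N)
    linarith
  · have h2 := key (B - N)
    rw [show N + (B - N) = B by omega] at h2
    have h3 : c * (φ N - φ B) = c * φ N - c * φ B := by ring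
    have h4 := mul_nonneg hc (hφ B)
    linarith

-- weight functions
noncomputable def w6 (t : ℝ) (n : ℕ) : ℝ := min 1 (π * n * t) * ((qr n)^6)⁻¹
noncomputable def w7 (t : ℝ) (n : ℕ) : ℝ := min 1 (π * n * t) * ((qr n)^7)⁻¹
noncomputable def w11 (t : ℝ) (n : ℕ) : ℝ := (min 1 (π * n * t))^2 * ((qr n)^11)⁻¹
noncomputable def wu (n : ℕ) : ℝ := ((qr n)^6)⁻¹

lemma min_nonneg' {t : ℝ} (ht : 0 ≤ t) (n : ℕ) : 0 ≤ min 1 (π * n * t) :=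
  le_min one_pos.le (by positivity)

lemma qr_inv_nonneg (n q : ℕ) : 0 ≤ ((qr n)^q)⁻¹ :=
  inv_nonneg.mpr (pow_nonneg (qr_nonneg _) _)
lemma w6_nonneg {t : ℝ} (ht : 0 ≤ t) (n : ℕ) : 0 ≤ w6 t n :=
  mul_nonneg (min_nonneg' ht n) (qr_inv_nonneg _ _)
lemma w7_nonneg {t : ℝ} (ht : 0 ≤ t) (n : ℕ) : 0 ≤ w7 t n :=
  mul_nonneg (min_nonneg' ht n) (qr_inv_nonneg _ _)
lemma w11_nonneg {t : ℝ} (ht : 0 ≤ t) (n : ℕ) : 0 ≤ w11 t n :=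
  mul_nonneg (pow_nonneg (min_nonneg' ht n) _) (qr_inv_nonneg _ _)
lemma wu_nonneg (n : ℕ) : 0 ≤ wu n := by unfold wu; positivity

lemma w6_zero (t : ℝ) : w6 t 0 = 0 := by simp [w6, qr_zero]
lemma w7_zero (t : ℝ) : w7 t 0 = 0 := by simp [w7, qr_zero]
lemma w11_zero (t : ℝ) : w11 t 0 = 0 := by simp [w11, qr_zero]

-- cancellation helpers: n * ((qr n)^(4+q))⁻¹ = ((qr n)^q)⁻¹ etc.
lemma nat_mul_qr_inv {n : ℕ} (hn : 1 ≤ n) (q : ℕ) :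
    (n:ℝ) * ((qr n)^(4+q))⁻¹ = ((qr n)^q)⁻¹ := by
  have h := qr_pos hn
  rw [← qr_pow4 n, pow_add, mul_inv]
  rw [← mul_assoc, mul_inv_cancel₀ (by positivity), one_mul]

-- per-term bounds for partial sums (n ≥ 1)
lemma w6_le {t : ℝ} (ht : 0 ≤ t) {n : ℕ} (hn : 1 ≤ n) :
    w6 t n ≤ (4*π*t) * ((qr n)^2 - (qr (n-1))^2) := by
  have h1 : w6 t n ≤ π*t*((qr n)^2)⁻¹ := by
    unfold w6
    calc min 1 (π*n*t) * ((qr n)^6)⁻¹ ≤ (π*n*t) * ((qr n)^6)⁻¹ :=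
          mul_le_mul_of_nonneg_right (min_le_right _ _) (inv_nonneg.mpr (pow_nonneg (qr_nonneg _) _))
      _ = π*t*((n:ℝ) * ((qr n)^(4+2))⁻¹) := by ring_nf
      _ = π*t*((qr n)^2)⁻¹ := by rw [nat_mul_qr_inv hn 2]
  have h2 := qtel_a (p := 2) (by norm_num) (by norm_num) hn
  norm_num at h2
  calc w6 t n ≤ π*t*((qr n)^2)⁻¹ := h1
    _ ≤ π*t*(4*((qr n)^2 - (qr (n-1))^2)) :=
        mul_le_mul_of_nonneg_left h2 (mul_nonneg Real.pi_pos.le ht)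
    _ = (4*π*t) * ((qr n)^2 - (qr (n-1))^2) := by ring

lemma w7_le {t : ℝ} (ht : 0 ≤ t) {n : ℕ} (hn : 1 ≤ n) :
    w7 t n ≤ (4*π*t) * (qr n - qr (n-1)) := by
  have h1 : w7 t n ≤ π*t*((qr n)^3)⁻¹ := by
    unfold w7
    calc min 1 (π*n*t) * ((qr n)^7)⁻¹ ≤ (π*n*t) * ((qr n)^7)⁻¹ :=
          mul_le_mul_of_nonneg_right (min_le_right _ _) (inv_nonneg.mpr (pow_nonneg (qr_nonneg _) _))
      _ = π*t*((n:ℝ) * ((qr n)^(4+3))⁻¹) := by ring_nf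
      _ = π*t*((qr n)^3)⁻¹ := by rw [nat_mul_qr_inv hn 3]
  have h2 := qtel_a (p := 1) (by norm_num) (by norm_num) hn
  norm_num at h2
  calc w7 t n ≤ π*t*((qr n)^3)⁻¹ := h1
    _ ≤ π*t*(4*(qr n - qr (n-1))) :=
        mul_le_mul_of_nonneg_left h2 (mul_nonneg Real.pi_pos.le ht)
    _ = (4*π*t) * (qr n - qr (n-1)) := by ring

lemma w11_le {t : ℝ} (ht : 0 ≤ t) {n : ℕ} (hn : 1 ≤ n) :
    w11 t n ≤ (4*π^2*t^2) * (qr n - qr (n-1)) := by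
  have h1 : w11 t n ≤ π^2*t^2*((qr n)^3)⁻¹ := by
    unfold w11
    have hmin : (min 1 (π*n*t))^2 ≤ (π*n*t)^2 := by
      apply pow_le_pow_left₀ (min_nonneg' ht n) (min_le_right _ _)
    calc (min 1 (π*n*t))^2 * ((qr n)^11)⁻¹ ≤ (π*n*t)^2 * ((qr n)^11)⁻¹ :=
          mul_le_mul_of_nonneg_right hmin (inv_nonneg.mpr (pow_nonneg (qr_nonneg _) _))
      _ = π^2*t^2*((n:ℝ) * ((n:ℝ) * ((qr n)^11)⁻¹)) := by ring
      _ = π^2*t^2*((qr n)^3)⁻¹ := by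
          rw [show (11:ℕ) = 4+7 by norm_num, nat_mul_qr_inv hn 7,
            show (7:ℕ) = 4+3 by norm_num, nat_mul_qr_inv hn 3]
  have h2 := qtel_a (p := 1) (by norm_num) (by norm_num) hn
  norm_num at h2
  calc w11 t n ≤ π^2*t^2*((qr n)^3)⁻¹ := h1
    _ ≤ π^2*t^2*(4*(qr n - qr (n-1))) :=
        mul_le_mul_of_nonneg_left h2 (by positivity)
    _ = (4*π^2*t^2) * (qr n - qr (n-1)) := by ring

-- tail per-term bounds (n ≥ 2)
lemma w6_tail {t : ℝ} (ht : 0 ≤ t) {n : ℕ} (hn : 2 ≤ n) :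
    w6 t n ≤ 4*(((qr (n-1))^2)⁻¹ - ((qr n)^2)⁻¹) := by
  have h0 : w6 t n ≤ ((qr n)^6)⁻¹ := by
    unfold w6
    calc min 1 (π*n*t) * ((qr n)^6)⁻¹ ≤ 1 * ((qr n)^6)⁻¹ :=
          mul_le_mul_of_nonneg_right (min_le_left _ _) (qr_inv_nonneg _ _)
      _ = ((qr n)^6)⁻¹ := one_mul _
  exact h0.trans (by have := qtel_b (p := 2) (by norm_num) hn; norm_num at this ⊢; exact this)

lemma w7_tail {t : ℝ} (ht : 0 ≤ t) {n : ℕ} (hn : 2 ≤ n) :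
    w7 t n ≤ 4*(((qr (n-1))^3)⁻¹ - ((qr n)^3)⁻¹) := by
  have h0 : w7 t n ≤ ((qr n)^7)⁻¹ := by
    unfold w7
    calc min 1 (π*n*t) * ((qr n)^7)⁻¹ ≤ 1 * ((qr n)^7)⁻¹ :=
          mul_le_mul_of_nonneg_right (min_le_left _ _) (qr_inv_nonneg _ _)
      _ = ((qr n)^7)⁻¹ := one_mul _
  exact h0.trans (by have := qtel_b (p := 3) (by norm_num) hn; norm_num at this ⊢; exact this)

lemma w11_tail {t : ℝ} (ht : 0 ≤ t) {n : ℕ} (hn : 2 ≤ n) :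
    w11 t n ≤ 4*(((qr (n-1))^7)⁻¹ - ((qr n)^7)⁻¹) := by
  have h0 : w11 t n ≤ ((qr n)^11)⁻¹ := by
    unfold w11
    have hmin : (min 1 (π*n*t))^2 ≤ 1 := by
      have h1 : min 1 (π*n*t) ≤ 1 := min_le_left _ _
      have h2 := min_nonneg' ht n
      nlinarith
    calc (min 1 (π*n*t))^2 * ((qr n)^11)⁻¹ ≤ 1 * ((qr n)^11)⁻¹ :=
          mul_le_mul_of_nonneg_right hmin (inv_nonneg.mpr (pow_nonneg (qr_nonneg _) _))
      _ = ((qr n)^11)⁻¹ := one_mul _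
  exact h0.trans (by have := qtel_b (p := 7) (by norm_num) hn; norm_num at this ⊢; exact this)

lemma wu_tail {n : ℕ} (hn : 2 ≤ n) :
    wu n ≤ 4*(((qr (n-1))^2)⁻¹ - ((qr n)^2)⁻¹) := by
  have := qtel_b (p := 2) (by norm_num) hn; norm_num at this ⊢; exact this

-- quarter-root of real, N facts
lemma sqrt_sqrt_eq_rpow {x : ℝ} (hx : 0 ≤ x) : √(√x) = x ^ ((4:ℝ)⁻¹) := by
  rw [Real.sqrt_eq_rpow, Real.sqrt_eq_rpow, ← Real.rpow_mul hx]
  norm_num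

lemma two_pow_quarter_le : ((2:ℝ)) ^ ((4:ℝ)⁻¹) ≤ 1.19 := by
  have h4 : (((2:ℝ)) ^ ((4:ℝ)⁻¹))^(4:ℕ) = 2 := by
    rw [← Real.rpow_natCast (((2:ℝ)) ^ ((4:ℝ)⁻¹)) 4, ← Real.rpow_mul (by norm_num)]
    norm_num
  have hb : ((2:ℝ)) ^ ((4:ℝ)⁻¹) ≤ 1.19 ∨ 1.19 < ((2:ℝ)) ^ ((4:ℝ)⁻¹) := le_or_gt _ _
  rcases hb with h | h
  · exact h
  · exfalso
    have : ((1.19:ℝ))^(4:ℕ) < (((2:ℝ)) ^ ((4:ℝ)⁻¹))^(4:ℕ) := by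
      apply pow_lt_pow_left₀ h (by norm_num)
      norm_num
    rw [h4] at this
    norm_num at this

lemma tau_pos {t : ℝ} (ht0 : 0 < t) : 0 < t ^ ((4:ℝ)⁻¹) := Real.rpow_pos_of_pos ht0 _

lemma tau_pow4 {t : ℝ} (ht0 : 0 < t) : (t ^ ((4:ℝ)⁻¹))^(4:ℕ) = t := by
  rw [← Real.rpow_natCast (t ^ ((4:ℝ)⁻¹)) 4, ← Real.rpow_mul ht0.le]
  norm_num

lemma N_one_le {t : ℝ} (ht0 : 0 < t) : 1 ≤ ⌈1/t⌉₊ := Nat.one_le_ceil_iff.mpr (by positivity)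

lemma qrN_mul_tau_le {t : ℝ} (ht0 : 0 < t) (ht1 : t ≤ 1) :
    qr ⌈1/t⌉₊ * t ^ ((4:ℝ)⁻¹) ≤ 1.19 := by
  set τ := t ^ ((4:ℝ)⁻¹) with hτdef
  have hτ : 0 < τ := tau_pos ht0
  have hceil : ((⌈1/t⌉₊:ℝ)) ≤ 2/t := by
    have h1 : ((⌈1/t⌉₊:ℝ)) < 1/t + 1 := Nat.ceil_lt_add_one (by positivity)
    have h2 : (1:ℝ) ≤ 1/t := by
      rw [le_div_iff₀ ht0]; linarith
    have h3 : 2/t = 1/t + 1/t := by ring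
    linarith
  have h3 : qr ⌈1/t⌉₊ ≤ √(√(2/t)) := by
    unfold qr
    apply Real.sqrt_le_sqrt; apply Real.sqrt_le_sqrt
    exact hceil
  have h4 : √(√(2/t)) = (2:ℝ)^((4:ℝ)⁻¹) * τ⁻¹ := by
    rw [sqrt_sqrt_eq_rpow (div_nonneg (by norm_num) ht0.le),
      Real.div_rpow (by norm_num) ht0.le, div_eq_mul_inv]
  have h5 : qr ⌈1/t⌉₊ * τ ≤ ((2:ℝ)^((4:ℝ)⁻¹) * τ⁻¹) * τ :=
    mul_le_mul_of_nonneg_right (h3.trans h4.le) hτ.le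
  have h6 : ((2:ℝ)^((4:ℝ)⁻¹) * τ⁻¹) * τ = (2:ℝ)^((4:ℝ)⁻¹) := by
    field_simp
  rw [h6] at h5
  exact h5.trans two_pow_quarter_le

lemma qrN_inv_le {t : ℝ} (ht0 : 0 < t) :
    (qr ⌈1/t⌉₊)⁻¹ ≤ t ^ ((4:ℝ)⁻¹) := by
  set τ := t ^ ((4:ℝ)⁻¹) with hτdef
  have hτ : 0 < τ := tau_pos ht0
  have h1 : 1/t ≤ ((⌈1/t⌉₊:ℝ)) := Nat.le_ceil _
  have h2 : √(√(1/t)) ≤ qr ⌈1/t⌉₊ := by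
    unfold qr
    apply Real.sqrt_le_sqrt; apply Real.sqrt_le_sqrt
    exact h1
  have h3 : √(√(1/t)) = τ⁻¹ := by
    rw [sqrt_sqrt_eq_rpow (by positivity), one_div, ← Real.inv_rpow ht0.le]
  rw [h3] at h2
  calc (qr ⌈1/t⌉₊)⁻¹ ≤ (τ⁻¹)⁻¹ :=
        inv_anti₀ (inv_pos.mpr hτ) h2
    _ = τ := inv_inv τ
-- summed bounds over arbitrary finsets
lemma w6_sum {t : ℝ} (ht0 : 0 < t) (ht1 : t ≤ 1) (s : Finset ℕ) :
    ∑ n ∈ s, w6 t n ≤ 22 * (t ^ ((4:ℝ)⁻¹))^(2:ℕ) := by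
  set τ := t ^ ((4:ℝ)⁻¹) with hτdef
  have hτ : 0 < τ := tau_pos ht0
  have hτ4 : τ^(4:ℕ) = t := tau_pow4 ht0
  set N := ⌈1/t⌉₊ with hNdef
  have hN1 : 1 ≤ N := N_one_le ht0
  have hq1 : qr N * τ ≤ 1.19 := qrN_mul_tau_le ht0 ht1
  have hq2 : (qr N)⁻¹ ≤ τ := qrN_inv_le ht0
  rw [← Finset.sum_filter_add_sum_filter_not s (· ≤ N) (w6 t)]
  have hpart : ∑ n ∈ s.filter (· ≤ N), w6 t n ≤ 18 * τ^(2:ℕ) := by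
    have hsub : s.filter (· ≤ N) ⊆ Finset.range (N+1) := by
      intro n hn; simp only [Finset.mem_filter] at hn; exact Finset.mem_range.mpr (by omega)
    calc ∑ n ∈ s.filter (· ≤ N), w6 t n ≤ ∑ n ∈ Finset.range (N+1), w6 t n :=
          Finset.sum_le_sum_of_subset_of_nonneg hsub (fun i _ _ => w6_nonneg ht0.le i)
      _ ≤ (4*π*t) * (qr N)^2 :=
          Psum_le (w6_zero t) (by simp [qr_zero]) (fun n hn => w6_le ht0.le hn) N
      _ = 4*τ^(2:ℕ)*(π * (qr N * τ)^2) := by rw [← hτ4]; ring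
      _ ≤ 4*τ^(2:ℕ)*(3.15 * 1.19^2) := by
          apply mul_le_mul_of_nonneg_left _ (by positivity)
          exact mul_le_mul Real.pi_lt_d2.le
            (pow_le_pow_left₀ (mul_nonneg (qr_nonneg _) hτ.le) hq1 2)
            (sq_nonneg _) (by norm_num)
      _ ≤ 18 * τ^(2:ℕ) := by nlinarith [pow_nonneg hτ.le 2]
  have htail : ∑ n ∈ s.filter (fun n => ¬ n ≤ N), w6 t n ≤ 4 * τ^(2:ℕ) := by
    have hT := Tsum_le (a := w6 t) (φ := fun n => ((qr n)^2)⁻¹) (c := 4)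
      (fun n => w6_nonneg ht0.le n) (fun n => qr_inv_nonneg n 2) (by norm_num)
      (fun n hn => w6_tail ht0.le hn) hN1 (s.filter (fun n => ¬ n ≤ N))
      (fun n hn => by simp only [Finset.mem_filter] at hn; omega)
    have h2 : ((qr N)^2)⁻¹ ≤ τ^(2:ℕ) := by
      rw [← inv_pow]
      exact pow_le_pow_left₀ (inv_nonneg.mpr (qr_nonneg _)) hq2 2
    calc ∑ n ∈ s.filter (fun n => ¬ n ≤ N), w6 t n ≤ 4 * ((qr N)^2)⁻¹ := hT
      _ ≤ 4 * τ^(2:ℕ) := by linarith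
  linarith

lemma w7_sum {t : ℝ} (ht0 : 0 < t) (ht1 : t ≤ 1) (s : Finset ℕ) :
    ∑ n ∈ s, w7 t n ≤ 19 * (t ^ ((4:ℝ)⁻¹))^(3:ℕ) := by
  set τ := t ^ ((4:ℝ)⁻¹) with hτdef
  have hτ : 0 < τ := tau_pos ht0
  have hτ4 : τ^(4:ℕ) = t := tau_pow4 ht0
  set N := ⌈1/t⌉₊ with hNdef
  have hN1 : 1 ≤ N := N_one_le ht0
  have hq1 : qr N * τ ≤ 1.19 := qrN_mul_tau_le ht0 ht1
  have hq2 : (qr N)⁻¹ ≤ τ := qrN_inv_le ht0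
  rw [← Finset.sum_filter_add_sum_filter_not s (· ≤ N) (w7 t)]
  have hpart : ∑ n ∈ s.filter (· ≤ N), w7 t n ≤ 15 * τ^(3:ℕ) := by
    have hsub : s.filter (· ≤ N) ⊆ Finset.range (N+1) := by
      intro n hn; simp only [Finset.mem_filter] at hn; exact Finset.mem_range.mpr (by omega)
    calc ∑ n ∈ s.filter (· ≤ N), w7 t n ≤ ∑ n ∈ Finset.range (N+1), w7 t n :=
          Finset.sum_le_sum_of_subset_of_nonneg hsub (fun i _ _ => w7_nonneg ht0.le i)
      _ ≤ (4*π*t) * qr N :=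
          Psum_le (w7_zero t) qr_zero (fun n hn => w7_le ht0.le hn) N
      _ = 4*τ^(3:ℕ)*(π * (qr N * τ)) := by rw [← hτ4]; ring
      _ ≤ 4*τ^(3:ℕ)*(3.15 * 1.19) := by
          apply mul_le_mul_of_nonneg_left _ (by positivity)
          exact mul_le_mul Real.pi_lt_d2.le hq1 (mul_nonneg (qr_nonneg _) hτ.le) (by norm_num)
      _ ≤ 15 * τ^(3:ℕ) := by nlinarith [pow_nonneg hτ.le 3]
  have htail : ∑ n ∈ s.filter (fun n => ¬ n ≤ N), w7 t n ≤ 4 * τ^(3:ℕ) := by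
    have hT := Tsum_le (a := w7 t) (φ := fun n => ((qr n)^3)⁻¹) (c := 4)
      (fun n => w7_nonneg ht0.le n) (fun n => qr_inv_nonneg n 3) (by norm_num)
      (fun n hn => w7_tail ht0.le hn) hN1 (s.filter (fun n => ¬ n ≤ N))
      (fun n hn => by simp only [Finset.mem_filter] at hn; omega)
    have h2 : ((qr N)^3)⁻¹ ≤ τ^(3:ℕ) := by
      rw [← inv_pow]
      exact pow_le_pow_left₀ (inv_nonneg.mpr (qr_nonneg _)) hq2 3
    calc ∑ n ∈ s.filter (fun n => ¬ n ≤ N), w7 t n ≤ 4 * ((qr N)^3)⁻¹ := hT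
      _ ≤ 4 * τ^(3:ℕ) := by linarith
  linarith

lemma w11_sum {t : ℝ} (ht0 : 0 < t) (ht1 : t ≤ 1) (s : Finset ℕ) :
    ∑ n ∈ s, w11 t n ≤ 52 * (t ^ ((4:ℝ)⁻¹))^(7:ℕ) := by
  set τ := t ^ ((4:ℝ)⁻¹) with hτdef
  have hτ : 0 < τ := tau_pos ht0
  have hτ4 : τ^(4:ℕ) = t := tau_pow4 ht0
  set N := ⌈1/t⌉₊ with hNdef
  have hN1 : 1 ≤ N := N_one_le ht0
  have hq1 : qr N * τ ≤ 1.19 := qrN_mul_tau_le ht0 ht1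
  have hq2 : (qr N)⁻¹ ≤ τ := qrN_inv_le ht0
  rw [← Finset.sum_filter_add_sum_filter_not s (· ≤ N) (w11 t)]
  have hpart : ∑ n ∈ s.filter (· ≤ N), w11 t n ≤ 48 * τ^(7:ℕ) := by
    have hsub : s.filter (· ≤ N) ⊆ Finset.range (N+1) := by
      intro n hn; simp only [Finset.mem_filter] at hn; exact Finset.mem_range.mpr (by omega)
    calc ∑ n ∈ s.filter (· ≤ N), w11 t n ≤ ∑ n ∈ Finset.range (N+1), w11 t n :=
          Finset.sum_le_sum_of_subset_of_nonneg hsub (fun i _ _ => w11_nonneg ht0.le i)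
      _ ≤ (4*π^2*t^2) * qr N :=
          Psum_le (w11_zero t) qr_zero (fun n hn => w11_le ht0.le hn) N
      _ = 4*τ^(7:ℕ)*(π^2 * (qr N * τ)) := by rw [← hτ4]; ring
      _ ≤ 4*τ^(7:ℕ)*(3.15^2 * 1.19) := by
          apply mul_le_mul_of_nonneg_left _ (by positivity)
          exact mul_le_mul (pow_le_pow_left₀ Real.pi_pos.le Real.pi_lt_d2.le 2) hq1
            (mul_nonneg (qr_nonneg _) hτ.le) (by norm_num)
      _ ≤ 48 * τ^(7:ℕ) := by nlinarith [pow_nonneg hτ.le 7]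
  have htail : ∑ n ∈ s.filter (fun n => ¬ n ≤ N), w11 t n ≤ 4 * τ^(7:ℕ) := by
    have hT := Tsum_le (a := w11 t) (φ := fun n => ((qr n)^7)⁻¹) (c := 4)
      (fun n => w11_nonneg ht0.le n) (fun n => qr_inv_nonneg n 7) (by norm_num)
      (fun n hn => w11_tail ht0.le hn) hN1 (s.filter (fun n => ¬ n ≤ N))
      (fun n hn => by simp only [Finset.mem_filter] at hn; omega)
    have h2 : ((qr N)^7)⁻¹ ≤ τ^(7:ℕ) := by
      rw [← inv_pow]
      exact pow_le_pow_left₀ (inv_nonneg.mpr (qr_nonneg _)) hq2 7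
    calc ∑ n ∈ s.filter (fun n => ¬ n ≤ N), w11 t n ≤ 4 * ((qr N)^7)⁻¹ := hT
      _ ≤ 4 * τ^(7:ℕ) := by linarith
  linarith

lemma wu_sum (s : Finset ℕ) : ∑ n ∈ s, wu n ≤ 5 := by
  rw [← Finset.sum_filter_add_sum_filter_not s (· ≤ 1) wu]
  have hpart : ∑ n ∈ s.filter (· ≤ 1), wu n ≤ 1 := by
    have hsub : s.filter (· ≤ 1) ⊆ Finset.range 2 := by
      intro n hn; simp only [Finset.mem_filter] at hn; exact Finset.mem_range.mpr (by omega)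
    calc ∑ n ∈ s.filter (· ≤ 1), wu n ≤ ∑ n ∈ Finset.range 2, wu n :=
          Finset.sum_le_sum_of_subset_of_nonneg hsub (fun i _ _ => wu_nonneg i)
      _ = wu 0 + wu 1 := by
          rw [Finset.sum_range_succ, Finset.sum_range_one]
      _ ≤ 1 := by
          unfold wu; rw [qr_zero, qr_one]; norm_num
  have htail : ∑ n ∈ s.filter (fun n => ¬ n ≤ 1), wu n ≤ 4 := by
    have hT := Tsum_le (a := wu) (φ := fun n => ((qr n)^2)⁻¹) (c := 4)
      wu_nonneg (fun n => qr_inv_nonneg n 2) (by norm_num)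
      (fun n hn => wu_tail hn) (le_refl 1) (s.filter (fun n => ¬ n ≤ 1))
      (fun n hn => by simp only [Finset.mem_filter] at hn; omega)
    calc ∑ n ∈ s.filter (fun n => ¬ n ≤ 1), wu n ≤ 4 * ((qr 1)^2)⁻¹ := hT
      _ = 4 := by rw [qr_one]; norm_num
  linarith

-- lift finset bounds to ENNReal tsum
lemma tsum_ofReal_le {h : ℕ → ℝ} {B : ℝ} (h0 : ∀ n, 0 ≤ h n)
    (hs : ∀ s : Finset ℕ, ∑ n ∈ s, h n ≤ B) :
    ∑' n, ENNReal.ofReal (h n) ≤ ENNReal.ofReal B := by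
  rw [ENNReal.tsum_eq_iSup_sum]
  apply iSup_le
  intro s
  rw [← ENNReal.ofReal_sum_of_nonneg (fun i _ => h0 i)]
  exact ENNReal.ofReal_le_ofReal (hs s)
open ENNReal in
lemma tsum_pi_fin : ∀ (n : ℕ) (w : Fin n → ℕ → ℝ≥0∞),
    ∑' h : Fin n → ℕ, ∏ j, w j (h j) = ∏ j, ∑' m, w j m := by
  intro n
  induction n with
  | zero =>
      intro w
      have h1 : ∑' h : Fin 0 → ℕ, ∏ j, w j (h j) = ∏ j, w j ((fun _ => 0) j) :=
        tsum_eq_single _ (fun b hb => absurd (Subsingleton.elim b _) hb)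
      rw [h1]
      simp
  | succ n ih =>
      intro w
      rw [← Equiv.tsum_eq (Fin.consEquiv (fun _ : Fin (n+1) => ℕ)) (fun h => ∏ j, w j (h j)),
        ENNReal.tsum_prod']
      have hterm : ∀ (a : ℕ) (g : Fin n → ℕ),
          (∏ j, w j ((Fin.consEquiv (fun _ : Fin (n+1) => ℕ)) (a, g) j))
            = w 0 a * ∏ j : Fin n, w j.succ (g j) := by
        intro a g
        rw [Fin.prod_univ_succ]
        simp [Fin.consEquiv_apply]
      simp only [hterm]
      have h2 : ∀ a : ℕ, ∑' g : Fin n → ℕ, w 0 a * ∏ j : Fin n, w j.succ (g j)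
          = w 0 a * ∑' g : Fin n → ℕ, ∏ j : Fin n, w j.succ (g j) :=
        fun a => ENNReal.tsum_mul_left
      simp only [h2]
      rw [ENNReal.tsum_mul_right, ih (fun j => w j.succ), Fin.prod_univ_succ]

-- the combinatorial picking lemma
lemma exists_data {k : ℕ} (hk : 3 ≤ k) {f : Fin k → ℕ} (hf1 : ∀ j, 1 ≤ f j)
    {ε : Fin k → Bool} (hε : (∑ j, (if ε j then (1 : ℤ) else -1) * (f j : ℤ)) = 0) :
    ∃ d : Fin k × Fin k, d.2 ≠ d.1 ∧ (∀ j, f j ≤ f d.1) ∧ f d.1 ≤ (k-1) * f d.2 := by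
  have hne : (Finset.univ : Finset (Fin k)).Nonempty :=
    ⟨⟨0, by omega⟩, Finset.mem_univ _⟩
  obtain ⟨m, _, hm⟩ := Finset.exists_max_image Finset.univ f hne
  classical
  set P := Finset.univ.filter (fun j => ε j = ε m) with hP
  set Q := Finset.univ.filter (fun j => ¬ (ε j = ε m)) with hQ
  have hsplit := Finset.sum_filter_add_sum_filter_not Finset.univ
    (fun j => ε j = ε m) (fun j => (if ε j then (1:ℤ) else -1) * (f j : ℤ))
  have e1 : ∑ j ∈ P, (if ε j then (1:ℤ) else -1) * (f j : ℤ)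
      = (if ε m then (1:ℤ) else -1) * ∑ j ∈ P, (f j:ℤ) := by
    rw [Finset.mul_sum]
    apply Finset.sum_congr rfl
    intro j hj
    rw [hP, Finset.mem_filter] at hj
    rw [hj.2]
  have e2 : ∑ j ∈ Q, (if ε j then (1:ℤ) else -1) * (f j : ℤ)
      = -((if ε m then (1:ℤ) else -1) * ∑ j ∈ Q, (f j:ℤ)) := by
    rw [Finset.mul_sum, ← Finset.sum_neg_distrib]
    apply Finset.sum_congr rfl
    intro j hj
    rw [hQ, Finset.mem_filter] at hj
    have hj2 := hj.2
    rcases Bool.eq_false_or_eq_true (ε m) with h | h <;>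
      rcases Bool.eq_false_or_eq_true (ε j) with h' | h' <;>
      simp [h, h'] at hj2 ⊢ <;> ring
  have hsum : ∑ j ∈ P, (f j:ℤ) = ∑ j ∈ Q, (f j:ℤ) := by
    rw [e1, e2] at hsplit
    rw [hε] at hsplit
    rcases Bool.eq_false_or_eq_true (ε m) with h | h <;> simp [h] at hsplit <;> linarith
  have hmP : m ∈ P := by simp [hP]
  have hfm_le : (f m : ℤ) ≤ ∑ j ∈ P, (f j:ℤ) :=
    Finset.single_le_sum (f := fun j => (f j : ℤ)) (fun j _ => Int.natCast_nonneg _) hmP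
  have hQne : Q.Nonempty := by
    by_contra h
    rw [Finset.not_nonempty_iff_eq_empty] at h
    rw [h, Finset.sum_empty] at hsum
    have h1 : (1:ℤ) ≤ (f m : ℤ) := by exact_mod_cast hf1 m
    linarith [hsum ▸ hfm_le]
  obtain ⟨i, hiQ, hi⟩ := Finset.exists_max_image Q f hQne
  have him : i ≠ m := by
    intro h
    rw [hQ, Finset.mem_filter] at hiQ
    exact hiQ.2 (by rw [h])
  have hcard : Q.card ≤ k - 1 := by
    have hsub : Q ⊆ Finset.univ.erase m := by
      intro j hj
      rw [hQ, Finset.mem_filter] at hj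
      apply Finset.mem_erase.mpr
      exact ⟨fun h => hj.2 (by rw [h]), Finset.mem_univ _⟩
    calc Q.card ≤ (Finset.univ.erase m).card := Finset.card_le_card hsub
      _ = k - 1 := by rw [Finset.card_erase_of_mem (Finset.mem_univ m)]; simp
  have hQsum_le : ∑ j ∈ Q, (f j:ℤ) ≤ (Q.card : ℤ) * (f i : ℤ) := by
    have := Finset.sum_le_card_nsmul Q (fun j => (f j : ℤ)) (f i : ℤ)
      (fun j hj => by show ((f j : ℤ)) ≤ _; exact_mod_cast hi j hj)
    rwa [nsmul_eq_mul] at this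
  have hfin : (f m : ℤ) ≤ ((k-1 : ℕ) : ℤ) * (f i : ℤ) := by
    calc (f m : ℤ) ≤ ∑ j ∈ P, (f j:ℤ) := hfm_le
      _ = ∑ j ∈ Q, (f j:ℤ) := hsum
      _ ≤ (Q.card : ℤ) * (f i : ℤ) := hQsum_le
      _ ≤ ((k-1 : ℕ) : ℤ) * (f i : ℤ) := by
          apply mul_le_mul_of_nonneg_right _ (by positivity)
          exact_mod_cast hcard
  refine ⟨(m, i), him, fun j => hm j (Finset.mem_univ j), ?_⟩
  exact_mod_cast hfin

lemma exists_third {k : ℕ} (hk : 3 ≤ k) (m i : Fin k) : ∃ j : Fin k, j ≠ m ∧ j ≠ i := by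
  by_contra h
  push_neg at h
  have hsub : (Finset.univ : Finset (Fin k)) ⊆ {m, i} := by
    intro j _
    rcases eq_or_ne j m with hj | hj
    · simp [hj]
    · simp [h j hj]
  have h1 := Finset.card_le_card hsub
  have h2 : ({m, i} : Finset (Fin k)).card ≤ 2 := by
    apply le_trans (Finset.card_insert_le _ _)
    simp
  rw [Finset.card_univ, Fintype.card_fin] at h1
  omega
-- main condition
def Acond (k : ℕ) (f : Fin k → ℕ) : Prop :=
  (∀ j, 1 ≤ f j) ∧ ∃ ε : Fin k → Bool, (∑ j, (if ε j then (1 : ℤ) else -1) * (f j : ℤ)) = 0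

lemma exists_data' {k : ℕ} (hk : 3 ≤ k) {f : Fin k → ℕ} (hf : Acond k f) :
    ∃ d : (Fin k → Bool) × Fin k × Fin k,
      (∑ j, (if d.1 j then (1 : ℤ) else -1) * (f j : ℤ)) = 0 ∧
      d.2.2 ≠ d.2.1 ∧ (∀ j, f j ≤ f d.2.1) ∧ f d.2.1 ≤ (k-1) * f d.2.2 := by
  obtain ⟨hf1, ε, hε⟩ := hf
  obtain ⟨d, h1, h2, h3⟩ := exists_data hk hf1 hε
  exact ⟨(ε, d.1, d.2), hε, h1, h2, h3⟩

noncomputable def dat {k : ℕ} (hk : 3 ≤ k) (f : {g : Fin k → ℕ // Acond k g}) :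
    (Fin k → Bool) × Fin k × Fin k :=
  (exists_data' hk f.2).choose

lemma dat_spec {k : ℕ} (hk : 3 ≤ k) (f : {g : Fin k → ℕ // Acond k g}) :
    (∑ j, (if (dat hk f).1 j then (1 : ℤ) else -1) * (f.1 j : ℤ)) = 0 ∧
    (dat hk f).2.2 ≠ (dat hk f).2.1 ∧ (∀ j, f.1 j ≤ f.1 (dat hk f).2.1) ∧
    f.1 (dat hk f).2.1 ≤ (k-1) * f.1 (dat hk f).2.2 :=
  (exists_data' hk f.2).choose_spec

noncomputable def jze {k : ℕ} (hk : 3 ≤ k) (m i : Fin k) : Fin k :=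
  (exists_third hk m i).choose

lemma jze_spec {k : ℕ} (hk : 3 ≤ k) (m i : Fin k) :
    jze hk m i ≠ m ∧ jze hk m i ≠ i :=
  (exists_third hk m i).choose_spec

open ENNReal

noncomputable def Wgt {k : ℕ} (hk : 3 ≤ k) (t : ℝ) (m i j : Fin k) (n : ℕ) : ℝ≥0∞ :=
  if j = i then (if n = 0 then 1 else 0)
  else if j = m then ENNReal.ofReal (w11 t n)
  else if j = jze hk m i then ENNReal.ofReal (w7 t n)
  else ENNReal.ofReal (w6 t n)

noncomputable def Gfun {k : ℕ} (hk : 3 ≤ k) (t : ℝ) :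
    (Fin k → Bool) × Fin k × Fin k × (Fin k → ℕ) → ℝ≥0∞ :=
  fun x => if x.2.2.1 = x.2.1 then 0
    else ENNReal.ofReal ((qr (k-1))^6) * ∏ j, Wgt hk t x.2.1 x.2.2.1 j (x.2.2.2 j)

noncomputable def Phi {k : ℕ} (hk : 3 ≤ k) :
    {g : Fin k → ℕ // Acond k g} → (Fin k → Bool) × Fin k × Fin k × (Fin k → ℕ) :=
  fun f => ((dat hk f).1, (dat hk f).2.1, (dat hk f).2.2,
    Function.update f.1 (dat hk f).2.2 0)

lemma Phi_inj {k : ℕ} (hk : 3 ≤ k) : Function.Injective (Phi hk) := by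
  intro a b hab
  unfold Phi at hab
  have h1 : (dat hk a).1 = (dat hk b).1 := congrArg (fun x => x.1) hab
  have h3 : (dat hk a).2.2 = (dat hk b).2.2 := congrArg (fun x => x.2.2.1) hab
  have h4 : Function.update a.1 (dat hk a).2.2 0 = Function.update b.1 (dat hk b).2.2 0 :=
    congrArg (fun x => x.2.2.2) hab
  set ε := (dat hk a).1 with hεd
  set i := (dat hk a).2.2 with hid
  have hoff : ∀ j, j ≠ i → a.1 j = b.1 j := by
    intro j hj
    have h5 := congrFun h4 j
    rwa [Function.update_of_ne hj, ← h3, Function.update_of_ne hj] at h5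
  have hsa := (dat_spec hk a).1
  have hsb := (dat_spec hk b).1
  rw [← h1] at hsb
  have ea := Finset.sum_eq_add_sum_sdiff_singleton_of_mem (Finset.mem_univ i)
    (fun j => (if ε j then (1:ℤ) else -1) * (a.1 j : ℤ))
  have eb := Finset.sum_eq_add_sum_sdiff_singleton_of_mem (Finset.mem_univ i)
    (fun j => (if ε j then (1:ℤ) else -1) * (b.1 j : ℤ))
  have hrest : ∑ j ∈ Finset.univ \ {i}, (if ε j then (1:ℤ) else -1) * (a.1 j : ℤ)
      = ∑ j ∈ Finset.univ \ {i}, (if ε j then (1:ℤ) else -1) * (b.1 j : ℤ) := by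
    apply Finset.sum_congr rfl
    intro j hj
    rw [Finset.mem_sdiff, Finset.mem_singleton] at hj
    rw [hoff j hj.2]
  rw [ea] at hsa
  rw [eb] at hsb
  have key : (if ε i then (1:ℤ) else -1) * (a.1 i : ℤ)
      = (if ε i then (1:ℤ) else -1) * (b.1 i : ℤ) := by linarith
  have hai : a.1 i = b.1 i := by
    rcases Bool.eq_false_or_eq_true (ε i) with h | h <;> rw [h] at key <;>
      simp at key <;> exact_mod_cast key
  apply Subtype.ext
  funext j
  rcases eq_or_ne j i with hj | hj
  · rw [hj, hai]
  · exact hoff j hj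

-- real key inequality for the three special coordinates
lemma key_real {k : ℕ} (hk : 3 ≤ k) {t : ℝ} (ht : 0 ≤ t) {M b c : ℕ}
    (hb1 : 1 ≤ b) (hc1 : 1 ≤ c) (hbM : b ≤ M) (hcM : c ≤ M) (hM : M ≤ (k-1) * b) :
    w6 t M * w6 t b * w6 t c ≤ (qr (k-1))^6 * (w11 t M * w7 t c) := by
  have hM1 : 1 ≤ M := le_trans hb1 hbM
  have hqM : 0 < qr M := qr_pos hM1
  have hqb : 0 < qr b := qr_pos hb1
  have hqc : 0 < qr c := qr_pos hc1
  have hminb : min 1 (π*(b:ℝ)*t) ≤ min 1 (π*(M:ℝ)*t) := by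
    apply min_le_min (le_refl 1)
    have hbM' : (b:ℝ) ≤ M := by exact_mod_cast hbM
    have := mul_le_mul_of_nonneg_left hbM' Real.pi_pos.le
    exact mul_le_mul_of_nonneg_right this ht
  have hbig : ((qr b)^6)⁻¹ ≤ (qr (k-1))^6 * ((qr M)^6)⁻¹ := by
    have h1 : qr M ≤ qr (k-1) * qr b := by
      rw [← qr_mul]; exact qr_mono hM
    have h2 : (qr M)^6 ≤ (qr (k-1))^6 * (qr b)^6 := by
      calc (qr M)^6 ≤ (qr (k-1) * qr b)^6 := pow_le_pow_left₀ hqM.le h1 6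
        _ = (qr (k-1))^6 * (qr b)^6 := mul_pow _ _ 6
    rw [← div_eq_mul_inv, le_div_iff₀ (by positivity), inv_mul_eq_div,
      div_le_iff₀ (by positivity)]
    linarith
  have hsmall : (qr M)⁻¹ * ((qr c)^6)⁻¹ ≤ ((qr c)^7)⁻¹ := by
    have h1 : (qr M)⁻¹ ≤ (qr c)⁻¹ := inv_anti₀ hqc (qr_mono hcM)
    calc (qr M)⁻¹ * ((qr c)^6)⁻¹ ≤ (qr c)⁻¹ * ((qr c)^6)⁻¹ :=
          mul_le_mul_of_nonneg_right h1 (qr_inv_nonneg _ _)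
      _ = ((qr c)^7)⁻¹ := by rw [← mul_inv]; congr 1; ring
  have e12 : ((qr M)^6)⁻¹ * ((qr M)^6)⁻¹ = ((qr M)^11)⁻¹ * (qr M)⁻¹ := by
    rw [← mul_inv, ← mul_inv, ← pow_add, ← pow_succ]
  have h0m1 : 0 ≤ min 1 (π*(M:ℝ)*t) := min_nonneg' ht M
  have h0m3 : 0 ≤ min 1 (π*(c:ℝ)*t) := min_nonneg' ht c
  calc w6 t M * w6 t b * w6 t c
      = (min 1 (π*(M:ℝ)*t) * ((qr M)^6)⁻¹) * (min 1 (π*(b:ℝ)*t) * ((qr b)^6)⁻¹)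
        * (min 1 (π*(c:ℝ)*t) * ((qr c)^6)⁻¹) := rfl
    _ ≤ (min 1 (π*(M:ℝ)*t) * ((qr M)^6)⁻¹)
        * (min 1 (π*(M:ℝ)*t) * ((qr (k-1))^6 * ((qr M)^6)⁻¹))
        * (min 1 (π*(c:ℝ)*t) * ((qr c)^6)⁻¹) := by
        apply mul_le_mul_of_nonneg_right _ (mul_nonneg h0m3 (qr_inv_nonneg _ _))
        apply mul_le_mul_of_nonneg_left _ (mul_nonneg h0m1 (qr_inv_nonneg _ _))
        exact mul_le_mul hminb hbig (qr_inv_nonneg _ _) h0m1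
    _ = (qr (k-1))^6 * ((min 1 (π*(M:ℝ)*t))^2 * (((qr M)^6)⁻¹ * ((qr M)^6)⁻¹)
        * (min 1 (π*(c:ℝ)*t) * ((qr c)^6)⁻¹)) := by ring
    _ = (qr (k-1))^6 * ((min 1 (π*(M:ℝ)*t))^2 * ((qr M)^11)⁻¹
        * (min 1 (π*(c:ℝ)*t) * ((qr M)⁻¹ * ((qr c)^6)⁻¹))) := by
        rw [e12]; ring
    _ ≤ (qr (k-1))^6 * ((min 1 (π*(M:ℝ)*t))^2 * ((qr M)^11)⁻¹
        * (min 1 (π*(c:ℝ)*t) * ((qr c)^7)⁻¹)) := by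
        apply mul_le_mul_of_nonneg_left _ (pow_nonneg (qr_nonneg _) 6)
        apply mul_le_mul_of_nonneg_left _ (mul_nonneg (pow_nonneg h0m1 2) (qr_inv_nonneg _ _))
        exact mul_le_mul_of_nonneg_left hsmall h0m3
    _ = (qr (k-1))^6 * (w11 t M * w7 t c) := by unfold w11 w7; ring
lemma prod_le_G {k : ℕ} (hk : 3 ≤ k) {t : ℝ} (ht0 : 0 < t)
    (f : {g : Fin k → ℕ // Acond k g}) :
    (∏ j, ENNReal.ofReal (w6 t (f.1 j))) ≤ Gfun hk t (Phi hk f) := by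
  obtain ⟨hs, him, hmax, hki⟩ := dat_spec hk f
  set m := (dat hk f).2.1 with hmd
  set i := (dat hk f).2.2 with hid
  set j₀ := jze hk m i with hj0d
  obtain ⟨hj0m, hj0i⟩ := jze_spec hk m i
  have hf1 : ∀ j, 1 ≤ f.1 j := f.2.1
  have hGeq : Gfun hk t (Phi hk f)
      = ENNReal.ofReal ((qr (k-1))^6)
        * ∏ j, Wgt hk t m i j (Function.update f.1 i 0 j) := by
    show (if i = m then 0 else _) = _
    rw [if_neg him]
    rfl
  rw [hGeq]
  -- memberships for erase chain
  have hmem_i : i ∈ Finset.univ.erase m := Finset.mem_erase.mpr ⟨him, Finset.mem_univ _⟩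
  have hmem_j0 : j₀ ∈ (Finset.univ.erase m).erase i :=
    Finset.mem_erase.mpr ⟨hj0i, Finset.mem_erase.mpr ⟨hj0m, Finset.mem_univ _⟩⟩
  set R := ((Finset.univ.erase m).erase i).erase j₀ with hRd
  -- decompose LHS
  have hL : (∏ j, ENNReal.ofReal (w6 t (f.1 j)))
      = ENNReal.ofReal (w6 t (f.1 m)) * (ENNReal.ofReal (w6 t (f.1 i))
        * (ENNReal.ofReal (w6 t (f.1 j₀)) * ∏ j ∈ R, ENNReal.ofReal (w6 t (f.1 j)))) := by
    rw [← Finset.mul_prod_erase Finset.univ _ (Finset.mem_univ m),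
      ← Finset.mul_prod_erase _ _ hmem_i, ← Finset.mul_prod_erase _ _ hmem_j0]
  -- decompose RHS product
  have hWm : Wgt hk t m i m (Function.update f.1 i 0 m) = ENNReal.ofReal (w11 t (f.1 m)) := by
    unfold Wgt
    rw [if_neg (fun h => him h.symm), if_pos rfl, Function.update_of_ne (fun h => him h.symm)]
  have hWi : Wgt hk t m i i (Function.update f.1 i 0 i) = 1 := by
    unfold Wgt
    rw [if_pos rfl, Function.update_self, if_pos rfl]
  have hWj0 : Wgt hk t m i j₀ (Function.update f.1 i 0 j₀) = ENNReal.ofReal (w7 t (f.1 j₀)) := by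
    unfold Wgt
    rw [if_neg hj0i, if_neg hj0m, if_pos rfl, Function.update_of_ne hj0i]
  have hWR : ∀ j ∈ R, Wgt hk t m i j (Function.update f.1 i 0 j)
      = ENNReal.ofReal (w6 t (f.1 j)) := by
    intro j hj
    rw [hRd] at hj
    have hj1 := Finset.mem_erase.mp hj
    have hj2 := Finset.mem_erase.mp hj1.2
    have hj3 := Finset.mem_erase.mp hj2.2
    unfold Wgt
    rw [if_neg hj2.1, if_neg hj3.1, if_neg hj1.1, Function.update_of_ne hj2.1]
  have hRprod : ∏ j, Wgt hk t m i j (Function.update f.1 i 0 j)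
      = ENNReal.ofReal (w11 t (f.1 m)) * (1
        * (ENNReal.ofReal (w7 t (f.1 j₀)) * ∏ j ∈ R, ENNReal.ofReal (w6 t (f.1 j)))) := by
    rw [← Finset.mul_prod_erase Finset.univ _ (Finset.mem_univ m),
      ← Finset.mul_prod_erase _ _ hmem_i, ← Finset.mul_prod_erase _ _ hmem_j0,
      hWm, hWi, hWj0]
    congr 1
    congr 1
    congr 1
    exact Finset.prod_congr rfl hWR
  rw [hL, hRprod]
  -- core inequality
  have hcore : ENNReal.ofReal (w6 t (f.1 m)) * ENNReal.ofReal (w6 t (f.1 i))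
      * ENNReal.ofReal (w6 t (f.1 j₀))
      ≤ ENNReal.ofReal ((qr (k-1))^6)
        * (ENNReal.ofReal (w11 t (f.1 m)) * ENNReal.ofReal (w7 t (f.1 j₀))) := by
    rw [← ENNReal.ofReal_mul (w6_nonneg ht0.le _),
      ← ENNReal.ofReal_mul (mul_nonneg (w6_nonneg ht0.le _) (w6_nonneg ht0.le _)),
      ← ENNReal.ofReal_mul (w11_nonneg ht0.le _),
      ← ENNReal.ofReal_mul (pow_nonneg (qr_nonneg _) 6)]
    apply ENNReal.ofReal_le_ofReal
    exact key_real hk ht0.le (hf1 i) (hf1 j₀) (hmax i) (hmax j₀) hki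
  calc ENNReal.ofReal (w6 t (f.1 m)) * (ENNReal.ofReal (w6 t (f.1 i))
        * (ENNReal.ofReal (w6 t (f.1 j₀)) * ∏ j ∈ R, ENNReal.ofReal (w6 t (f.1 j))))
      = (ENNReal.ofReal (w6 t (f.1 m)) * ENNReal.ofReal (w6 t (f.1 i))
        * ENNReal.ofReal (w6 t (f.1 j₀))) * ∏ j ∈ R, ENNReal.ofReal (w6 t (f.1 j)) := by
        ring
    _ ≤ (ENNReal.ofReal ((qr (k-1))^6)
        * (ENNReal.ofReal (w11 t (f.1 m)) * ENNReal.ofReal (w7 t (f.1 j₀))))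
        * ∏ j ∈ R, ENNReal.ofReal (w6 t (f.1 j)) := mul_le_mul_left hcore _
    _ = ENNReal.ofReal ((qr (k-1))^6) * (ENNReal.ofReal (w11 t (f.1 m)) * (1
        * (ENNReal.ofReal (w7 t (f.1 j₀)) * ∏ j ∈ R, ENNReal.ofReal (w6 t (f.1 j))))) := by
        ring
noncomputable def CC (k : ℕ) : ℝ := 2^k * (k:ℝ)^2 * (qr (k-1))^6 * 988 * 22^(k-3)

lemma CC_nonneg (k : ℕ) : 0 ≤ CC k := by
  unfold CC
  have := qr_nonneg (k-1)
  positivity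

lemma G_tsum {k : ℕ} (hk : 3 ≤ k) {t : ℝ} (ht0 : 0 < t) (ht1 : t ≤ 1) :
    ∑' x, Gfun hk t x ≤ ENNReal.ofReal (CC k * (t ^ ((4:ℝ)⁻¹))^(2*k+4)) := by
  set τ := t ^ ((4:ℝ)⁻¹) with hτd
  have hτ : 0 < τ := tau_pos ht0
  have hκ : (0:ℝ) ≤ (qr (k-1))^6 := pow_nonneg (qr_nonneg _) 6
  have hfix : ∀ (ε : Fin k → Bool) (m i : Fin k),
      (∑' h : Fin k → ℕ, Gfun hk t (ε, m, i, h))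
        ≤ ENNReal.ofReal ((qr (k-1))^6 * (988 * 22^(k-3) * τ^(2*k+4))) := by
    intro ε m i
    by_cases him : i = m
    · have h0 : ∀ h : Fin k → ℕ, Gfun hk t (ε, m, i, h) = 0 := fun h => if_pos him
      rw [tsum_congr h0]
      simp
    · have h1 : ∀ h : Fin k → ℕ, Gfun hk t (ε, m, i, h)
          = ENNReal.ofReal ((qr (k-1))^6) * ∏ j, Wgt hk t m i j (h j) := fun h => if_neg him
      rw [tsum_congr h1, ENNReal.tsum_mul_left, tsum_pi_fin]
      obtain ⟨hj0m, hj0i⟩ := jze_spec hk m i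
      set j₀ := jze hk m i with hj0d
      have hmem_i : i ∈ Finset.univ.erase m := Finset.mem_erase.mpr ⟨him, Finset.mem_univ _⟩
      have hmem_j0 : j₀ ∈ (Finset.univ.erase m).erase i :=
        Finset.mem_erase.mpr ⟨hj0i, Finset.mem_erase.mpr ⟨hj0m, Finset.mem_univ _⟩⟩
      set R := ((Finset.univ.erase m).erase i).erase j₀ with hRd
      have hvm : ∑' n, Wgt hk t m i m n ≤ ENNReal.ofReal (52*τ^(7:ℕ)) := by
        have he : ∀ n, Wgt hk t m i m n = ENNReal.ofReal (w11 t n) := fun n => by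
          unfold Wgt; rw [if_neg (fun h => him h.symm), if_pos rfl]
        rw [tsum_congr he]
        exact tsum_ofReal_le (fun n => w11_nonneg ht0.le n) (w11_sum ht0 ht1)
      have hvi : ∑' n, Wgt hk t m i i n = 1 := by
        have he : ∀ n, Wgt hk t m i i n = (if n = 0 then (1:ℝ≥0∞) else 0) := fun n => by
          unfold Wgt; rw [if_pos rfl]
        rw [tsum_congr he, tsum_eq_single 0 (fun b hb => if_neg hb)]
        exact if_pos rfl
      have hvj0 : ∑' n, Wgt hk t m i j₀ n ≤ ENNReal.ofReal (19*τ^(3:ℕ)) := by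
        have he : ∀ n, Wgt hk t m i j₀ n = ENNReal.ofReal (w7 t n) := fun n => by
          unfold Wgt; rw [if_neg hj0i, if_neg hj0m, if_pos rfl]
        rw [tsum_congr he]
        exact tsum_ofReal_le (fun n => w7_nonneg ht0.le n) (w7_sum ht0 ht1)
      have hvR : ∀ j ∈ R, (∑' n, Wgt hk t m i j n) ≤ ENNReal.ofReal (22*τ^(2:ℕ)) := by
        intro j hj
        rw [hRd] at hj
        have hj1 := Finset.mem_erase.mp hj
        have hj2 := Finset.mem_erase.mp hj1.2
        have hj3 := Finset.mem_erase.mp hj2.2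
        have he : ∀ n, Wgt hk t m i j n = ENNReal.ofReal (w6 t n) := fun n => by
          unfold Wgt; rw [if_neg hj2.1, if_neg hj3.1, if_neg hj1.1]
        rw [tsum_congr he]
        exact tsum_ofReal_le (fun n => w6_nonneg ht0.le n) (w6_sum ht0 ht1)
      have hcard : R.card = k - 3 := by
        rw [hRd, Finset.card_erase_of_mem hmem_j0, Finset.card_erase_of_mem hmem_i,
          Finset.card_erase_of_mem (Finset.mem_univ m), Finset.card_univ, Fintype.card_fin]
        omega
      have hprodR : (∏ j ∈ R, ∑' n, Wgt hk t m i j n) ≤ ENNReal.ofReal (22*τ^(2:ℕ)) ^ (k-3) := by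
        calc (∏ j ∈ R, ∑' n, Wgt hk t m i j n) ≤ ∏ _j ∈ R, ENNReal.ofReal (22*τ^(2:ℕ)) :=
              Finset.prod_le_prod' hvR
          _ = ENNReal.ofReal (22*τ^(2:ℕ)) ^ (k-3) := by rw [Finset.prod_const, hcard]
      have hdec : (∏ j, ∑' n, Wgt hk t m i j n)
          = (∑' n, Wgt hk t m i m n) * ((∑' n, Wgt hk t m i i n)
            * ((∑' n, Wgt hk t m i j₀ n) * ∏ j ∈ R, ∑' n, Wgt hk t m i j n)) := by
        rw [← Finset.mul_prod_erase Finset.univ _ (Finset.mem_univ m),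
          ← Finset.mul_prod_erase _ _ hmem_i, ← Finset.mul_prod_erase _ _ hmem_j0]
      rw [hdec]
      have hexp : (52*τ^(7:ℕ)) * ((19*τ^(3:ℕ)) * (22*τ^(2:ℕ))^(k-3))
          = 988 * 22^(k-3) * τ^(2*k+4) := by
        rw [mul_pow, ← pow_mul]
        have h2 : 2*k+4 = 7+(3+2*(k-3)) := by omega
        rw [h2, pow_add, pow_add]
        ring
      calc ENNReal.ofReal ((qr (k-1))^6)
            * ((∑' n, Wgt hk t m i m n) * ((∑' n, Wgt hk t m i i n)
              * ((∑' n, Wgt hk t m i j₀ n) * ∏ j ∈ R, ∑' n, Wgt hk t m i j n)))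
          ≤ ENNReal.ofReal ((qr (k-1))^6)
            * (ENNReal.ofReal (52*τ^(7:ℕ)) * (1
              * (ENNReal.ofReal (19*τ^(3:ℕ)) * ENNReal.ofReal (22*τ^(2:ℕ)) ^ (k-3)))) := by
            apply mul_le_mul_right
            exact mul_le_mul' hvm (mul_le_mul' hvi.le (mul_le_mul' hvj0 hprodR))
        _ = ENNReal.ofReal ((qr (k-1))^6 * (988 * 22^(k-3) * τ^(2*k+4))) := by
            rw [one_mul, ← ENNReal.ofReal_pow (by positivity),
              ← ENNReal.ofReal_mul (by positivity),
              ← ENNReal.ofReal_mul (by positivity),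
              ← ENNReal.ofReal_mul hκ, hexp]
  calc ∑' x, Gfun hk t x
      = ∑' ε : Fin k → Bool, ∑' y : Fin k × Fin k × (Fin k → ℕ), Gfun hk t (ε, y) :=
        ENNReal.tsum_prod'
    _ = ∑' ε : Fin k → Bool, ∑' m : Fin k, ∑' z : Fin k × (Fin k → ℕ), Gfun hk t (ε, m, z) :=
        tsum_congr (fun ε => ENNReal.tsum_prod')
    _ = ∑' ε : Fin k → Bool, ∑' m : Fin k, ∑' i : Fin k, ∑' h : Fin k → ℕ,
          Gfun hk t (ε, m, i, h) :=
        tsum_congr (fun ε => tsum_congr (fun m => ENNReal.tsum_prod'))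
    _ ≤ ∑' _ε : Fin k → Bool, ∑' _m : Fin k, ∑' _i : Fin k,
          ENNReal.ofReal ((qr (k-1))^6 * (988 * 22^(k-3) * τ^(2*k+4))) :=
        ENNReal.tsum_le_tsum (fun ε => ENNReal.tsum_le_tsum (fun m =>
          ENNReal.tsum_le_tsum (fun i => hfix ε m i)))
    _ = ENNReal.ofReal (CC k * τ^(2*k+4)) := by
        rw [tsum_fintype]
        have hin : ∀ ε : Fin k → Bool, (∑' _m : Fin k, ∑' _i : Fin k,
            ENNReal.ofReal ((qr (k-1))^6 * (988 * 22^(k-3) * τ^(2*k+4))))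
            = (k : ℝ≥0∞) * ((k:ℝ≥0∞) * ENNReal.ofReal ((qr (k-1))^6 * (988 * 22^(k-3) * τ^(2*k+4)))) := by
          intro ε
          rw [tsum_fintype]
          have : ∀ m : Fin k, (∑' _i : Fin k,
              ENNReal.ofReal ((qr (k-1))^6 * (988 * 22^(k-3) * τ^(2*k+4))))
              = (k:ℝ≥0∞) * ENNReal.ofReal ((qr (k-1))^6 * (988 * 22^(k-3) * τ^(2*k+4))) := by
            intro m
            rw [tsum_fintype, Finset.sum_const, Finset.card_univ, Fintype.card_fin, nsmul_eq_mul]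
          rw [Finset.sum_congr rfl (fun m _ => this m), Finset.sum_const, Finset.card_univ,
            Fintype.card_fin, nsmul_eq_mul]
        rw [Finset.sum_congr rfl (fun ε _ => hin ε), Finset.sum_const, Finset.card_univ, nsmul_eq_mul]
        have hcard2 : (Fintype.card (Fin k → Bool) : ℝ≥0∞) = ENNReal.ofReal ((2:ℝ)^k) := by
          rw [show Fintype.card (Fin k → Bool) = 2^k by simp, ← ENNReal.ofReal_natCast]
          congr 1
          push_cast
          ring
        have hcardk : ((k:ℕ) : ℝ≥0∞) = ENNReal.ofReal ((k:ℝ)) := by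
          rw [← ENNReal.ofReal_natCast]
        rw [hcard2, hcardk,
          ← ENNReal.ofReal_mul (by positivity),
          ← ENNReal.ofReal_mul (by positivity),
          ← ENNReal.ofReal_mul (by positivity)]
        congr 1
        unfold CC
        ring
lemma core1 {k : ℕ} (hk : 3 ≤ k) {t : ℝ} (ht0 : 0 < t) (ht1 : t ≤ 1) :
    (∑' f : Fin k → ℕ, if Acond k f then ∏ j, ENNReal.ofReal (w6 t (f j)) else 0)
      ≤ ENNReal.ofReal (CC k * (t ^ ((4:ℝ)⁻¹))^(2*k+4)) := by
  have h2 : ∀ f : Fin k → ℕ, Set.indicator {f : Fin k → ℕ | Acond k f}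
      (fun g => ∏ j, ENNReal.ofReal (w6 t (g j))) f
      = if Acond k f then ∏ j, ENNReal.ofReal (w6 t (f j)) else 0 := by
    intro f
    by_cases h : Acond k f
    · rw [Set.indicator_of_mem (show f ∈ {f : Fin k → ℕ | Acond k f} from h), if_pos h]
    · rw [Set.indicator_of_notMem (show f ∉ {f : Fin k → ℕ | Acond k f} from h), if_neg h]
  have he : Function.Injective
      (fun a : ↥{f : Fin k → ℕ | Acond k f} => Phi hk ⟨a.1, a.2⟩) := by
    intro a b hab
    have h3 := Phi_inj hk hab
    exact Subtype.ext (congrArg Subtype.val h3)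
  calc (∑' f : Fin k → ℕ, if Acond k f then ∏ j, ENNReal.ofReal (w6 t (f j)) else 0)
      = ∑' f : Fin k → ℕ, Set.indicator {f : Fin k → ℕ | Acond k f}
          (fun g => ∏ j, ENNReal.ofReal (w6 t (g j))) f := tsum_congr fun f => (h2 f).symm
    _ = ∑' a : ↥{f : Fin k → ℕ | Acond k f}, ∏ j, ENNReal.ofReal (w6 t (a.1 j)) :=
        (tsum_subtype _ _).symm
    _ ≤ ∑' x, Gfun hk t x :=
        Summable.tsum_le_tsum_of_inj _ he (fun c _ => zero_le)
          (fun a => prod_le_G hk ht0 ⟨a.1, a.2⟩) ENNReal.summable ENNReal.summable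
    _ ≤ ENNReal.ofReal (CC k * (t ^ ((4:ℝ)⁻¹))^(2*k+4)) := G_tsum hk ht0 ht1

lemma core2 {k : ℕ} :
    (∑' f : Fin k → ℕ, ∏ j, ENNReal.ofReal (wu (f j))) ≤ ENNReal.ofReal ((5:ℝ)^k) := by
  rw [tsum_pi_fin k (fun _ n => ENNReal.ofReal (wu n))]
  calc (∏ _j : Fin k, ∑' n, ENNReal.ofReal (wu n)) ≤ ∏ _j : Fin k, ENNReal.ofReal 5 :=
      Finset.prod_le_prod' (fun j _ => tsum_ofReal_le wu_nonneg wu_sum)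
    _ = ENNReal.ofReal 5 ^ k := by rw [Finset.prod_const, Finset.card_univ, Fintype.card_fin]
    _ = ENNReal.ofReal ((5:ℝ)^k) := (ENNReal.ofReal_pow (by norm_num) k).symm

lemma tau_pow_eq {t : ℝ} (ht0 : 0 < t) (k : ℕ) :
    (t ^ ((4:ℝ)⁻¹))^(2*k+4) = t ^ ((k:ℝ)/2 + 1) := by
  rw [← Real.rpow_natCast (t ^ ((4:ℝ)⁻¹)) (2*k+4), ← Real.rpow_mul ht0.le]
  congr 1
  push_cast
  ring

-- pointwise bounds on the sine factor
lemma sin_div_le {t z L : ℝ} (hL : 0 < L) (hz : 0 ≤ z) (ht : t = z/L) (n : ℕ) :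
    |Real.sin (Real.pi * (n : ℝ) * z / L)| / (n:ℝ) ^ ((3:ℝ)/2) ≤ w6 t n := by
  rw [rpow_32_eq, div_eq_mul_inv]
  unfold w6
  apply mul_le_mul_of_nonneg_right _ (qr_inv_nonneg _ _)
  have hx : 0 ≤ π * (n:ℝ) * z / L := by positivity
  apply le_min
  · exact Real.abs_sin_le_one _
  · have h2 := Real.abs_sin_le_abs (x := π * (n:ℝ) * z / L)
    rw [abs_of_nonneg hx] at h2
    calc |Real.sin (π * (n:ℝ) * z / L)| ≤ π * (n:ℝ) * z / L := h2
      _ = π * (n:ℝ) * t := by rw [ht]; ring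

lemma sin_div_le' {z L : ℝ} (n : ℕ) :
    |Real.sin (Real.pi * (n : ℝ) * z / L)| / (n:ℝ) ^ ((3:ℝ)/2) ≤ wu n := by
  rw [rpow_32_eq, div_eq_mul_inv]
  unfold wu
  calc |Real.sin (π * (n:ℝ) * z / L)| * ((qr n)^6)⁻¹ ≤ 1 * ((qr n)^6)⁻¹ :=
        mul_le_mul_of_nonneg_right (Real.abs_sin_le_one _) (qr_inv_nonneg _ _)
    _ = ((qr n)^6)⁻¹ := one_mul _

-- per-f reduction, version 1
lemma inner_le1 {k : ℕ} {t z L : ℝ} (hL : 0 < L) (hz : 0 ≤ z) (ht : t = z/L)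
    (f : Fin k → ℕ) :
    ENNReal.ofReal (∑ ε : Fin k → Bool,
      if (∀ j, 1 ≤ f j) ∧ (∑ j, (if ε j then (1 : ℤ) else -1) * (f j : ℤ)) = 0 then
        ∏ j, |Real.sin (Real.pi * (f j : ℝ) * z / L)| / (f j : ℝ) ^ ((3 : ℝ) / 2)
      else 0)
    ≤ ENNReal.ofReal ((2:ℝ)^k)
      * (if Acond k f then ∏ j, ENNReal.ofReal (w6 t (f j)) else 0) := by
  rw [ENNReal.ofReal_sum_of_nonneg (fun ε _ => by
    split
    · positivity
    · exact le_refl 0)]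
  calc (∑ ε : Fin k → Bool, ENNReal.ofReal
        (if (∀ j, 1 ≤ f j) ∧ (∑ j, (if ε j then (1 : ℤ) else -1) * (f j : ℤ)) = 0 then
          ∏ j, |Real.sin (Real.pi * (f j : ℝ) * z / L)| / (f j : ℝ) ^ ((3 : ℝ) / 2)
        else 0))
      ≤ ∑ _ε : Fin k → Bool,
          (if Acond k f then ∏ j, ENNReal.ofReal (w6 t (f j)) else 0) := by
        apply Finset.sum_le_sum
        intro ε _
        by_cases hc : (∀ j, 1 ≤ f j) ∧ (∑ j, (if ε j then (1 : ℤ) else -1) * (f j : ℤ)) = 0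
        · rw [if_pos hc, if_pos ⟨hc.1, ⟨ε, hc.2⟩⟩,
            ENNReal.ofReal_prod_of_nonneg (fun j _ => by positivity)]
          exact Finset.prod_le_prod' (fun j _ =>
            ENNReal.ofReal_le_ofReal (sin_div_le hL hz ht (f j)))
        · rw [if_neg hc]
          simp only [ENNReal.ofReal_zero]
          exact zero_le
    _ = ENNReal.ofReal ((2:ℝ)^k)
        * (if Acond k f then ∏ j, ENNReal.ofReal (w6 t (f j)) else 0) := by
        rw [Finset.sum_const, Finset.card_univ, nsmul_eq_mul]
        congr 1
        rw [show Fintype.card (Fin k → Bool) = 2^k by simp, ← ENNReal.ofReal_natCast]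
        congr 1
        push_cast
        ring

-- per-f reduction, version 2
lemma inner_le2 {k : ℕ} {z L : ℝ} (f : Fin k → ℕ) :
    ENNReal.ofReal (∑ ε : Fin k → Bool,
      if (∀ j, 1 ≤ f j) ∧ (∑ j, (if ε j then (1 : ℤ) else -1) * (f j : ℤ)) = 0 then
        ∏ j, |Real.sin (Real.pi * (f j : ℝ) * z / L)| / (f j : ℝ) ^ ((3 : ℝ) / 2)
      else 0)
    ≤ ENNReal.ofReal ((2:ℝ)^k) * ∏ j, ENNReal.ofReal (wu (f j)) := by
  rw [ENNReal.ofReal_sum_of_nonneg (fun ε _ => by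
    split
    · positivity
    · exact le_refl 0)]
  calc (∑ ε : Fin k → Bool, ENNReal.ofReal
        (if (∀ j, 1 ≤ f j) ∧ (∑ j, (if ε j then (1 : ℤ) else -1) * (f j : ℤ)) = 0 then
          ∏ j, |Real.sin (Real.pi * (f j : ℝ) * z / L)| / (f j : ℝ) ^ ((3 : ℝ) / 2)
        else 0))
      ≤ ∑ _ε : Fin k → Bool, ∏ j, ENNReal.ofReal (wu (f j)) := by
        apply Finset.sum_le_sum
        intro ε _
        by_cases hc : (∀ j, 1 ≤ f j) ∧ (∑ j, (if ε j then (1 : ℤ) else -1) * (f j : ℤ)) = 0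
        · rw [if_pos hc,
            ENNReal.ofReal_prod_of_nonneg (fun j _ => by positivity)]
          exact Finset.prod_le_prod' (fun j _ =>
            ENNReal.ofReal_le_ofReal (sin_div_le' (f j)))
        · rw [if_neg hc]
          simp only [ENNReal.ofReal_zero]
          exact zero_le
    _ = ENNReal.ofReal ((2:ℝ)^k) * ∏ j, ENNReal.ofReal (wu (f j)) := by
        rw [Finset.sum_const, Finset.card_univ, nsmul_eq_mul]
        congr 1
        rw [show Fintype.card (Fin k → Bool) = 2^k by simp, ← ENNReal.ofReal_natCast]
        congr 1
        push_cast
        ring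

-- glue: ENNReal bound implies real bound on Qsum
lemma Qsum_le_of_ennreal {k : ℕ} {L z B : ℝ} (hB : 0 ≤ B)
    (h : (∑' f : Fin k → ℕ, ENNReal.ofReal (∑ ε : Fin k → Bool,
      if (∀ j, 1 ≤ f j) ∧ (∑ j, (if ε j then (1 : ℤ) else -1) * (f j : ℤ)) = 0 then
        ∏ j, |Real.sin (Real.pi * (f j : ℝ) * z / L)| / (f j : ℝ) ^ ((3 : ℝ) / 2)
      else 0)) ≤ ENNReal.ofReal B) :
    Qsum k L z ≤ B := by
  set F : (Fin k → ℕ) → ℝ := fun f => ∑ ε : Fin k → Bool,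
      if (∀ j, 1 ≤ f j) ∧ (∑ j, (if ε j then (1 : ℤ) else -1) * (f j : ℤ)) = 0 then
        ∏ j, |Real.sin (Real.pi * (f j : ℝ) * z / L)| / (f j : ℝ) ^ ((3 : ℝ) / 2)
      else 0 with hF
  have hQ : Qsum k L z = ∑' f, F f := rfl
  have hF0 : ∀ f, 0 ≤ F f := by
    intro f
    apply Finset.sum_nonneg
    intro ε _
    split
    · positivity
    · exact le_refl 0
  rw [hQ]
  by_cases hs : Summable F
  · have heq := ENNReal.ofReal_tsum_of_nonneg hF0 hs
    rw [← heq] at h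
    exact (ENNReal.ofReal_le_ofReal_iff hB).mp h
  · rw [tsum_eq_zero_of_not_summable hs]
    exact hB

/-- Q(z) ≪_k z^{k/2+1}/L^{k/2+1} for 1 ≤ z < L, and Q(z) ≪_k 1 for all z > 0. -/
theorem Qsum_bound (k : ℕ) (hk : 3 ≤ k) :
    ∃ C : ℝ, 0 < C ∧ ∀ L : ℝ, 2 ≤ L →
      (∀ z : ℝ, 1 ≤ z → z < L →
        Qsum k L z ≤ C * z ^ ((k : ℝ) / 2 + 1) / L ^ ((k : ℝ) / 2 + 1)) ∧
      (∀ z : ℝ, 0 < z → Qsum k L z ≤ C) := by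
  refine ⟨2^k * CC k + 2^k * 5^k, ?_, ?_⟩
  · have h1 : (0:ℝ) ≤ 2^k * CC k := mul_nonneg (by positivity) (CC_nonneg k)
    have h2 : (0:ℝ) < 2^k * 5^k := by positivity
    linarith
  intro L hL
  have hL0 : (0:ℝ) < L := by linarith
  constructor
  · intro z hz1 hzL
    have hz0 : (0:ℝ) < z := by linarith
    set t := z / L with htd
    have ht0 : 0 < t := by positivity
    have ht1 : t ≤ 1 := by rw [htd, div_le_one hL0]; linarith
    have hBnn : (0:ℝ) ≤ (2^k * CC k) * t ^ ((k:ℝ)/2+1) :=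
      mul_nonneg (mul_nonneg (by positivity) (CC_nonneg k)) (Real.rpow_nonneg ht0.le _)
    have hchain : (∑' f : Fin k → ℕ, ENNReal.ofReal (∑ ε : Fin k → Bool,
        if (∀ j, 1 ≤ f j) ∧ (∑ j, (if ε j then (1 : ℤ) else -1) * (f j : ℤ)) = 0 then
          ∏ j, |Real.sin (Real.pi * (f j : ℝ) * z / L)| / (f j : ℝ) ^ ((3 : ℝ) / 2)
        else 0))
        ≤ ENNReal.ofReal ((2^k * CC k) * t ^ ((k:ℝ)/2+1)) := by
      calc (∑' f : Fin k → ℕ, ENNReal.ofReal (∑ ε : Fin k → Bool,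
            if (∀ j, 1 ≤ f j) ∧ (∑ j, (if ε j then (1 : ℤ) else -1) * (f j : ℤ)) = 0 then
              ∏ j, |Real.sin (Real.pi * (f j : ℝ) * z / L)| / (f j : ℝ) ^ ((3 : ℝ) / 2)
            else 0))
          ≤ ∑' f : Fin k → ℕ, ENNReal.ofReal ((2:ℝ)^k)
              * (if Acond k f then ∏ j, ENNReal.ofReal (w6 t (f j)) else 0) :=
            ENNReal.tsum_le_tsum (fun f => inner_le1 hL0 hz0.le htd f)
        _ = ENNReal.ofReal ((2:ℝ)^k)
            * ∑' f : Fin k → ℕ, (if Acond k f then ∏ j, ENNReal.ofReal (w6 t (f j)) else 0) :=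
            ENNReal.tsum_mul_left
        _ ≤ ENNReal.ofReal ((2:ℝ)^k) * ENNReal.ofReal (CC k * (t ^ ((4:ℝ)⁻¹))^(2*k+4)) :=
            mul_le_mul_right (core1 hk ht0 ht1) _
        _ = ENNReal.ofReal ((2:ℝ)^k * (CC k * (t ^ ((4:ℝ)⁻¹))^(2*k+4))) :=
            (ENNReal.ofReal_mul (by positivity)).symm
        _ = ENNReal.ofReal ((2^k * CC k) * t ^ ((k:ℝ)/2+1)) := by
            rw [tau_pow_eq ht0 k]
            congr 1
            ring
    have hQ := Qsum_le_of_ennreal hBnn hchain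
    have hp : t ^ ((k:ℝ)/2+1) = z ^ ((k:ℝ)/2+1) / L ^ ((k:ℝ)/2+1) := by
      rw [htd, Real.div_rpow hz0.le hL0.le]
    have hzp : (0:ℝ) ≤ z ^ ((k:ℝ)/2+1) := Real.rpow_nonneg hz0.le _
    have hLp : (0:ℝ) < L ^ ((k:ℝ)/2+1) := Real.rpow_pos_of_pos hL0 _
    calc Qsum k L z ≤ (2^k * CC k) * t ^ ((k:ℝ)/2+1) := hQ
      _ = (2^k * CC k) * z ^ ((k:ℝ)/2+1) / L ^ ((k:ℝ)/2+1) := by rw [hp]; ring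
      _ ≤ (2^k * CC k + 2^k * 5^k) * z ^ ((k:ℝ)/2+1) / L ^ ((k:ℝ)/2+1) := by
          have h5 : (0:ℝ) ≤ 2^k * 5^k := by positivity
          have hnum : (2^k * CC k) * z ^ ((k:ℝ)/2+1)
              ≤ (2^k * CC k + 2^k * 5^k) * z ^ ((k:ℝ)/2+1) :=
            mul_le_mul_of_nonneg_right (by linarith) hzp
          exact (div_le_div_iff_of_pos_right hLp).mpr hnum
  · intro z hz0
    have hBnn : (0:ℝ) ≤ 2^k * 5^k := by positivity
    have hchain : (∑' f : Fin k → ℕ, ENNReal.ofReal (∑ ε : Fin k → Bool,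
        if (∀ j, 1 ≤ f j) ∧ (∑ j, (if ε j then (1 : ℤ) else -1) * (f j : ℤ)) = 0 then
          ∏ j, |Real.sin (Real.pi * (f j : ℝ) * z / L)| / (f j : ℝ) ^ ((3 : ℝ) / 2)
        else 0))
        ≤ ENNReal.ofReal ((2:ℝ)^k * 5^k) := by
      calc (∑' f : Fin k → ℕ, ENNReal.ofReal (∑ ε : Fin k → Bool,
            if (∀ j, 1 ≤ f j) ∧ (∑ j, (if ε j then (1 : ℤ) else -1) * (f j : ℤ)) = 0 then
              ∏ j, |Real.sin (Real.pi * (f j : ℝ) * z / L)| / (f j : ℝ) ^ ((3 : ℝ) / 2)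
            else 0))
          ≤ ∑' f : Fin k → ℕ, ENNReal.ofReal ((2:ℝ)^k) * ∏ j, ENNReal.ofReal (wu (f j)) :=
            ENNReal.tsum_le_tsum (fun f => inner_le2 f)
        _ = ENNReal.ofReal ((2:ℝ)^k) * ∑' f : Fin k → ℕ, ∏ j, ENNReal.ofReal (wu (f j)) :=
            ENNReal.tsum_mul_left
        _ ≤ ENNReal.ofReal ((2:ℝ)^k) * ENNReal.ofReal ((5:ℝ)^k) :=
            mul_le_mul_right core2 _
        _ = ENNReal.ofReal ((2:ℝ)^k * 5^k) := (ENNReal.ofReal_mul (by positivity)).symm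
    have hQ := Qsum_le_of_ennreal hBnn hchain
    have h1 : (0:ℝ) ≤ 2^k * CC k := mul_nonneg (by positivity) (CC_nonneg k)
    linarith
end
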